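/- arXiv:1403.1163 — 9 statements merged into one kernel-verified Lean document; each statement's English description precedes it below -/
import Mathlib

section
/- Every bounded sequence in a real Banach space admits a subsequence which is either weak Cauchy or equivalent to the usual ℓ¹-basis. -/
/-!
Fix reals `r < s` and colour a finite increasing list of indices `l₀ < l₁ < ⋯` by whether some
functional `φ` of norm at most one alternates across `(r, s)` along it, i.e. `φ (x lᵢ) < r` for
even `i` and `φ (x lᵢ) > s` for odd `i`. The Nash-Williams theorem, proved by Galvin–Prikry
combinatorial forcing (accepting/rejecting and fusion sequences), yields a subsequence on which
either every finite list carries an alternating functional, or every further subsequence has an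
initial segment carrying none.

In the first case, spacing indices in blocks of three lets a single functional realise any sign
pattern on the middle elements, and comparing two functionals with opposite patterns gives
`‖∑ λₙ x (c (3n+1))‖ ≥ (s - r)/2 ∑ |λₙ|`. In the second case, diagonalising over all
rational pairs gives a subsequence along which no `φ (x n)` has a rational upcrossing, so it
converges.
-/

open Filter Topology

namespace Rosenthal

-- An infinite set of indices is a strictly monotone `g : ℕ → ℕ`; its infinite subsets are the
-- strictly monotone `c` with `Set.range c ⊆ Set.range g`.
def initSeg (g : ℕ → ℕ) (k : ℕ) : List ℕ := (List.range k).map g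

lemma initSeg_succ_eq_cons (g : ℕ → ℕ) (k : ℕ) :
    initSeg g (k + 1) = g 0 :: initSeg (g ∘ Nat.succ) k := by
  simp [initSeg, List.range_succ_eq_map, Function.comp_def]

lemma initSeg_succ (g : ℕ → ℕ) (k : ℕ) : initSeg g (k + 1) = initSeg g k ++ [g k] := by
  simp [initSeg, List.range_succ]

lemma initSeg_sublist_initSeg (g : ℕ → ℕ) {k l : ℕ} (hkl : k ≤ l) :
    (initSeg g k).Sublist (initSeg g l) :=
  (List.range_sublist.2 hkl).map g

lemma initSeg_comp_sublist (g : ℕ → ℕ) {h : ℕ → ℕ} (hh : StrictMono h) (k : ℕ) :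
    (initSeg (g ∘ h) k).Sublist (initSeg g (h k)) := by
  induction k with
  | zero => simp [initSeg]
  | succ k ih =>
    rw [initSeg_succ]
    calc (initSeg (g ∘ h) k ++ [g (h k)]).Sublist (initSeg g (h k) ++ [g (h k)]) :=
          ih.append_right _
      _ = initSeg g (h k + 1) := (initSeg_succ g (h k)).symm
      List.Sublist _ (initSeg g (h (k + 1))) := initSeg_sublist_initSeg g (hh k.lt_succ_self)

lemma exists_strictMono_comp_eq_of_range_subset {g c : ℕ → ℕ} (hg : StrictMono g)
    (hc : StrictMono c) (hcg : Set.range c ⊆ Set.range g) :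
    ∃ u, StrictMono u ∧ c = g ∘ u := by
  choose u hu using fun n => hcg ⟨n, rfl⟩
  refine ⟨u, fun a b hab => hg.lt_iff_lt.1 ?_, funext fun n => (hu n).symm⟩
  rw [hu, hu]
  exact hc hab

structure IsFusion (t : ℕ → ℕ → ℕ) : Prop where
  strictMono : ∀ i, StrictMono (t i)
  range_succ_subset : ∀ i, Set.range (t (i + 1)) ⊆ Set.range (t i ∘ Nat.succ)

namespace IsFusion

variable {t : ℕ → ℕ → ℕ}

lemma antitone_range (ht : IsFusion t) : Antitone fun i => Set.range (t i) :=
  antitone_nat_of_succ_le fun i =>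
    (ht.range_succ_subset i).trans (Set.range_comp_subset_range _ _)

lemma range_diag_tail_subset (ht : IsFusion t) (i : ℕ) :
    Set.range (fun n => t (i + n) 0) ⊆ Set.range (t i) := by
  rintro _ ⟨n, rfl⟩
  exact ht.antitone_range (Nat.le_add_right i n) ⟨0, rfl⟩

lemma strictMono_diag (ht : IsFusion t) : StrictMono fun i => t i 0 := by
  refine strictMono_nat_of_lt_succ fun i => ?_
  obtain ⟨n, hn⟩ := ht.range_succ_subset i ⟨0, rfl⟩
  rw [← hn]
  exact ht.strictMono i n.succ_pos

end IsFusion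

theorem exists_isFusion {P : ℕ → (ℕ → ℕ) → (ℕ → ℕ) → Prop}
    (hP : ∀ i g, StrictMono g →
      ∃ c, StrictMono c ∧ Set.range c ⊆ Set.range (g ∘ Nat.succ) ∧ P i g c)
    {g₀ : ℕ → ℕ} (hg₀ : StrictMono g₀) :
    ∃ t, IsFusion t ∧ t 0 = g₀ ∧ ∀ i, P i (t i) (t (i + 1)) := by
  choose step hstep_mono hstep_range hstep using hP
  let u : ℕ → {g : ℕ → ℕ // StrictMono g} := fun i =>
    Nat.rec ⟨g₀, hg₀⟩ (fun i g => ⟨step i g.1 g.2, hstep_mono i g.1 g.2⟩) i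
  exact ⟨fun i => (u i).1, ⟨fun i => (u i).2, fun i => hstep_range i _ (u i).2⟩, rfl,
    fun i => hstep i _ (u i).2⟩

theorem exists_strictMono_forall_tail {ι : Type*} [Countable ι] [Nonempty ι]
    {P : ι → (ℕ → ℕ) → Prop}
    (hP : ∀ i (g c : ℕ → ℕ), StrictMono g → StrictMono c →
      Set.range c ⊆ Set.range g → P i g → P i c)
    (hex : ∀ i (g : ℕ → ℕ), StrictMono g →
      ∃ c, StrictMono c ∧ Set.range c ⊆ Set.range g ∧ P i c) :
    ∃ m, StrictMono m ∧ ∀ i, ∃ N, P i (fun n => m (N + n)) := by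
  obtain ⟨e, he⟩ := exists_surjective_nat ι
  obtain ⟨t, ht, -, htP⟩ := exists_isFusion (P := fun j _ c => P (e j) c)
    (fun j g hg => hex (e j) (g ∘ Nat.succ) (hg.comp fun _ _ => Nat.succ_lt_succ)) strictMono_id
  refine ⟨fun i => t i 0, ht.strictMono_diag, fun i => ?_⟩
  obtain ⟨j, rfl⟩ := he i
  exact ⟨j + 1, hP _ _ _ (ht.strictMono _)
    (ht.strictMono_diag.comp (strictMono_id.const_add (j + 1)))
    (ht.range_diag_tail_subset _) (htP j)⟩

section Forcing

variable (F : List ℕ → Prop)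

def Accepts (s : List ℕ) (g : ℕ → ℕ) : Prop :=
  ∀ h, StrictMono h → ∃ k, F (s ++ initSeg (g ∘ h) k)

def Rejects (s : List ℕ) (g : ℕ → ℕ) : Prop :=
  ∀ h, StrictMono h → ¬ Accepts F s (g ∘ h)

def RejectsExtensions (s : List ℕ) (c : ℕ → ℕ) : Prop :=
  ∀ n, Rejects F (s ++ [c n]) fun j => c (n + 1 + j)

variable {F} {s : List ℕ} {g c : ℕ → ℕ}

lemma Accepts.comp (H : Accepts F s g) {h : ℕ → ℕ} (hh : StrictMono h) :
    Accepts F s (g ∘ h) :=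
  fun h' hh' => H (h ∘ h') (hh.comp hh')

lemma Rejects.comp (H : Rejects F s g) {h : ℕ → ℕ} (hh : StrictMono h) :
    Rejects F s (g ∘ h) :=
  fun h' hh' => H (h ∘ h') (hh.comp hh')

lemma Accepts.mono (hg : StrictMono g) (hc : StrictMono c) (hcg : Set.range c ⊆ Set.range g)
    (H : Accepts F s g) : Accepts F s c := by
  obtain ⟨u, hu, rfl⟩ := exists_strictMono_comp_eq_of_range_subset hg hc hcg
  exact H.comp hu

lemma Rejects.mono (hg : StrictMono g) (hc : StrictMono c) (hcg : Set.range c ⊆ Set.range g)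
    (H : Rejects F s g) : Rejects F s c := by
  obtain ⟨u, hu, rfl⟩ := exists_strictMono_comp_eq_of_range_subset hg hc hcg
  exact H.comp hu

lemma Rejects.not_accepts (H : Rejects F s g) : ¬ Accepts F s g :=
  H id strictMono_id

lemma Rejects.not_apply (H : Rejects F s g) : ¬ F s :=
  fun hs => H.not_accepts fun _ _ => ⟨0, by simpa [initSeg] using hs⟩

lemma exists_accepts_or_rejects (s : List ℕ) (g : ℕ → ℕ) :
    ∃ h, StrictMono h ∧ (Accepts F s (g ∘ h) ∨ Rejects F s (g ∘ h)) := by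
  by_cases H : ∃ h, StrictMono h ∧ Accepts F s (g ∘ h)
  · obtain ⟨h, hh, hacc⟩ := H
    exact ⟨h, hh, Or.inl hacc⟩
  · push Not at H
    exact ⟨id, strictMono_id, Or.inr H⟩

lemma RejectsExtensions.mono (hg : StrictMono g) (hc : StrictMono c)
    (hcg : Set.range c ⊆ Set.range g) (H : RejectsExtensions F s g) :
    RejectsExtensions F s c := by
  obtain ⟨u, hu, rfl⟩ := exists_strictMono_comp_eq_of_range_subset hg hc hcg
  intro n
  refine (H (u n)).mono (hg.comp (strictMono_id.const_add _))
    (hc.comp (strictMono_id.const_add _)) ?_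
  rintro _ ⟨j, rfl⟩
  obtain ⟨d, hd⟩ := Nat.exists_eq_add_of_lt (hu (by omega : n < n + 1 + j))
  exact ⟨d, by simp only [Function.comp_apply, id_eq, hd]; ring_nf⟩

lemma RejectsExtensions.rejects_zero (H : RejectsExtensions F s c) :
    Rejects F (s ++ [c 0]) (c ∘ Nat.succ) := by
  simpa [Function.comp_def, add_comm] using H 0

lemma IsFusion.accepts_diag_tail {t : ℕ → ℕ → ℕ} (ht : IsFusion t) {N : ℕ}
    (hacc : ∀ i, N ≤ i → Accepts F (s ++ [t i 0]) (t (i + 1))) :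
    Accepts F s fun n => t (N + n) 0 := by
  intro h hh
  have hb : StrictMono fun n => t (N + n) 0 := ht.strictMono_diag.comp (strictMono_id.const_add N)
  have hrest : Accepts F (s ++ [t (N + h 0) 0]) fun j => t (N + h (j + 1)) 0 := by
    refine (hacc _ (Nat.le_add_right _ _)).mono (ht.strictMono _)
      (hb.comp (hh.comp fun _ _ => Nat.succ_lt_succ)) ?_
    rintro _ ⟨j, rfl⟩
    obtain ⟨d, hd⟩ := Nat.exists_eq_add_of_lt (hh j.succ_pos)
    refine ht.range_diag_tail_subset _ ⟨d, ?_⟩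
    simp only [Nat.succ_eq_add_one] at hd
    simp only [hd]
    ring_nf
  obtain ⟨k, hk⟩ := hrest id strictMono_id
  exact ⟨k + 1, by simpa [initSeg_succ_eq_cons, Function.comp_def] using hk⟩

theorem Rejects.exists_rejectsExtensions (hg : StrictMono g) (H : Rejects F s g) :
    ∃ c, StrictMono c ∧ Set.range c ⊆ Set.range g ∧ RejectsExtensions F s c := by
  have hdecide : ∀ (_ : ℕ) (g : ℕ → ℕ), StrictMono g → ∃ c, StrictMono c ∧
      Set.range c ⊆ Set.range (g ∘ Nat.succ) ∧
      (Accepts F (s ++ [g 0]) c ∨ Rejects F (s ++ [g 0]) c) := by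
    intro _ g hg
    obtain ⟨h, hh, hdec⟩ := exists_accepts_or_rejects (F := F) (s ++ [g 0]) (g ∘ Nat.succ)
    exact ⟨_, (hg.comp fun _ _ => Nat.succ_lt_succ).comp hh,
      Set.range_comp_subset_range _ _, hdec⟩
  obtain ⟨t, ht, rfl, hdec⟩ := exists_isFusion hdecide hg
  -- If cofinitely many pivots `t i 0` were accepted, the pivot sequence would accept `s`.
  have hfreq : ∃ᶠ i in atTop, Rejects F (s ++ [t i 0]) (t (i + 1)) := by
    rw [frequently_atTop]
    intro N
    by_contra! hN
    refine (H.mono (ht.strictMono 0) (ht.strictMono_diag.comp (strictMono_id.const_add N))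
      ((ht.range_diag_tail_subset N).trans (ht.antitone_range (Nat.zero_le N)))).not_accepts
      (ht.accepts_diag_tail fun i hi => (hdec i).resolve_right (hN i hi))
  obtain ⟨e, he, hrej⟩ := extraction_of_frequently_atTop hfreq
  refine ⟨fun n => t (e n) 0, ht.strictMono_diag.comp he, ?_, fun n => ?_⟩
  · rintro _ ⟨n, rfl⟩
    exact ht.range_diag_tail_subset 0 ⟨e n, by simp⟩
  · refine (hrej n).mono (ht.strictMono _)
      (ht.strictMono_diag.comp (he.comp (strictMono_id.const_add _))) ?_
    rintro _ ⟨j, rfl⟩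
    obtain ⟨d, hd⟩ := Nat.exists_eq_add_of_le (he (by omega : n < n + 1 + j))
    exact ht.range_diag_tail_subset _ ⟨d, by simp [hd]⟩

theorem exists_forall_rejectsExtensions (hg : StrictMono g) (L : List (List ℕ)) :
    ∃ c, StrictMono c ∧ Set.range c ⊆ Set.range g ∧
      ∀ s ∈ L, Rejects F s g → RejectsExtensions F s c := by
  induction L generalizing g with
  | nil => exact ⟨g, hg, subset_rfl, by simp⟩
  | cons s L ih =>
    obtain ⟨c₁, hc₁, hc₁g, hs⟩ : ∃ c₁, StrictMono c₁ ∧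
        Set.range c₁ ⊆ Set.range g ∧ (Rejects F s g → RejectsExtensions F s c₁) := by
      by_cases H : Rejects F s g
      · obtain ⟨c, hc, hcg, hce⟩ := H.exists_rejectsExtensions hg
        exact ⟨c, hc, hcg, fun _ => hce⟩
      · exact ⟨g, hg, subset_rfl, fun h => absurd h H⟩
    obtain ⟨c₂, hc₂, hc₂c₁, hL⟩ := ih hc₁
    refine ⟨c₂, hc₂, hc₂c₁.trans hc₁g, fun s' hs' hrej => ?_⟩
    rcases List.mem_cons.1 hs' with rfl | hs'
    · exact (hs hrej).mono hc₁ hc₂ hc₂c₁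
    · exact hL s' hs' (hrej.mono hg hc₁ hc₁g)

lemma IsFusion.rejects_of_sublist {t : ℕ → ℕ → ℕ} (ht : IsFusion t)
    (h₀ : Rejects F [] (t 0)) (he₀ : RejectsExtensions F [] (t 0))
    (hstep : ∀ j s, s.Sublist (List.range (t j 1)) → Rejects F s (t j ∘ Nat.succ) →
      RejectsExtensions F s (t (j + 1))) (j : ℕ) :
    ∀ s, s.Sublist (initSeg (fun i => t i 0) j) →
      Rejects F s (t j) ∧ RejectsExtensions F s (t j) := by
  induction j with
  | zero =>
    intro s hs
    rw [show s = [] by simpa [initSeg] using hs]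
    exact ⟨h₀, he₀⟩
  | succ j ih =>
    intro s hs
    have hsub : Set.range (t (j + 1)) ⊆ Set.range (t j ∘ Nat.succ) := ht.range_succ_subset j
    rw [initSeg_succ] at hs
    obtain ⟨s₁, s₂, rfl, h₁, h₂⟩ := List.sublist_append_iff.1 hs
    obtain ⟨hrej, hext⟩ := ih s₁ h₁
    rcases List.sublist_singleton.1 h₂ with rfl | rfl
    · rw [List.append_nil]
      have hsub' := hsub.trans (Set.range_comp_subset_range _ _)
      exact ⟨hrej.mono (ht.strictMono j) (ht.strictMono _) hsub',
        hext.mono (ht.strictMono j) (ht.strictMono _) hsub'⟩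
    · have hlt : (s₁ ++ [t j 0]).Sublist (List.range (t j 1)) :=
        calc (s₁ ++ [t j 0]).Sublist (List.range (t j 0) ++ [t j 0]) :=
              (h₁.trans (by simpa [initSeg] using
                initSeg_comp_sublist id ht.strictMono_diag j)).append_right _
          _ = List.range (t j 0 + 1) := List.range_succ.symm
          List.Sublist _ (List.range (t j 1)) :=
              List.range_sublist.2 (ht.strictMono j zero_lt_one)
      exact ⟨hext.rejects_zero.mono ((ht.strictMono j).comp fun _ _ => Nat.succ_lt_succ)
        (ht.strictMono _) hsub, hstep j _ hlt hext.rejects_zero⟩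

theorem exists_forall_not_or_accepts (F : List ℕ → Prop) (hg : StrictMono g) :
    ∃ c, StrictMono c ∧ Set.range c ⊆ Set.range g ∧
      ((∀ h, StrictMono h → ∀ k, ¬ F (initSeg (c ∘ h) k)) ∨ Accepts F [] c) := by
  obtain ⟨h₀, hh₀, hacc | hrej⟩ := exists_accepts_or_rejects (F := F) [] g
  · exact ⟨g ∘ h₀, hg.comp hh₀, Set.range_comp_subset_range _ _, Or.inr hacc⟩
  have hg₀ : StrictMono (g ∘ h₀) := hg.comp hh₀
  obtain ⟨c₀, hc₀, hc₀g, hc₀e⟩ := exists_forall_rejectsExtensions (F := F) hg₀ [[]]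
  -- The pivots chosen so far all lie below `g 1`, so the sublists of `List.range (g 1)`
  -- include every pattern that has to stay rejected.
  have hthin : ∀ (_ : ℕ) (g : ℕ → ℕ), StrictMono g → ∃ c, StrictMono c ∧
      Set.range c ⊆ Set.range (g ∘ Nat.succ) ∧ ∀ s, s.Sublist (List.range (g 1)) →
        Rejects F s (g ∘ Nat.succ) → RejectsExtensions F s c := by
    intro _ g hg
    obtain ⟨c, hc, hcg, hce⟩ := exists_forall_rejectsExtensions (F := F)
      (hg.comp fun _ _ => Nat.succ_lt_succ) (List.range (g 1)).sublists
    exact ⟨c, hc, hcg, fun s hs => hce s (List.mem_sublists.2 hs)⟩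
  obtain ⟨t, ht, rfl, hstep⟩ := exists_isFusion hthin hc₀
  have hrej_all := ht.rejects_of_sublist (hrej.mono hg₀ hc₀ hc₀g)
    (hc₀e [] (List.mem_singleton_self _) hrej) hstep
  refine ⟨fun i => t i 0, ht.strictMono_diag, ?_, Or.inl fun h hh k => ?_⟩
  · calc Set.range (fun i => t i 0) ⊆ Set.range (t 0) := by
          simpa using ht.range_diag_tail_subset 0
      _ ⊆ Set.range g := hc₀g.trans (Set.range_comp_subset_range _ _)
  · exact (hrej_all (h k) _ (initSeg_comp_sublist _ hh k)).1.not_apply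

end Forcing

section Banach

variable {X : Type*} [NormedAddCommGroup X] [NormedSpace ℝ X]

def Alternates (a : ℕ → ℝ) (r s : ℝ) (l : List ℕ) : Prop :=
  ∀ i (hi : i < l.length), if Even i then a l[i] < r else s < a l[i]

lemma alternates_initSeg {a : ℕ → ℝ} {r s : ℝ} {g : ℕ → ℕ} {k : ℕ} :
    Alternates a r s (initSeg g k) ↔ ∀ i < k, if Even i then a (g i) < r else s < a (g i) := by
  simp [Alternates, initSeg]

def NoAlternatingFunctional (x : ℕ → X) (r s : ℝ) (l : List ℕ) : Prop :=
  ¬ ∃ φ : X →L[ℝ] ℝ, ‖φ‖ ≤ 1 ∧ Alternates (fun n => φ (x n)) r s l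

lemma exists_separating_of_alternating {x : ℕ → X} {r s : ℝ} {b : ℕ → ℕ}
    (halt : ∀ h, StrictMono h → ∀ k, ∃ φ : X →L[ℝ] ℝ, ‖φ‖ ≤ 1 ∧
      Alternates (fun n => φ (x n)) r s (initSeg (b ∘ h) k))
    (p : ℕ → Prop) (S : Finset ℕ) :
    ∃ φ : X →L[ℝ] ℝ, ‖φ‖ ≤ 1 ∧ ∀ k ∈ S,
      (p k → φ (x (b (3 * k + 1))) < r) ∧ (¬ p k → s < φ (x (b (3 * k + 1)))) := by
  classical
  obtain ⟨N, hN⟩ := S.exists_nat_subset_range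
  -- Position `2k` (if `p k`) or `2k + 1` (otherwise) of the list along `idx` carries `3k + 1`.
  let idx : ℕ → ℕ := fun i => 3 * (i / 2) + i % 2 + if p (i / 2) then 1 else 0
  have hidx : StrictMono idx := by
    refine strictMono_nat_of_lt_succ fun i => ?_
    obtain ⟨k, rfl | rfl⟩ := Nat.even_or_odd' i
    · have h₁ : 2 * k / 2 = k := by omega
      have h₂ : (2 * k + 1) / 2 = k := by omega
      simp only [idx, h₁, h₂]
      split_ifs <;> omega
    · have h₁ : (2 * k + 1) / 2 = k := by omega
      have h₂ : (2 * k + 1 + 1) / 2 = k + 1 := by omega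
      simp only [idx, h₁, h₂]
      split_ifs <;> omega
  obtain ⟨φ, hφ, hφalt⟩ := halt idx hidx (2 * N)
  rw [alternates_initSeg] at hφalt
  refine ⟨φ, hφ, fun k hk => ?_⟩
  have hkN : k < N := Finset.mem_range.1 (hN hk)
  constructor
  · intro hpk
    have := hφalt (2 * k) (by omega)
    have h₁ : 2 * k / 2 = k := by omega
    have h₂ : 2 * k % 2 = 0 := by omega
    simpa [idx, h₁, h₂, hpk] using this
  · intro hpk
    have := hφalt (2 * k + 1) (by omega)
    have h₁ : (2 * k + 1) / 2 = k := by omega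
    have h₂ : (2 * k + 1) % 2 = 1 := by omega
    simpa [idx, h₁, h₂, hpk] using this

theorem le_norm_sum_smul_of_separating {y : ℕ → X} {r s : ℝ}
    (hsep : ∀ (p : ℕ → Prop) (S : Finset ℕ), ∃ φ : X →L[ℝ] ℝ, ‖φ‖ ≤ 1 ∧
      ∀ k ∈ S, (p k → φ (y k) < r) ∧ (¬ p k → s < φ (y k)))
    (S : Finset ℕ) (lam : ℕ → ℝ) :
    (s - r) / 2 * ∑ n ∈ S, |lam n| ≤ ‖∑ n ∈ S, lam n • y n‖ := by
  set v := ∑ n ∈ S, lam n • y n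
  obtain ⟨φ, hφ, hφsep⟩ := hsep (fun n => lam n < 0) S
  obtain ⟨ψ, hψ, hψsep⟩ := hsep (fun n => 0 ≤ lam n) S
  have hbound : ∀ χ : X →L[ℝ] ℝ, ‖χ‖ ≤ 1 → |χ v| ≤ ‖v‖ := fun χ hχ => by
    simpa using χ.le_of_opNorm_le hχ v
  have hterm : ∀ n ∈ S, |lam n| * (s - r) ≤ lam n * φ (y n) - lam n * ψ (y n) := by
    intro n hn
    rcases lt_or_ge (lam n) 0 with hneg | hnonneg
    · have h₁ := (hφsep n hn).1 hneg
      have h₂ := (hψsep n hn).2 (not_le.2 hneg)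
      rw [abs_of_neg hneg]
      nlinarith
    · have h₁ := (hφsep n hn).2 (not_lt.2 hnonneg)
      have h₂ := (hψsep n hn).1 hnonneg
      rw [abs_of_nonneg hnonneg]
      nlinarith
  have hdiff : φ v - ψ v = ∑ n ∈ S, (lam n * φ (y n) - lam n * ψ (y n)) := by
    simp [v, Finset.sum_sub_distrib]
  calc (s - r) / 2 * ∑ n ∈ S, |lam n| = (∑ n ∈ S, |lam n| * (s - r)) / 2 := by
        rw [← Finset.sum_mul]; ring
    _ ≤ (φ v - ψ v) / 2 := by
        rw [hdiff]; gcongr with n hn; exact hterm n hn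
    _ ≤ ‖v‖ := by linarith [abs_le.1 (hbound φ hφ), abs_le.1 (hbound ψ hψ)]

theorem norm_sum_smul_le {y : ℕ → X} {C : ℝ} (hC : ∀ n, ‖y n‖ ≤ C)
    (S : Finset ℕ) (lam : ℕ → ℝ) :
    ‖∑ n ∈ S, lam n • y n‖ ≤ C * ∑ n ∈ S, |lam n| :=
  calc ‖∑ n ∈ S, lam n • y n‖ ≤ ∑ n ∈ S, ‖lam n • y n‖ := norm_sum_le _ _
    _ ≤ ∑ n ∈ S, |lam n| * C := Finset.sum_le_sum fun n _ => by
        rw [norm_smul, Real.norm_eq_abs]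
        exact mul_le_mul_of_nonneg_left (hC n) (abs_nonneg _)
    _ = C * ∑ n ∈ S, |lam n| := by rw [← Finset.sum_mul, mul_comm]

lemma exists_tendsto_of_forall_norm_le_one {y : ℕ → X}
    (h : ∀ ψ : X →L[ℝ] ℝ, ‖ψ‖ ≤ 1 →
      ∃ l, Tendsto (fun n => ψ (y n)) atTop (𝓝 l))
    (φ : X →L[ℝ] ℝ) : ∃ l, Tendsto (fun n => φ (y n)) atTop (𝓝 l) := by
  have hc : 0 < ‖φ‖ + 1 := by positivity
  obtain ⟨l, hl⟩ := h ((‖φ‖ + 1)⁻¹ • φ) (by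
    rw [norm_smul, norm_inv, Real.norm_of_nonneg hc.le, inv_mul_le_iff₀ hc]
    linarith)
  refine ⟨(‖φ‖ + 1) * l, ?_⟩
  convert hl.const_mul (‖φ‖ + 1) using 2 with n
  simp [hc.ne']

lemma exists_strictMono_alternating {a : ℕ → ℝ} {r s : ℝ} (hr : ∃ᶠ n in atTop, a n < r)
    (hs : ∃ᶠ n in atTop, s < a n) (N : ℕ) :
    ∃ u : ℕ → ℕ, StrictMono u ∧
      ∀ i, (if Even i then a (u i) < r else s < a (u i)) ∧ N ≤ u i := by
  refine extraction_forall_of_frequently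
    (P := fun i n => (if Even i then a n < r else s < a n) ∧ N ≤ n)
    fun i => Frequently.and_eventually ?_ (eventually_ge_atTop N)
  split_ifs
  exacts [hr, hs]

theorem exists_tendsto_of_accepts {x : ℕ → X} {C : ℝ} (hC : ∀ n, ‖x n‖ ≤ C)
    {m : ℕ → ℕ} (hm : StrictMono m) (hacc : ∀ r s : ℚ, r < s →
      ∃ N, Accepts (NoAlternatingFunctional x r s) [] fun n => m (N + n))
    (φ : X →L[ℝ] ℝ) : ∃ l, Tendsto (fun n => φ (x (m n))) atTop (𝓝 l) := by
  refine exists_tendsto_of_forall_norm_le_one (fun ψ hψ => ?_) φ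
  have hbdd : ∀ n, |ψ (x (m n))| ≤ C := fun n => by
    simpa using (ψ.le_of_opNorm_le hψ _).trans (by simpa using hC (m n))
  refine tendsto_of_no_upcrossings Rat.denseRange_cast ?_
    (isBoundedUnder_of ⟨C, fun n => (abs_le.1 (hbdd n)).2⟩)
    (isBoundedUnder_of ⟨-C, fun n => (abs_le.1 (hbdd n)).1⟩)
  rintro _ ⟨r, rfl⟩ _ ⟨s, rfl⟩ hrs ⟨hr, hs⟩
  obtain ⟨N, hN⟩ := hacc r s (by exact_mod_cast hrs)
  obtain ⟨u, hu, halt⟩ := exists_strictMono_alternating hr hs N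
  have hacc_u : Accepts (NoAlternatingFunctional x r s) [] (m ∘ u) := by
    refine hN.mono (hm.comp (strictMono_id.const_add N)) (hm.comp hu) ?_
    rintro _ ⟨i, rfl⟩
    exact ⟨u i - N, by simp [Nat.add_sub_cancel' (halt i).2]⟩
  obtain ⟨k, hk⟩ := hacc_u id strictMono_id
  exact hk ⟨ψ, hψ, by simpa [alternates_initSeg] using fun i _ => (halt i).1⟩

end Banach

end Rosenthal

open Rosenthal

theorem rosenthal_l1_real_general (X : Type*) [NormedAddCommGroup X] [NormedSpace ℝ X]
    (x : ℕ → X) (hx : ∃ C : ℝ, ∀ n, ‖x n‖ ≤ C) :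
    ∃ m : ℕ → ℕ, StrictMono m ∧
      ((∀ φ : X →L[ℝ] ℝ, ∃ l : ℝ,
          Filter.Tendsto (fun n => φ (x (m n))) Filter.atTop (nhds l)) ∨
        ∃ c C : ℝ, 0 < c ∧ 0 < C ∧ ∀ lam : ℕ →₀ ℝ,
          c * ∑ n ∈ lam.support, |lam n| ≤ ‖∑ n ∈ lam.support, lam n • x (m n)‖ ∧
          ‖∑ n ∈ lam.support, lam n • x (m n)‖ ≤ C * ∑ n ∈ lam.support, |lam n|) := by
  obtain ⟨C, hC⟩ := hx
  by_cases hL1 : ∃ c : ℕ → ℕ, StrictMono c ∧ ∃ r s : ℝ, r < s ∧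
      ∀ h, StrictMono h → ∀ k, ¬ NoAlternatingFunctional x r s (initSeg (c ∘ h) k)
  · obtain ⟨c, hc, r, s, hrs, halt⟩ := hL1
    have hsep := exists_separating_of_alternating fun h hh k => not_not.1 (halt h hh k)
    refine ⟨fun k => c (3 * k + 1), hc.comp fun a b hab => by omega, Or.inr
      ⟨(s - r) / 2, C + 1, by linarith, by linarith [(norm_nonneg _).trans (hC 0)],
        fun lam => ⟨le_norm_sum_smul_of_separating hsep _ _,
          norm_sum_smul_le (fun n => by linarith [hC (c (3 * n + 1))]) _ _⟩⟩⟩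
  have hthin : ∀ (q : ℚ × ℚ) (g : ℕ → ℕ), StrictMono g → ∃ c, StrictMono c ∧
      Set.range c ⊆ Set.range g ∧
        (q.1 < q.2 → Accepts (NoAlternatingFunctional x q.1 q.2) [] c) := by
    intro q g hg
    by_cases hq : q.1 < q.2
    · obtain ⟨c, hc, hcg, hnot | hacc⟩ :=
        exists_forall_not_or_accepts (NoAlternatingFunctional x q.1 q.2) hg
      · exact absurd ⟨c, hc, q.1, q.2, by exact_mod_cast hq, hnot⟩ hL1
      · exact ⟨c, hc, hcg, fun _ => hacc⟩
    · exact ⟨g, hg, subset_rfl, fun h => absurd h hq⟩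
  obtain ⟨m, hm, hacc⟩ := exists_strictMono_forall_tail
    (fun q g c hg hc hcg H hq => (H hq).mono hg hc hcg) hthin
  exact ⟨m, hm, Or.inl (exists_tendsto_of_accepts hC hm fun r s hrs =>
    (hacc (r, s)).imp fun _ hN => hN hrs)⟩

/-- Rosenthal's ℓ¹-theorem (real case): every bounded sequence in a real Banach
space admits a subsequence which is either weak Cauchy or equivalent to the
usual ℓ¹-basis. -/
theorem rosenthal_l1_real (X : Type*) [NormedAddCommGroup X] [NormedSpace ℝ X]
    [CompleteSpace X] (x : ℕ → X) (hx : ∃ C : ℝ, ∀ n, ‖x n‖ ≤ C) :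
    ∃ m : ℕ → ℕ, StrictMono m ∧
      ((∀ φ : X →L[ℝ] ℝ, ∃ l : ℝ,
          Filter.Tendsto (fun n => φ (x (m n))) Filter.atTop (nhds l)) ∨
        ∃ c C : ℝ, 0 < c ∧ 0 < C ∧ ∀ lam : ℕ →₀ ℝ,
          c * ∑ n ∈ lam.support, |lam n| ≤ ‖∑ n ∈ lam.support, lam n • x (m n)‖ ∧
          ‖∑ n ∈ lam.support, lam n • x (m n)‖ ≤ C * ∑ n ∈ lam.support, |lam n|) :=
  rosenthal_l1_real_general X x hx
end

section
/- Let K be a compact metric space, (f_n) a bounded sequence in C(K, ℂ), and ε > 0. Then either (f_n) admits an ε-weak Cauchy subsequence, or for every δ > 0 there exists a subsequence (f_{m_n}) such that ‖Σ_{n≥2} λ_n (f_{m_n} − f_{m_1})‖_∞ ≥ (ε√2/8 − δ) · Σ_{n≥2} (|Re(λ_n)| + |Im(λ_n)|) for every finitely supported sequence of complex scalars (λ_n)_{n≥2}. -/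
/-!
Cut `ℂ` into squares of side `δ / 4`. If no subsequence is `ε`-weak Cauchy, then along every
infinite set of indices some point `t` sends `f n t` infinitely often into each of two squares
containing points `u`, `v` with `ε ≤ ‖u - v‖`. There are finitely many squares, so one pair works
for every infinite subset of some infinite `M₀`, and a diagonal argument extracts a subsequence
along which the sets `A n = {f n ∈ first square}`, `B n = {f n ∈ second square}` are Boolean
independent. For a real functional `φ` of norm `≤ 1`, two points realising opposite patterns,
chosen by the signs of `φ (λ n * (u - v))`, give `φ (F t - F t') ≈ ∑ |φ (λ n * (u - v))|` for
`F = ∑ λ n • (f (m (n + 1)) - f (m 0))`. Taking `φ = re` and `φ = im` yields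
`ε ∑ ‖λ n‖ ≤ 4 ‖F‖ + 4 δ ∑ ‖λ n‖`, and `|re z| + |im z| ≤ √2 ‖z‖` finishes.
-/

open Set

namespace WeakCauchyDichotomy

variable {α : Type*} (A B : ℕ → Set α)

def SplitsOn (X : Set α) (M : Set ℕ) : Prop :=
  ∃ t ∈ X, {n ∈ M | t ∈ A n}.Infinite ∧ {n ∈ M | t ∈ B n}.Infinite

def HereditarilySplits (X : Set α) (N : Set ℕ) : Prop :=
  ∀ M ⊆ N, M.Infinite → SplitsOn A B X M

variable {A B}

theorem infinite_inter_Ioi {s : Set ℕ} (hs : s.Infinite) (a : ℕ) : (s ∩ Ioi a).Infinite :=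
  (hs.sdiff (finite_Iic a)).mono fun _ hn => ⟨hn.1, lt_of_not_ge (mem_Iic.not.1 hn.2)⟩

theorem infinite_sep_of_inter_Ioi_subset {M M' : Set ℕ} {p : ℕ → Prop}
    (h : {n ∈ M | p n}.Infinite) {a : ℕ} (hM : M ∩ Ioi a ⊆ M') : {n ∈ M' | p n}.Infinite :=
  (infinite_inter_Ioi h a).mono fun _ hn => ⟨hM ⟨hn.1.1, hn.2⟩, hn.1.2⟩

theorem SplitsOn.mono {X : Set α} : Monotone (SplitsOn A B X) := by
  rintro M M' hMM' ⟨t, htX, hA, hB⟩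
  exact ⟨t, htX, hA.mono fun n hn => ⟨hMM' hn.1, hn.2⟩, hB.mono fun n hn => ⟨hMM' hn.1, hn.2⟩⟩

theorem SplitsOn.nonempty {X : Set α} {M : Set ℕ} (h : SplitsOn A B X M) : X.Nonempty :=
  let ⟨t, htX, _⟩ := h; ⟨t, htX⟩

theorem exists_hereditarily_of_forall_infinite {γ : Type*} (T : Finset γ) (Φ : γ → Set ℕ → Prop)
    (hΦ : ∀ c, Monotone (Φ c)) {M₀ : Set ℕ} (hM₀ : M₀.Infinite)
    (h : ∀ M ⊆ M₀, M.Infinite → ∃ c ∈ T, Φ c M) :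
    ∃ c ∈ T, ∃ M₁ ⊆ M₀, M₁.Infinite ∧ ∀ M ⊆ M₁, M.Infinite → Φ c M := by
  classical
  induction T using Finset.induction generalizing M₀ with
  | empty => simpa using h M₀ subset_rfl hM₀
  | insert c T _ ih =>
    by_cases hc : ∃ M₁ ⊆ M₀, M₁.Infinite ∧ ∀ M ⊆ M₁, M.Infinite → Φ c M
    · exact ⟨c, Finset.mem_insert_self c T, hc⟩
    push Not at hc
    obtain ⟨M', hM'M₀, hM', hcM'⟩ := hc M₀ subset_rfl hM₀
    -- `Φ c` fails on `M'`, hence (being monotone) on every subset of `M'`.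
    have hT : ∀ M ⊆ M', M.Infinite → ∃ d ∈ T, Φ d M := by
      intro M hMM' hM
      obtain ⟨d, hd, hΦd⟩ := h M (hMM'.trans hM'M₀) hM
      rcases Finset.mem_insert.1 hd with rfl | hdT
      · exact absurd (hΦ d hMM' hΦd) hcM'
      · exact ⟨d, hdT, hΦd⟩
    obtain ⟨d, hdT, M₁, hM₁M', hM₁⟩ := ih hM' hT
    exact ⟨d, Finset.mem_insert_of_mem hdT, M₁, hM₁M'.trans hM'M₀, hM₁⟩

theorem exists_hereditarilySplits_inter {𝒳 : Set (Set α)} (h𝒳 : 𝒳.Finite) {N : Set ℕ}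
    (hN : N.Infinite) (hsplit : ∀ X ∈ 𝒳, HereditarilySplits A B X N) :
    ∃ j ∈ N, ∃ N' ⊆ N ∩ Ioi j, N'.Infinite ∧
      ∀ X ∈ 𝒳, ∀ b : Bool, HereditarilySplits A B (X ∩ cond b (A j) (B j)) N' := by
  -- Otherwise shrink `N` along `L₀ ⊇ L₁ ⊇ ⋯` with minima `j k`, each step witnessing a failure
  -- for some colour `(X, b)`. A colour that recurs infinitely often contradicts the hereditary
  -- splitting of `X` on the set of the corresponding `j k`.
  by_contra! hbad
  have : Finite 𝒳 := h𝒳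
  let L₀ : {L : Set ℕ // L ⊆ N ∧ L.Infinite} := ⟨N, subset_rfl, hN⟩
  have hnext : ∀ L : {L : Set ℕ // L ⊆ N ∧ L.Infinite}, ∃ (c : 𝒳 × Bool)
      (L' : {L : Set ℕ // L ⊆ N ∧ L.Infinite}), L'.1 ⊆ L.1 ∩ Ioi (sInf L.1) ∧
      ¬ SplitsOn A B (c.1.1 ∩ cond c.2 (A (sInf L.1)) (B (sInf L.1))) L'.1 := by
    rintro ⟨L, hLN, hL⟩
    have hmin : sInf L ∈ L := Nat.sInf_mem hL.nonempty
    obtain ⟨X, hX, b, hXb⟩ := hbad (sInf L) (hLN hmin) (L ∩ Ioi (sInf L))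
      (inter_subset_inter_left _ hLN) (infinite_inter_Ioi hL _)
    obtain ⟨M, hML, hM, hMbad⟩ : ∃ M ⊆ L ∩ Ioi (sInf L), M.Infinite ∧
        ¬ SplitsOn A B (X ∩ cond b (A (sInf L)) (B (sInf L))) M := by
      simpa only [HereditarilySplits, not_forall, exists_prop] using hXb
    exact ⟨(⟨X, hX⟩, b), ⟨M, fun n hn => hLN (hML hn).1, hM⟩, hML, hMbad⟩
  choose col next hnext_sub hnext_bad using hnext
  let L : ℕ → {L : Set ℕ // L ⊆ N ∧ L.Infinite} := fun k => next^[k] L₀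
  let j : ℕ → ℕ := fun k => sInf (L k).1
  have hL_succ : ∀ k, L (k + 1) = next (L k) := fun k =>
    Function.iterate_succ_apply' next k L₀
  have hj_mem : ∀ k, j k ∈ (L k).1 := fun k => Nat.sInf_mem (L k).2.2.nonempty
  have hL_sub : ∀ k, (L (k + 1)).1 ⊆ (L k).1 ∩ Ioi (j k) := fun k => by
    rw [hL_succ]; exact hnext_sub _
  have hL_anti : Antitone fun k => (L k).1 :=
    antitone_nat_of_succ_le fun k => (hL_sub k).trans inter_subset_left
  have hj_mono : StrictMono j := strictMono_nat_of_lt_succ fun k => (hL_sub k (hj_mem _)).2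
  obtain ⟨c, hc⟩ := Finite.exists_infinite_fiber fun k => col (L k)
  have hI : (fun k => col (L k)) ⁻¹' {c} |>.Infinite := infinite_coe_iff.1 hc
  let J := j '' ((fun k => col (L k)) ⁻¹' {c})
  obtain ⟨t, htX, htA, htB⟩ := hsplit c.1.1 c.1.2 J
    (by rintro _ ⟨k, -, rfl⟩; exact (L k).2.1 (hj_mem k)) (hI.image hj_mono.injective.injOn)
  have htail : ∀ l, J ∩ Ioi (j l) ⊆ (L (l + 1)).1 := by
    rintro l _ ⟨⟨k, -, rfl⟩, hk⟩
    exact hL_anti (Nat.succ_le_of_lt (hj_mono.lt_iff_lt.1 hk)) (hj_mem k)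
  obtain ⟨_, ⟨l, hl, rfl⟩, htl⟩ : ∃ n ∈ J, t ∈ cond c.2 (A n) (B n) := by
    cases c.2
    · exact htB.nonempty
    · exact htA.nonempty
  apply hnext_bad (L l)
  rw [← hL_succ, show col (L l) = c from hl]
  exact ⟨t, ⟨htX, htl⟩, infinite_sep_of_inter_Ioi_subset htA (htail l),
    infinite_sep_of_inter_Ioi_subset htB (htail l)⟩

theorem exists_strictMono_independent {M₀ : Set ℕ} (hM₀ : M₀.Infinite)
    (hsplit : HereditarilySplits A B univ M₀) :
    ∃ m : ℕ → ℕ, StrictMono m ∧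
      ∀ (s : ℕ → Bool) (n : ℕ), ∃ t, ∀ k < n, t ∈ cond (s k) (A (m k)) (B (m k)) := by
  let State := {p : Set (Set α) × Set ℕ //
    p.1.Finite ∧ p.2.Infinite ∧ ∀ X ∈ p.1, HereditarilySplits A B X p.2}
  let p₀ : State := ⟨({univ}, M₀), finite_singleton _, hM₀, by simpa using hsplit⟩
  have hstep : ∀ p : State, ∃ j : ℕ, ∃ q : State, j ∈ p.1.2 ∧ q.1.2 ⊆ Ioi j ∧
      ∀ X ∈ p.1.1, ∀ b : Bool, X ∩ cond b (A j) (B j) ∈ q.1.1 := by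
    rintro ⟨⟨𝒳, N⟩, h𝒳, hN, hsplit⟩
    obtain ⟨j, hj, N', hN'N, hN', hsplit'⟩ := exists_hereditarilySplits_inter h𝒳 hN hsplit
    refine ⟨j, ⟨((fun Xb : Set α × Bool => Xb.1 ∩ cond Xb.2 (A j) (B j)) '' (𝒳 ×ˢ univ), N'),
      (h𝒳.prod finite_univ).image _, hN', ?_⟩, hj, fun n hn => (hN'N hn).2,
      fun X hX b => ⟨(X, b), ⟨hX, mem_univ b⟩, rfl⟩⟩
    rintro _ ⟨⟨X, b⟩, ⟨hX, -⟩, rfl⟩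
    exact fun M hM => hsplit' X hX b M hM
  choose j next hj hnext_gt hnext_cells using hstep
  set p : ℕ → State := fun k => next^[k] p₀
  have hp_succ : ∀ k, p (k + 1) = next (p k) := fun k => Function.iterate_succ_apply' next k p₀
  refine ⟨fun k => j (p k), strictMono_nat_of_lt_succ fun k => ?_, fun s n => ?_⟩
  · have := hnext_gt (p k) (hj (next (p k)))
    rwa [← hp_succ] at this
  have hcyl : ∀ n, {t | ∀ k < n, t ∈ cond (s k) (A (j (p k))) (B (j (p k)))} ∈ (p n).1.1 := by
    intro n
    induction n with
    | zero => simp [p, p₀]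
    | succ n ih =>
      rw [hp_succ]
      convert hnext_cells (p n) _ ih (s n) using 1
      ext t
      exact Nat.forall_lt_succ_right
  obtain ⟨-, hN, hsplit⟩ := (p n).2
  exact (hsplit _ (hcyl n) _ subset_rfl hN).nonempty

theorem infinite_of_mapsTo_of_le {I S : Set ℕ} (hI : I.Infinite) {i : ℕ → ℕ}
    (hi : ∀ n, n ≤ i n) (hIS : MapsTo i I S) : S.Infinite :=
  infinite_of_forall_exists_gt fun N =>
    let ⟨n, hnI, hNn⟩ := hI.exists_gt N
    ⟨i n, hIS hnI, hNn.trans_le (hi n)⟩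

theorem exists_separated_splitsOn {K E β : Type*} [SeminormedAddCommGroup E] (g : ℕ → K → E)
    (cell : E → β) {T : Finset β} (hT : ∀ n t, cell (g n t) ∈ T) {ε : ℝ}
    (hg : ∀ m : ℕ → ℕ, StrictMono m →
      ∃ t, ∀ n₀, ∃ n ≥ n₀, ∃ k ≥ n₀, ε ≤ ‖g (m n) t - g (m k) t‖)
    {M : Set ℕ} (hM : M.Infinite) :
    ∃ c ∈ T ×ˢ T, (∃ u v, cell u = c.1 ∧ cell v = c.2 ∧ ε ≤ ‖u - v‖) ∧
      SplitsOn (fun n => {t | cell (g n t) = c.1}) (fun n => {t | cell (g n t) = c.2}) univ M := by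
  set e := Nat.nth (· ∈ M)
  have he : StrictMono e := Nat.nth_strictMono hM
  obtain ⟨t, ht⟩ := hg e he
  choose a ha b hb hab using ht
  let pair : ℕ → T ×ˢ T := fun n₀ => ⟨(cell (g (e (a n₀)) t), cell (g (e (b n₀)) t)),
    Finset.mem_product.2 ⟨hT _ _, hT _ _⟩⟩
  obtain ⟨c, hc⟩ := Finite.exists_infinite_fiber pair
  have hI : (pair ⁻¹' {c}).Infinite := infinite_coe_iff.1 hc
  have hfib : ∀ n ∈ pair ⁻¹' {c},
      cell (g (e (a n)) t) = c.1.1 ∧ cell (g (e (b n)) t) = c.1.2 :=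
    fun n hn => Prod.ext_iff.1 (congrArg Subtype.val hn)
  obtain ⟨n₀, hn₀⟩ := hI.nonempty
  refine ⟨c.1, c.2, ⟨_, _, (hfib n₀ hn₀).1, (hfib n₀ hn₀).2, hab n₀⟩, t, mem_univ t,
    infinite_of_mapsTo_of_le hI (fun n => (ha n).trans he.le_apply) fun n hn =>
      ⟨Nat.nth_mem_of_infinite hM _, (hfib n hn).1⟩,
    infinite_of_mapsTo_of_le hI (fun n => (hb n).trans he.le_apply) fun n hn =>
      ⟨Nat.nth_mem_of_infinite hM _, (hfib n hn).2⟩⟩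

noncomputable def gridCell (η : ℝ) (z : ℂ) : ℤ × ℤ := (⌊z.re / η⌋, ⌊z.im / η⌋)

theorem abs_sub_lt_of_floor_div_eq {η a b : ℝ} (hη : 0 < η) (h : ⌊a / η⌋ = ⌊b / η⌋) :
    |a - b| < η := by
  have := Int.abs_sub_lt_one_of_floor_eq_floor h
  rwa [← sub_div, abs_div, abs_of_pos hη, div_lt_one hη] at this

theorem norm_sub_le_of_gridCell_eq {η : ℝ} (hη : 0 < η) {z w : ℂ}
    (h : gridCell η z = gridCell η w) : ‖z - w‖ ≤ 2 * η := by
  have hre := abs_sub_lt_of_floor_div_eq hη (congrArg Prod.fst h)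
  have him := abs_sub_lt_of_floor_div_eq hη (congrArg Prod.snd h)
  calc ‖z - w‖ ≤ |(z - w).re| + |(z - w).im| := Complex.norm_le_abs_re_add_abs_im _
    _ ≤ 2 * η := by rw [Complex.sub_re, Complex.sub_im]; linarith

theorem exists_finset_gridCell_mem {η : ℝ} (hη : 0 < η) (C : ℝ) :
    ∃ T : Finset (ℤ × ℤ), ∀ z : ℂ, ‖z‖ ≤ C → gridCell η z ∈ T := by
  have hbox : ∀ x : ℝ, |x| ≤ C → ⌊x / η⌋ ∈ Finset.Icc ⌊-C / η⌋ ⌊C / η⌋ := fun x hx =>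
    Finset.mem_Icc.2 ⟨Int.floor_mono (by gcongr; exact (abs_le.1 hx).1),
      Int.floor_mono (by gcongr; exact (abs_le.1 hx).2)⟩
  exact ⟨_ ×ˢ _, fun z hz => Finset.mem_product.2
    ⟨hbox _ ((Complex.abs_re_le_norm z).trans hz), hbox _ ((Complex.abs_im_le_norm z).trans hz)⟩⟩

theorem abs_re_add_abs_im_le_sqrt_two_mul_norm (z : ℂ) :
    |z.re| + |z.im| ≤ Real.sqrt 2 * ‖z‖ := by
  have hsq : ‖z‖ ^ 2 = |z.re| ^ 2 + |z.im| ^ 2 := by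
    rw [Complex.sq_norm, Complex.normSq_apply, sq_abs, sq_abs]; ring
  apply le_of_pow_le_pow_left₀ two_ne_zero (by positivity)
  rw [mul_pow, Real.sq_sqrt zero_le_two, hsq]
  nlinarith [sq_nonneg (|z.re| - |z.im|)]

theorem abs_le_of_opNorm_le_one {E : Type*} [SeminormedAddCommGroup E] [NormedSpace ℝ E]
    {φ : E →L[ℝ] ℝ} (hφ : ‖φ‖ ≤ 1) (x : E) : |φ x| ≤ ‖x‖ :=
  (φ.le_opNorm x).trans (mul_le_of_le_one_left (norm_nonneg x) hφ)

theorem mul_sum_norm_le_of_forall_clm {ι : Type*} (S : Finset ι) (lam : ι → ℂ) (w : ℂ) {a b : ℝ}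
    (h : ∀ φ : ℂ →L[ℝ] ℝ, ‖φ‖ ≤ 1 → ∑ n ∈ S, |φ (lam n * w)| ≤ a + b * ∑ n ∈ S, ‖lam n‖) :
    ‖w‖ * ∑ n ∈ S, ‖lam n‖ ≤ 2 * a + 2 * b * ∑ n ∈ S, ‖lam n‖ := by
  have hre := h Complex.reCLM Complex.reCLM_norm.le
  have him := h Complex.imCLM Complex.imCLM_norm.le
  simp only [Complex.reCLM_apply, Complex.imCLM_apply] at hre him
  calc ‖w‖ * ∑ n ∈ S, ‖lam n‖ = ∑ n ∈ S, ‖lam n * w‖ := by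
        rw [Finset.mul_sum]; simp only [norm_mul, mul_comm]
    _ ≤ ∑ n ∈ S, (|(lam n * w).re| + |(lam n * w).im|) :=
        Finset.sum_le_sum fun n _ => Complex.norm_le_abs_re_add_abs_im _
    _ ≤ 2 * a + 2 * b * ∑ n ∈ S, ‖lam n‖ := by rw [Finset.sum_add_distrib]; linarith

theorem le_map_mul_of_norm_sub_le {φ : ℂ →L[ℝ] ℝ} (hφ : ‖φ‖ ≤ 1) (z : ℂ) {ζ c : ℂ} {e : ℝ}
    (hζ : ‖ζ - c‖ ≤ e) : φ (z * c) - ‖z‖ * e ≤ φ (z * ζ) := by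
  have hsmall := abs_le_of_opNorm_le_one hφ (z * (ζ - c))
  rw [norm_mul] at hsmall
  have : φ (z * ζ) = φ (z * c) + φ (z * (ζ - c)) := by rw [← map_add]; ring_nf
  nlinarith [neg_abs_le (φ (z * (ζ - c))), norm_nonneg z]

theorem map_mul_cond_sub_cond_eq_abs (φ : ℂ →L[ℝ] ℝ) (z u v : ℂ) :
    φ (z * (cond (decide (0 ≤ φ (z * (u - v)))) u v - cond (!decide (0 ≤ φ (z * (u - v)))) u v)) =
      |φ (z * (u - v))| := by
  by_cases h : 0 ≤ φ (z * (u - v))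
  · simp [h, abs_of_nonneg]
  · rw [abs_of_neg (not_le.1 h), ← map_neg, ← mul_neg, neg_sub]
    simp [h]

theorem sum_abs_clm_le_of_independent {K : Type*} [TopologicalSpace K] [CompactSpace K]
    (g : ℕ → C(K, ℂ)) (A B : ℕ → Set K) (u v : ℂ) {r : ℝ}
    (hnear : ∀ n b, ∀ t ∈ cond b (A n) (B n), ‖g n t - cond b u v‖ ≤ r)
    (hind : ∀ (s : ℕ → Bool) (n : ℕ), ∃ t, ∀ k < n, t ∈ cond (s k) (A k) (B k))
    {φ : ℂ →L[ℝ] ℝ} (hφ : ‖φ‖ ≤ 1) (S : Finset ℕ) (lam : ℕ → ℂ) :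
    ∑ n ∈ S, |φ (lam n * (u - v))| ≤
      2 * ‖∑ n ∈ S, lam n • (g (n + 1) - g 0)‖ + 4 * r * ∑ n ∈ S, ‖lam n‖ := by
  set F := ∑ n ∈ S, lam n • (g (n + 1) - g 0)
  set σ : ℕ → Bool := fun n => decide (0 ≤ φ (lam n * (u - v)))
  -- `t` follows the signs `σ` and `t'` the opposite ones, both starting in `A 0`.
  obtain ⟨t, ht⟩ := hind (fun | 0 => true | n + 1 => σ n) (S.sup id + 2)
  obtain ⟨t', ht'⟩ := hind (fun | 0 => true | n + 1 => !σ n) (S.sup id + 2)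
  have hdiff : ∀ j b b', t ∈ cond b (A j) (B j) → t' ∈ cond b' (A j) (B j) →
      ‖(g j t - g j t') - (cond b u v - cond b' u v)‖ ≤ 2 * r := fun j b b' h h' =>
    calc _ = ‖(g j t - cond b u v) - (g j t' - cond b' u v)‖ := by congr 1; ring
      _ ≤ r + r := (norm_sub_le _ _).trans (add_le_add (hnear j b t h) (hnear j b' t' h'))
      _ = 2 * r := by ring
  have hterm : ∀ n ∈ S, |φ (lam n * (u - v))| - ‖lam n‖ * (4 * r) ≤
      φ (lam n * ((g (n + 1) t - g (n + 1) t') - (g 0 t - g 0 t'))) := by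
    intro n hn
    have hlt : n + 1 < S.sup id + 2 := Nat.succ_lt_succ (Nat.lt_succ_of_le (S.le_sup (f := id) hn))
    have h0 := hdiff 0 true true (ht 0 (by omega)) (ht' 0 (by omega))
    have h1 := hdiff (n + 1) (σ n) (!σ n) (ht (n + 1) hlt) (ht' (n + 1) hlt)
    rw [← map_mul_cond_sub_cond_eq_abs]
    refine le_map_mul_of_norm_sub_le hφ _ ?_
    calc _ = ‖((g (n + 1) t - g (n + 1) t') - (cond (σ n) u v - cond (!σ n) u v)) -
          ((g 0 t - g 0 t') - (cond true u v - cond true u v))‖ := by congr 1; ring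
      _ ≤ 4 * r := (norm_sub_le _ _).trans (by linarith)
  have hFdiff :
      F t - F t' = ∑ n ∈ S, lam n * ((g (n + 1) t - g (n + 1) t') - (g 0 t - g 0 t')) := by
    simp only [F, ContinuousMap.coe_sum, Finset.sum_apply, ← Finset.sum_sub_distrib,
      ContinuousMap.coe_smul, ContinuousMap.coe_sub, Pi.smul_apply, Pi.sub_apply, smul_eq_mul,
      mul_sub]
    refine Finset.sum_congr rfl fun n _ => by ring
  calc ∑ n ∈ S, |φ (lam n * (u - v))|
      ≤ φ (F t - F t') + 4 * r * ∑ n ∈ S, ‖lam n‖ := by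
        rw [hFdiff, map_sum, Finset.mul_sum, ← sub_le_iff_le_add, ← Finset.sum_sub_distrib]
        exact Finset.sum_le_sum fun n hn => by linarith [hterm n hn]
    _ ≤ 2 * ‖F‖ + 4 * r * ∑ n ∈ S, ‖lam n‖ := by
        gcongr
        calc φ (F t - F t') ≤ ‖F t - F t'‖ := (le_abs_self _).trans (abs_le_of_opNorm_le_one hφ _)
          _ ≤ ‖F t‖ + ‖F t'‖ := norm_sub_le _ _
          _ ≤ 2 * ‖F‖ := by linarith [F.norm_coe_le_norm t, F.norm_coe_le_norm t']

theorem sqrt_two_div_eight_sub_mul_le {ε δ T N F : ℝ} (hT : 0 ≤ T) (hTN : T ≤ Real.sqrt 2 * N)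
    (hδ : 0 ≤ δ) (hF : 0 ≤ F) (h : (ε - 4 * δ) * N ≤ 4 * F) :
    (ε * Real.sqrt 2 / 8 - δ) * T ≤ F := by
  have hs2 : Real.sqrt 2 * Real.sqrt 2 = 2 := Real.mul_self_sqrt zero_le_two
  have hs1 : 1 ≤ Real.sqrt 2 := Real.one_le_sqrt.2 one_le_two
  rcases le_or_gt (ε * Real.sqrt 2 / 8 - δ) 0 with hc | hc
  · nlinarith
  · have hN : 0 ≤ N := by nlinarith
    calc (ε * Real.sqrt 2 / 8 - δ) * T ≤ (ε * Real.sqrt 2 / 8 - δ) * (Real.sqrt 2 * N) := by gcongr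
      _ = (ε / 4 - δ * Real.sqrt 2) * N := by linear_combination (ε / 8 * N) * hs2
      _ ≤ F := by nlinarith [mul_le_mul_of_nonneg_left hs1 (mul_nonneg hδ hN)]

end WeakCauchyDichotomy

open WeakCauchyDichotomy in
theorem main_CK_complex_general (K : Type*) [MetricSpace K] [CompactSpace K]
    (f : ℕ → C(K, ℂ)) (hf : ∃ C : ℝ, ∀ n, ‖f n‖ ≤ C) (ε : ℝ) :
    (∃ m : ℕ → ℕ, StrictMono m ∧
        ∀ t : K, ∃ n₀ : ℕ, ∀ n ≥ n₀, ∀ k ≥ n₀, ‖f (m n) t - f (m k) t‖ < ε) ∨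
      ∀ δ : ℝ, 0 < δ → ∃ m : ℕ → ℕ, StrictMono m ∧
        ∀ lam : ℕ →₀ ℂ,
          ‖∑ n ∈ lam.support, lam n • (f (m (n + 1)) - f (m 0))‖ ≥
            (ε * Real.sqrt 2 / 8 - δ) *
              ∑ n ∈ lam.support, (|(lam n).re| + |(lam n).im|) := by
  refine or_iff_not_imp_left.2 fun hL δ hδ => ?_
  push Not at hL
  obtain ⟨C, hC⟩ := hf
  obtain ⟨T, hT⟩ := exists_finset_gridCell_mem (div_pos hδ four_pos) C
  let cells : ℤ × ℤ → ℕ → Set K := fun c n => {t | gridCell (δ / 4) (f n t) = c}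
  obtain ⟨c, -, M₀, -, hM₀, hsplit⟩ := exists_hereditarily_of_forall_infinite (T ×ˢ T)
    (fun c M => (∃ u v, gridCell (δ / 4) u = c.1 ∧ gridCell (δ / 4) v = c.2 ∧ ε ≤ ‖u - v‖) ∧
      SplitsOn (cells c.1) (cells c.2) univ M)
    (fun c _ _ hMM' h => ⟨h.1, SplitsOn.mono hMM' h.2⟩) infinite_univ fun M _ hM =>
      exists_separated_splitsOn (fun n t => f n t) (gridCell (δ / 4))
        (fun n t => hT _ (((f n).norm_coe_le_norm t).trans (hC n))) hL hM
  obtain ⟨⟨u, v, hu, hv, huv⟩, -⟩ := hsplit M₀ subset_rfl hM₀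
  obtain ⟨m, hm, hind⟩ := exists_strictMono_independent hM₀ fun M hM hMinf =>
    (hsplit M hM hMinf).2
  refine ⟨m, hm, fun lam => ?_⟩
  have hnear : ∀ n b, ∀ t ∈ cond b (cells c.1 (m n)) (cells c.2 (m n)),
      ‖f (m n) t - cond b u v‖ ≤ 2 * (δ / 4) := by
    rintro n (_ | _) t ht
    exacts [norm_sub_le_of_gridCell_eq (by positivity) (ht.trans hv.symm),
      norm_sub_le_of_gridCell_eq (by positivity) (ht.trans hu.symm)]
  have hlower := mul_sum_norm_le_of_forall_clm lam.support lam (u - v) fun φ hφ =>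
    sum_abs_clm_le_of_independent (fun n => f (m n)) _ _ u v hnear hind hφ lam.support lam
  refine sqrt_two_div_eight_sub_mul_le (Finset.sum_nonneg fun n _ => by positivity)
    (by rw [Finset.mul_sum]; exact Finset.sum_le_sum fun n _ =>
      abs_re_add_abs_im_le_sqrt_two_mul_norm _) hδ.le (norm_nonneg _) ?_
  nlinarith [mul_le_mul_of_nonneg_right huv
    (Finset.sum_nonneg fun n _ => norm_nonneg (lam n) : 0 ≤ ∑ n ∈ lam.support, ‖lam n‖)]

/-- Main theorem: for a bounded sequence in a complex C(K) space and ε > 0,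
either there is an ε-weak Cauchy subsequence, or for every δ > 0 there is a
subsequence (f_{m_n}) with
‖Σ_{n≥2} λ_n (f_{m_n} − f_{m_1})‖ ≥ (ε√2/8 − δ)·Σ_{n≥2}(|Re λ_n| + |Im λ_n|). -/
theorem main_CK_complex (K : Type*) [MetricSpace K] [CompactSpace K]
    (f : ℕ → C(K, ℂ)) (hf : ∃ C : ℝ, ∀ n, ‖f n‖ ≤ C) (ε : ℝ) (hε : 0 < ε) :
    (∃ m : ℕ → ℕ, StrictMono m ∧
        ∀ t : K, ∃ n₀ : ℕ, ∀ n ≥ n₀, ∀ k ≥ n₀, ‖f (m n) t - f (m k) t‖ < ε) ∨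
      ∀ δ : ℝ, 0 < δ → ∃ m : ℕ → ℕ, StrictMono m ∧
        ∀ lam : ℕ →₀ ℂ,
          ‖∑ n ∈ lam.support, lam n • (f (m (n + 1)) - f (m 0))‖ ≥
            (ε * Real.sqrt 2 / 8 - δ) *
              ∑ n ∈ lam.support, (|(lam n).re| + |(lam n).im|) :=
  main_CK_complex_general K f hf ε
end

section
/- Let (x_n) be a bounded sequence in a complex Banach space X and let ε > 0. Then either (x_n) admits an ε-weak Cauchy subsequence, or for every δ > 0 there exists a subsequence (x_{m_n}) satisfying ‖Σ_{n≥2} λ_n (x_{m_n} − x_{m_1})‖ ≥ (ε√2/8 − δ) · Σ_{n≥2} (|Re(λ_n)| + |Im(λ_n)|) for every finitely supported sequence of complex scalars (λ_n)_{n≥2}. -/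
/-!
Cover the disc of radius `C ≥ ‖x n‖` by finitely many `δ/4`-balls centred in a finite set `T`.
For `u, v ∈ T`, an increasing list of indices alternates near `(u, v)` if a functional of norm
`≤ 1` sends the corresponding terms alternately `δ/4`-close to `u` and to `v`. Nash-Williams'
theorem, applied to the finitely many pairs with `‖u - v‖ ≥ ε - δ/2`, gives an infinite `N ⊆ ℕ`
on which either, for some pair, every increasing list alternates, or, for every pair, every
subsequence has a non-alternating initial segment.

In the second case `x` is `ε`-weak Cauchy along `N`: a functional oscillating by `ε` infinitely
often would take values near some such `u` and near `v` infinitely often, hence alternate along a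
subsequence.

In the first case, with `m j = ν (3j + 1)` for `ν` enumerating `N`, every sign pattern on the
terms `x (m j)` is realized up to `δ/4`, the other terms of `N` serving to fix the parity of
positions. For a pattern `σ` with `σ 0` false, the difference of the functionals realizing `σ` and
its complement has norm `≤ 2` and sends `x (m (n + 1)) - x (m 0)` close to `2 (u - v)` where
`σ (n + 1)` holds and close to `0` elsewhere. Choosing `σ (n + 1)` by the sign of
`Re (λₙ (u - v))`, for `λ` rotated by `1, -1, i, -i`, bounds `‖∑ λₙ (x (m (n + 1)) - x (m 0))‖`
below by `(‖u - v‖/4 - δ/2) ∑ |λₙ|`, and `|Re λ| + |Im λ| ≤ √2 |λ|` gives the constant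
`ε√2/8 - δ`.
-/

theorem StrictMono.map_range_sublist_range {h : ℕ → ℕ} (hh : StrictMono h) (k : ℕ) :
    ((List.range k).map h).Sublist (List.range (h k)) := by
  refine List.sublist_of_subperm_of_pairwise (r := (· ≤ ·)) ?_ ?_ ?_
  · refine List.Nodup.subperm ((List.nodup_range).map hh.injective) ?_
    simp only [List.subset_def, List.mem_map, List.mem_range]
    rintro _ ⟨i, hi, rfl⟩
    exact hh hi
  · exact (List.pairwise_lt_range.map h fun _ _ hab => (hh hab).le)
  · exact List.pairwise_le_range

namespace GalvinPrikry

variable (Q : List ℕ → Prop)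

def Accepts (M : Set ℕ) (s : List ℕ) : Prop :=
  ∀ g : ℕ → ℕ, StrictMono g → (∀ n, g n ∈ M) → ∃ k, Q (s ++ (List.range k).map g)

def Rejects (M : Set ℕ) (s : List ℕ) : Prop :=
  ∀ N ⊆ M, N.Infinite → ¬Accepts Q N s

def Decides (M : Set ℕ) (s : List ℕ) : Prop :=
  Accepts Q M s ∨ Rejects Q M s

variable {Q} {M N : Set ℕ} {s : List ℕ}

theorem Accepts.mono (h : Accepts Q M s) (hNM : N ⊆ M) : Accepts Q N s :=
  fun g hg hgN => h g hg fun n => hNM (hgN n)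

theorem Rejects.mono (h : Rejects Q M s) (hNM : N ⊆ M) : Rejects Q N s :=
  fun T hT hTi => h T (hT.trans hNM) hTi

theorem Decides.mono (h : Decides Q M s) (hNM : N ⊆ M) : Decides Q N s :=
  h.imp (·.mono hNM) (·.mono hNM)

theorem Rejects.not_apply (h : Rejects Q M s) (hM : M.Infinite) : ¬Q s :=
  fun hs => h M le_rfl hM fun _ _ _ => ⟨0, by simpa using hs⟩

theorem exists_decides (hM : M.Infinite) (s : List ℕ) :
    ∃ N ⊆ M, N.Infinite ∧ Decides Q N s := by
  by_cases h : Rejects Q M s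
  · exact ⟨M, le_rfl, hM, Or.inr h⟩
  · simp only [Rejects, not_forall, not_not] at h
    obtain ⟨N, hNM, hN, hacc⟩ := h
    exact ⟨N, hNM, hN, Or.inl hacc⟩

theorem exists_fusion_seq (D : List ℕ → Set ℕ → Prop) (hM : M.Infinite) (h0 : D [] M)
    (step : ∀ E P, P.Infinite → D E P →
      ∃ a ∈ P, ∃ P' ⊆ P, P'.Infinite ∧ (∀ p ∈ P', a < p) ∧ D (E ++ [a]) P') :
    ∃ (e : ℕ → ℕ) (P : ℕ → Set ℕ), StrictMono e ∧ P 0 = M ∧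
      ∀ n, (P n).Infinite ∧ D ((List.range n).map e) (P n) ∧ ∀ j ≥ n, e j ∈ P n := by
  choose! next hnext nextSet hnextSet hinf hgt hD using step
  let st : ℕ → List ℕ × Set ℕ := fun n =>
    Nat.rec ([], M) (fun _ st => (st.1 ++ [next st.1 st.2], nextSet st.1 st.2)) n
  let e n := next (st n).1 (st n).2
  have hst : ∀ n, (st n).1 = (List.range n).map e ∧ (st n).2.Infinite ∧ D (st n).1 (st n).2 := by
    intro n
    induction n with
    | zero => exact ⟨rfl, hM, h0⟩
    | succ n ih =>
      refine ⟨?_, hinf _ _ ih.2.1 ih.2.2, hD _ _ ih.2.1 ih.2.2⟩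
      change (st n).1 ++ [e n] = _
      rw [ih.1, List.range_succ, List.map_append, List.map_singleton]
  have hsucc : ∀ n, (st (n + 1)).2 ⊆ (st n).2 := fun n => hnextSet _ _ (hst n).2.1 (hst n).2.2
  have hanti : Antitone fun n => (st n).2 := antitone_nat_of_succ_le hsucc
  have he : ∀ n, e n ∈ (st n).2 := fun n => hnext _ _ (hst n).2.1 (hst n).2.2
  refine ⟨e, fun n => (st n).2, strictMono_nat_of_lt_succ fun n => ?_, rfl, fun n =>
    ⟨(hst n).2.1, (hst n).1 ▸ (hst n).2.2, fun j hj => hanti hj (he j)⟩⟩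
  exact hgt _ _ (hst n).2.1 (hst n).2.2 _ (he (n + 1))

theorem Rejects.exists_forall_rejects_append (h : Rejects Q M s) (hM : M.Infinite) :
    ∃ N ⊆ M, N.Infinite ∧ ∀ n ∈ N, Rejects Q N (s ++ [n]) := by
  obtain ⟨e, P, he, hP0, hP⟩ := exists_fusion_seq (fun E P => ∀ b ∈ E, Decides Q P (s ++ [b]))
    hM (by simp) fun E P hP hD => by
      obtain ⟨a, ha⟩ := hP.nonempty
      obtain ⟨P', hP'P, hP', hdec⟩ :=
        exists_decides (Q := Q) (hP.sdiff (Set.finite_Iic a)) (s ++ [a])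
      refine ⟨a, ha, P', fun p hp => (hP'P hp).1, hP', fun p hp => not_le.mp (hP'P hp).2, ?_⟩
      simp only [List.mem_append, List.mem_singleton]
      rintro b (hb | rfl)
      exacts [(hD b hb).mono fun p hp => (hP'P hp).1, hdec]
  have heM : ∀ n, e n ∈ M := fun n => hP0 ▸ (hP 0).2.2 n n.zero_le
  have hdec : ∀ n, Decides Q (P (n + 1)) (s ++ [e n]) := fun n => (hP (n + 1)).2.1 _
    (List.mem_map_of_mem (List.mem_range.mpr n.lt_succ_self))
  have habove : ∀ n, {p ∈ Set.range e | e n < p} ⊆ P (n + 1) := by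
    rintro n _ ⟨⟨j, rfl⟩, hj⟩
    exact (hP (n + 1)).2.2 j (he.lt_iff_lt.mp hj)
  -- if infinitely many `e n` were accepted after `s`, the set of those `e n` would accept `s`
  have hfin : {n | Accepts Q (P (n + 1)) (s ++ [e n])}.Finite := by
    refine Set.not_infinite.mp fun hinf => ?_
    refine h _ (Set.image_subset_iff.mpr fun n _ => heM n) (hinf.image he.injective.injOn) ?_
    intro g hg hgA
    obtain ⟨i, hi, hgi⟩ := hgA 0
    obtain ⟨k, hk⟩ := hi (fun n => g (n + 1)) (fun a b hab => hg (Nat.succ_lt_succ hab))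
      fun n => habove i ⟨Set.image_subset_range _ _ (hgA (n + 1)), hgi ▸ hg n.succ_pos⟩
    exact ⟨k + 1, by simpa [List.range_succ_eq_map, List.map_map, Function.comp_def, hgi] using hk⟩
  refine ⟨e '' {n | Accepts Q (P (n + 1)) (s ++ [e n])}ᶜ, Set.image_subset_iff.mpr fun n _ => heM n,
    hfin.infinite_compl.image he.injective.injOn, ?_⟩
  rintro _ ⟨n, hn, rfl⟩ T hT hTi hacc
  refine (hdec n).resolve_left hn _
    (fun t ht => habove n ⟨Set.image_subset_range _ _ (hT ht.1), not_le.mp ht.2⟩)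
    (hTi.sdiff (Set.finite_Iic (e n))) (hacc.mono Set.sdiff_subset)

theorem exists_forall_mem_rejects_append (ss : List (List ℕ)) (hM : M.Infinite)
    (h : ∀ s ∈ ss, Rejects Q M s) :
    ∃ N ⊆ M, N.Infinite ∧ ∀ s ∈ ss, ∀ n ∈ N, Rejects Q N (s ++ [n]) := by
  induction ss generalizing M with
  | nil => exact ⟨M, le_rfl, hM, by simp⟩
  | cons s ss ih =>
    obtain ⟨N₁, hN₁M, hN₁, hs⟩ := (h s List.mem_cons_self).exists_forall_rejects_append hM
    obtain ⟨N₂, hN₂N₁, hN₂, hss⟩ :=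
      ih hN₁ fun t ht => (h t (List.mem_cons_of_mem s ht)).mono hN₁M
    refine ⟨N₂, hN₂N₁.trans hN₁M, hN₂, ?_⟩
    rintro t (_ | ⟨_, ht⟩) n hn
    exacts [(hs n (hN₂N₁ hn)).mono hN₂N₁, hss t ht n hn]

-- Nash-Williams' theorem, i.e. the Galvin-Prikry theorem for open sets.
theorem exists_infinite_accepts_or_forall_not (Q : List ℕ → Prop) (hM : M.Infinite) :
    ∃ N ⊆ M, N.Infinite ∧ (Accepts Q N [] ∨
      ∀ g, StrictMono g → (∀ n, g n ∈ N) → ∀ k, ¬Q ((List.range k).map g)) := by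
  obtain ⟨N, hNM, hN, hacc | hrej⟩ := exists_decides (Q := Q) hM []
  · exact ⟨N, hNM, hN, Or.inl hacc⟩
  obtain ⟨e, P, he, hP0, hP⟩ := exists_fusion_seq (fun E P => ∀ t, t.Sublist E → Rejects Q P t)
    hN (fun t ht => List.sublist_nil.mp ht ▸ hrej) fun E P hP hD => by
      obtain ⟨N', hN'P, hN', hrej'⟩ := exists_forall_mem_rejects_append E.sublists hP
        fun t ht => hD t (List.mem_sublists.mp ht)
      obtain ⟨a, ha⟩ := hN'.nonempty
      refine ⟨a, hN'P ha, N' \ Set.Iic a, Set.sdiff_subset.trans hN'P, hN'.sdiff (Set.finite_Iic a),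
        fun p hp => not_le.mp hp.2, ?_⟩
      intro t ht
      obtain ⟨t, u, rfl, htE, hu⟩ := List.sublist_append_iff.mp ht
      rcases List.sublist_singleton.mp hu with rfl | rfl
      · exact (List.append_nil t).symm ▸ (hD t htE).mono (Set.sdiff_subset.trans hN'P)
      · exact (hrej' t (List.mem_sublists.mpr htE) a ha).mono Set.sdiff_subset
  refine ⟨Set.range e, ?_, Set.infinite_range_of_injective he.injective, Or.inr ?_⟩
  · rintro _ ⟨n, rfl⟩
    exact hNM (hP0 ▸ (hP 0).2.2 n n.zero_le)
  intro g hg hge k hQ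
  choose h hh using hge
  have hmono : StrictMono h := fun a b hab => he.lt_iff_lt.mp (by simpa only [hh] using hg hab)
  have hsub : ((List.range k).map g).Sublist ((List.range (h k)).map e) := by
    simpa [List.map_map, Function.comp_def, hh] using (hmono.map_range_sublist_range k).map e
  exact ((hP (h k)).2.1 _ hsub).not_apply (hP (h k)).1 hQ

theorem exists_infinite_forall_accepts_or_exists_forall_not {ι : Type*} (Q : ι → List ℕ → Prop)
    (I : Finset ι) (hM : M.Infinite) :
    ∃ N ⊆ M, N.Infinite ∧ ((∀ i ∈ I, Accepts (Q i) N []) ∨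
      ∃ i ∈ I, ∀ g, StrictMono g → (∀ n, g n ∈ N) → ∀ k, ¬Q i ((List.range k).map g)) := by
  classical
  induction I using Finset.induction_on generalizing M with
  | empty => exact ⟨M, le_rfl, hM, Or.inl (by simp)⟩
  | insert i I _ ih =>
    obtain ⟨N₁, hN₁M, hN₁, hacc | ⟨j, hj, hnot⟩⟩ := ih hM
    · obtain ⟨N₂, hN₂N₁, hN₂, hacc' | hnot⟩ := exists_infinite_accepts_or_forall_not (Q i) hN₁
      · refine ⟨N₂, hN₂N₁.trans hN₁M, hN₂, Or.inl ?_⟩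
        simp only [Finset.mem_insert, forall_eq_or_imp]
        exact ⟨hacc', fun j hj => (hacc j hj).mono hN₂N₁⟩
      · exact ⟨N₂, hN₂N₁.trans hN₁M, hN₂, Or.inr ⟨i, Finset.mem_insert_self i I, hnot⟩⟩
    · exact ⟨N₁, hN₁M, hN₁, Or.inr ⟨j, Finset.mem_insert_of_mem hj, hnot⟩⟩

end GalvinPrikry

theorem exists_strictMono_forall_mem_of_infinite (T : ℕ → Set ℕ) (hT : ∀ i, (T i).Infinite) :
    ∃ g : ℕ → ℕ, StrictMono g ∧ ∀ i, g i ∈ T i := by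
  choose next hnext hgt using fun i a => (hT i).exists_gt a
  let g : ℕ → ℕ := fun n => Nat.rec (next 0 0) (fun i prev => next (i + 1) prev) n
  refine ⟨g, strictMono_nat_of_lt_succ fun n => hgt _ _, fun n => ?_⟩
  cases n <;> exact hnext _ _

-- Positions `2j` and `2j + 1` hold `3j + 1, 3j + 2` if `σ j`, and `3j, 3j + 1` otherwise.
theorem exists_strictMono_even_iff (σ : ℕ → Bool) :
    ∃ e : ℕ → ℕ, StrictMono e ∧ ∀ j, ∃ i < 2 * j + 2, e i = 3 * j + 1 ∧ (Even i ↔ σ j) := by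
  refine ⟨fun i => 3 * (i / 2) + i % 2 + (σ (i / 2)).toNat, strictMono_nat_of_lt_succ fun i => ?_,
    fun j => ?_⟩
  · obtain ⟨j, rfl | rfl⟩ := Nat.even_or_odd' i
    · have h1 : 2 * j / 2 = j := by omega
      have h2 : (2 * j + 1) / 2 = j := by omega
      simp only [h1, h2]
      omega
    · have h1 : (2 * j + 1) / 2 = j := by omega
      have h2 : (2 * j + 1 + 1) / 2 = j + 1 := by omega
      simp only [h1, h2]
      have := Bool.toNat_le (σ j)
      omega
  · cases h : σ j
    · refine ⟨2 * j + 1, by omega, ?_, by simp⟩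
      have h1 : (2 * j + 1) / 2 = j := by omega
      simp [h1, h]
    · refine ⟨2 * j, by omega, ?_, by simp⟩
      have h1 : 2 * j / 2 = j := by omega
      simp [h1, h]

theorem re_mul_sub_norm_mul_le (μ d t : ℂ) : (μ * t).re - ‖μ‖ * ‖d - t‖ ≤ (μ * d).re := by
  have h := neg_le_of_abs_le (Complex.abs_re_le_norm (μ * (d - t)))
  rw [norm_mul, mul_sub, Complex.sub_re] at h
  linarith

theorem norm_le_max_re_add_max_re_add (a : ℂ) :
    ‖a‖ ≤ max a.re 0 + max (-a).re 0 + max (Complex.I * a).re 0 + max (-Complex.I * a).re 0 := by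
  simp only [Complex.neg_re, Complex.I_mul_re, neg_mul, neg_neg]
  have h1 := max_zero_add_max_neg_zero_eq_abs_self a.re
  have h2 := max_zero_add_max_neg_zero_eq_abs_self a.im
  linarith [Complex.norm_le_abs_re_add_abs_im a]

theorem abs_re_add_abs_im_le_sqrt_two_mul_norm (z : ℂ) : |z.re| + |z.im| ≤ √2 * ‖z‖ := by
  rw [show √2 * ‖z‖ = √(2 * ‖z‖ ^ 2) by
      rw [Real.sqrt_mul zero_le_two, Real.sqrt_sq (norm_nonneg z)],
    Real.le_sqrt (by positivity) (by positivity), Complex.sq_norm, Complex.normSq_apply]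
  nlinarith [sq_abs z.re, sq_abs z.im, sq_nonneg (|z.re| - |z.im|)]

section Patterns

variable {X : Type*} [NormedAddCommGroup X] [NormedSpace ℂ X]

def RealizesAllPatterns (y : ℕ → X) (u v : ℂ) (ρ : ℝ) : Prop :=
  ∀ (σ : ℕ → Bool) (K : ℕ), ∃ φ : X →L[ℂ] ℂ, ‖φ‖ ≤ 1 ∧
    ∀ j ≤ K, ‖φ (y j) - if σ j then u else v‖ ≤ ρ

variable {y : ℕ → X} {u v : ℂ} {ρ : ℝ}

theorem RealizesAllPatterns.exists_norm_le_two_separating (h : RealizesAllPatterns y u v ρ)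
    (σ : ℕ → Bool) (K : ℕ) :
    ∃ χ : X →L[ℂ] ℂ, ‖χ‖ ≤ 2 ∧
      ∀ j ≤ K, ‖χ (y j) - if σ j then u - v else v - u‖ ≤ 2 * ρ := by
  obtain ⟨φ, hφ, hφσ⟩ := h σ K
  obtain ⟨ψ, hψ, hψσ⟩ := h (fun j => !σ j) K
  refine ⟨φ - ψ, (norm_sub_le φ ψ).trans (by linarith), fun j hj => ?_⟩
  have hsplit : (φ - ψ) (y j) - (if σ j then u - v else v - u) =
      (φ (y j) - if σ j then u else v) - (ψ (y j) - if !σ j then u else v) := by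
    cases σ j <;>
      simp only [sub_apply, Bool.not_false, Bool.not_true, Bool.false_eq_true,
        ↓reduceIte] <;> ring
  rw [hsplit, two_mul]
  exact (norm_sub_le _ _).trans (add_le_add (hφσ j hj) (hψσ j hj))

theorem RealizesAllPatterns.sum_max_re_le (h : RealizesAllPatterns y u v ρ) (s : Finset ℕ)
    (μ : ℕ → ℂ) :
    ∑ n ∈ s, (2 * max (μ n * (u - v)).re 0 - 4 * ρ * ‖μ n‖) ≤
      2 * ‖∑ n ∈ s, μ n • (y (n + 1) - y 0)‖ := by
  let σ : ℕ → Bool := fun j => decide (j ≠ 0 ∧ 0 ≤ (μ (j - 1) * (u - v)).re)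
  obtain ⟨χ, hχ, hχσ⟩ := h.exists_norm_le_two_separating σ (s.sup id + 1)
  have hterm : ∀ n ∈ s, 2 * max (μ n * (u - v)).re 0 - 4 * ρ * ‖μ n‖ ≤
      (μ n * (χ (y (n + 1)) - χ (y 0))).re := by
    intro n hn
    have h0 : ‖χ (y 0) - (v - u)‖ ≤ 2 * ρ := by simpa [σ] using hχσ 0 (Nat.zero_le _)
    have h1 := hχσ (n + 1) (Nat.succ_le_succ (Finset.le_sup (f := id) hn))
    set t : ℂ := (if σ (n + 1) then u - v else v - u) - (v - u) with ht
    have hre : (μ n * t).re = 2 * max (μ n * (u - v)).re 0 := by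
      have hσ : σ (n + 1) = decide (0 ≤ (μ n * (u - v)).re) := by simp [σ]
      by_cases hc : 0 ≤ (μ n * (u - v)).re
      · rw [ht, hσ, decide_eq_true hc, if_pos rfl, max_eq_left hc,
          show μ n * (u - v - (v - u)) = 2 * (μ n * (u - v)) by ring]
        simp
      · rw [ht, hσ, decide_eq_false hc, max_eq_right (not_le.mp hc).le]
        simp
    have hdt : ‖(χ (y (n + 1)) - χ (y 0)) - t‖ ≤ 4 * ρ := by
      have hsplit : (χ (y (n + 1)) - χ (y 0)) - t =
          (χ (y (n + 1)) - if σ (n + 1) then u - v else v - u) - (χ (y 0) - (v - u)) := by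
        rw [ht]; ring
      rw [hsplit]
      linarith [norm_sub_le (χ (y (n + 1)) - if σ (n + 1) then u - v else v - u) (χ (y 0) - (v - u))]
    calc 2 * max (μ n * (u - v)).re 0 - 4 * ρ * ‖μ n‖
        ≤ (μ n * t).re - ‖μ n‖ * ‖(χ (y (n + 1)) - χ (y 0)) - t‖ := by
          rw [hre]; nlinarith [norm_nonneg (μ n)]
      _ ≤ _ := re_mul_sub_norm_mul_le _ _ _
  calc _ ≤ ∑ n ∈ s, (μ n * (χ (y (n + 1)) - χ (y 0))).re := Finset.sum_le_sum hterm
    _ = (χ (∑ n ∈ s, μ n • (y (n + 1) - y 0))).re := by simp [map_sum, Complex.re_sum]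
    _ ≤ ‖χ‖ * ‖∑ n ∈ s, μ n • (y (n + 1) - y 0)‖ := (Complex.re_le_norm _).trans (χ.le_opNorm _)
    _ ≤ _ := by gcongr

theorem RealizesAllPatterns.le_norm_sum (h : RealizesAllPatterns y u v ρ) (s : Finset ℕ)
    (μ : ℕ → ℂ) :
    (‖u - v‖ / 4 - 2 * ρ) * ∑ n ∈ s, ‖μ n‖ ≤ ‖∑ n ∈ s, μ n • (y (n + 1) - y 0)‖ := by
  set w := ∑ n ∈ s, μ n • (y (n + 1) - y 0)
  have hrot : ∀ c : ℂ, ‖c‖ = 1 →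
      ∑ n ∈ s, (2 * max (c * (μ n * (u - v))).re 0 - 4 * ρ * ‖μ n‖) ≤ 2 * ‖w‖ := by
    intro c hc
    have := h.sum_max_re_le s (fun n => c * μ n)
    simp only [norm_mul, hc, one_mul, mul_smul, ← Finset.smul_sum, norm_smul] at this
    simpa only [mul_assoc] using this
  have hsum := add_le_add (add_le_add (add_le_add (hrot 1 (by simp)) (hrot (-1) (by simp)))
    (hrot Complex.I (by simp))) (hrot (-Complex.I) (by simp))
  simp only [← Finset.sum_add_distrib] at hsum
  have hpt : ∀ n ∈ s, (2 * ‖u - v‖ - 16 * ρ) * ‖μ n‖ ≤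
      2 * max (1 * (μ n * (u - v))).re 0 - 4 * ρ * ‖μ n‖ +
        (2 * max (-1 * (μ n * (u - v))).re 0 - 4 * ρ * ‖μ n‖) +
        (2 * max (Complex.I * (μ n * (u - v))).re 0 - 4 * ρ * ‖μ n‖) +
        (2 * max (-Complex.I * (μ n * (u - v))).re 0 - 4 * ρ * ‖μ n‖) := by
    intro n _
    have := norm_le_max_re_add_max_re_add (μ n * (u - v))
    rw [norm_mul] at this
    simp only [one_mul, neg_one_mul]
    nlinarith [norm_nonneg (μ n), norm_nonneg (u - v)]
  have := (Finset.sum_le_sum hpt).trans hsum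
  rw [← Finset.mul_sum] at this
  linarith

theorem RealizesAllPatterns.le_norm_sum_abs_re_add_abs_im (h : RealizesAllPatterns y u v ρ)
    {ε δ : ℝ} (hδ : 0 ≤ δ) (hρδ : 4 * ρ ≤ δ) (huv : ε - 2 * ρ ≤ ‖u - v‖) (s : Finset ℕ)
    (μ : ℕ → ℂ) :
    (ε * √2 / 8 - δ) * ∑ n ∈ s, (|(μ n).re| + |(μ n).im|) ≤
      ‖∑ n ∈ s, μ n • (y (n + 1) - y 0)‖ := by
  rcases le_or_gt (ε * √2 / 8 - δ) 0 with hc | hc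
  · exact (mul_nonpos_of_nonpos_of_nonneg hc (Finset.sum_nonneg fun n _ => by positivity)).trans
      (norm_nonneg _)
  have hsqrt : ∑ n ∈ s, (|(μ n).re| + |(μ n).im|) ≤ √2 * ∑ n ∈ s, ‖μ n‖ := by
    rw [Finset.mul_sum]
    exact Finset.sum_le_sum fun n _ => abs_re_add_abs_im_le_sqrt_two_mul_norm (μ n)
  calc (ε * √2 / 8 - δ) * ∑ n ∈ s, (|(μ n).re| + |(μ n).im|)
      ≤ (ε * √2 / 8 - δ) * √2 * ∑ n ∈ s, ‖μ n‖ := by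
        rw [mul_assoc]; exact mul_le_mul_of_nonneg_left hsqrt hc.le
    _ ≤ (‖u - v‖ / 4 - 2 * ρ) * ∑ n ∈ s, ‖μ n‖ := by
        have hsq : (ε * √2 / 8 - δ) * √2 = ε / 4 - √2 * δ := by
          linear_combination (ε / 8) * Real.mul_self_sqrt zero_le_two
        have hδ' : δ ≤ √2 * δ := le_mul_of_one_le_left hδ Real.one_lt_sqrt_two.le
        gcongr
        linarith
    _ ≤ _ := h.le_norm_sum s μ

def AlternatesNear (x : ℕ → X) (u v : ℂ) (ρ : ℝ) (l : List ℕ) : Prop :=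
  ∃ φ : X →L[ℂ] ℂ, ‖φ‖ ≤ 1 ∧
    ∀ i (hi : i < l.length), ‖φ (x l[i]) - if Even i then u else v‖ ≤ ρ

variable {x : ℕ → X} {N : Set ℕ}

theorem realizesAllPatterns_of_forall_alternatesNear (hN : N.Infinite)
    (h : ∀ g, StrictMono g → (∀ n, g n ∈ N) → ∀ k, AlternatesNear x u v ρ ((List.range k).map g)) :
    RealizesAllPatterns (fun j => x (Nat.nth (· ∈ N) (3 * j + 1))) u v ρ := by
  intro σ K
  obtain ⟨e, he, hpos⟩ := exists_strictMono_even_iff σ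
  obtain ⟨φ, hφ, hφalt⟩ := h (Nat.nth (· ∈ N) ∘ e) ((Nat.nth_strictMono hN).comp he)
    (fun n => Nat.nth_mem_of_infinite hN _) (2 * K + 2)
  refine ⟨φ, hφ, fun j hj => ?_⟩
  obtain ⟨i, hi, hei, hiσ⟩ := hpos j
  have := hφalt i (by simp only [List.length_map, List.length_range]; omega)
  simp only [List.getElem_map, List.getElem_range, Function.comp_apply, hei] at this
  have hif : (if Even i then u else v) = if σ j then u else v := by
    by_cases hev : Even i
    · rw [if_pos hev, if_pos (hiσ.mp hev)]
    · rw [if_neg hev, if_neg (mt hiσ.mpr hev)]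
  rwa [hif] at this

theorem not_infinite_and_infinite_of_accepts
    (h : GalvinPrikry.Accepts (fun l => ¬AlternatesNear x u v ρ l) N [])
    {φ : X →L[ℂ] ℂ} (hφ : ‖φ‖ ≤ 1) :
    ¬({a ∈ N | ‖φ (x a) - u‖ ≤ ρ}.Infinite ∧ {a ∈ N | ‖φ (x a) - v‖ ≤ ρ}.Infinite) := by
  rintro ⟨hu, hv⟩
  obtain ⟨g, hg, hgT⟩ := exists_strictMono_forall_mem_of_infinite
    (fun i => {a ∈ N | ‖φ (x a) - if Even i then u else v‖ ≤ ρ})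
    fun i => by split_ifs <;> assumption
  obtain ⟨k, hk⟩ := h g hg fun n => (hgT n).1
  exact hk ⟨φ, hφ, fun i hi => by simpa using (hgT i).2⟩

theorem exists_infinite_near_of_oscillating {f : ℕ → ℂ} {T : Finset ℂ} {ε : ℝ}
    (hT : ∀ a, ∃ t ∈ T, ‖f a - t‖ ≤ ρ)
    (hosc : ∀ n₀, ∃ a ∈ N, ∃ b ∈ N, n₀ ≤ a ∧ n₀ ≤ b ∧ ε ≤ ‖f a - f b‖) :
    ∃ u ∈ T, ∃ v ∈ T, ε - 2 * ρ ≤ ‖u - v‖ ∧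
      {a ∈ N | ‖f a - u‖ ≤ ρ}.Infinite ∧ {a ∈ N | ‖f a - v‖ ≤ ρ}.Infinite := by
  classical
  choose c hcT hc using hT
  have hfin : {a ∈ N | ¬{b ∈ N | c b = c a}.Infinite}.Finite := by
    refine ((T.filter fun t => ¬{b ∈ N | c b = t}.Infinite).finite_toSet.biUnion
      fun t ht => Set.not_infinite.mp (Finset.mem_filter.mp ht).2).subset ?_
    rintro a ⟨ha, hinf⟩
    exact Set.mem_biUnion (Finset.mem_filter.mpr ⟨hcT a, hinf⟩) ⟨ha, rfl⟩
  obtain ⟨n₀, hn₀⟩ := hfin.bddAbove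
  have hinf : ∀ a ∈ N, n₀ < a → {b ∈ N | ‖f b - c a‖ ≤ ρ}.Infinite := fun a ha hlt =>
    (not_not.mp fun hfin' => (hn₀ ⟨ha, hfin'⟩).not_gt hlt).mono
      fun b (hb : b ∈ N ∧ c b = c a) => ⟨hb.1, hb.2 ▸ hc b⟩
  obtain ⟨a, ha, b, hb, hna, hnb, hab⟩ := hosc (n₀ + 1)
  refine ⟨c a, hcT a, c b, hcT b, ?_, hinf a ha hna, hinf b hb hnb⟩
  have := norm_sub_le_norm_sub_add_norm_sub (f a) (c a) (f b)
  have := norm_sub_le_norm_sub_add_norm_sub (c a) (c b) (f b)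
  linarith [hc a, hc b, norm_sub_rev (c b) (f b)]

theorem exists_subseq_weakCauchy_of_forall_accepts (hN : N.Infinite) {T : Finset ℂ} {ε : ℝ}
    (hT : ∀ φ : X →L[ℂ] ℂ, ‖φ‖ ≤ 1 → ∀ a, ∃ t ∈ T, ‖φ (x a) - t‖ ≤ ρ)
    (hacc : ∀ u ∈ T, ∀ v ∈ T, ε - 2 * ρ ≤ ‖u - v‖ →
      GalvinPrikry.Accepts (fun l => ¬AlternatesNear x u v ρ l) N []) :
    ∃ m : ℕ → ℕ, StrictMono m ∧ ∀ φ : X →L[ℂ] ℂ, ‖φ‖ ≤ 1 →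
      ∃ n₀ : ℕ, ∀ n ≥ n₀, ∀ k ≥ n₀, ‖φ (x (m n)) - φ (x (m k))‖ < ε := by
  have hmono := Nat.nth_strictMono hN
  refine ⟨Nat.nth (· ∈ N), hmono, fun φ hφ => ?_⟩
  by_contra hosc
  push Not at hosc
  obtain ⟨u, hu, v, hv, huv, hU, hV⟩ := exists_infinite_near_of_oscillating (N := N)
    (f := fun a => φ (x a)) (hT φ hφ) fun n₀ => by
      obtain ⟨n, hn, k, hk, hnk⟩ := hosc n₀
      exact ⟨_, Nat.nth_mem_of_infinite hN n, _, Nat.nth_mem_of_infinite hN k,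
        hn.trans hmono.le_apply, hk.trans hmono.le_apply, hnk⟩
  exact not_infinite_and_infinite_of_accepts (hacc u hu v hv huv) hφ ⟨hU, hV⟩

end Patterns

theorem exists_finset_forall_norm_sub_le (C : ℝ) {ρ : ℝ} (hρ : 0 < ρ) :
    ∃ T : Finset ℂ, ∀ z : ℂ, ‖z‖ ≤ C → ∃ t ∈ T, ‖z - t‖ ≤ ρ := by
  obtain ⟨t, -, ht, hcover⟩ := finite_cover_balls_of_compact (isCompact_closedBall (0 : ℂ) C) hρ
  refine ⟨ht.toFinset, fun z hz => ?_⟩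
  obtain ⟨c, hc, hzc⟩ := Set.mem_iUnion₂.mp (hcover (mem_closedBall_zero_iff.mpr hz))
  exact ⟨c, ht.mem_toFinset.mpr hc, (mem_ball_iff_norm.mp hzc).le⟩

theorem main_banach_complex_general (X : Type*) [NormedAddCommGroup X] [NormedSpace ℂ X]
    (x : ℕ → X) (hx : ∃ C : ℝ, ∀ n, ‖x n‖ ≤ C)
    (ε : ℝ) :
    (∃ m : ℕ → ℕ, StrictMono m ∧
        ∀ φ : X →L[ℂ] ℂ, ‖φ‖ ≤ 1 →
          ∃ n₀ : ℕ, ∀ n ≥ n₀, ∀ k ≥ n₀, ‖φ (x (m n)) - φ (x (m k))‖ < ε) ∨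
      ∀ δ : ℝ, 0 < δ → ∃ m : ℕ → ℕ, StrictMono m ∧
        ∀ lam : ℕ →₀ ℂ,
          ‖∑ n ∈ lam.support, lam n • (x (m (n + 1)) - x (m 0))‖ ≥
            (ε * Real.sqrt 2 / 8 - δ) *
              ∑ n ∈ lam.support, (|(lam n).re| + |(lam n).im|) := by
  obtain ⟨C, hC⟩ := hx
  refine or_iff_not_imp_left.mpr fun hcauchy δ hδ => ?_
  obtain ⟨T, hT⟩ := exists_finset_forall_norm_sub_le C (by positivity : 0 < δ / 4)
  have hTx : ∀ φ : X →L[ℂ] ℂ, ‖φ‖ ≤ 1 → ∀ a, ∃ t ∈ T, ‖φ (x a) - t‖ ≤ δ / 4 := fun φ hφ a =>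
    hT _ ((φ.le_opNorm _).trans (by nlinarith [hC a, norm_nonneg (x a), norm_nonneg φ]))
  obtain ⟨N, -, hN, hacc | ⟨⟨u, v⟩, huv, halt⟩⟩ :=
    GalvinPrikry.exists_infinite_forall_accepts_or_exists_forall_not
      (fun p l => ¬AlternatesNear x p.1 p.2 (δ / 4) l)
      ((T ×ˢ T).filter fun p => ε - 2 * (δ / 4) ≤ ‖p.1 - p.2‖) Set.infinite_univ
  · exact absurd (exists_subseq_weakCauchy_of_forall_accepts hN hTx fun u hu v hv huv =>
      hacc (u, v) (Finset.mem_filter.mpr ⟨Finset.mem_product.mpr ⟨hu, hv⟩, huv⟩)) hcauchy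
  have hR := realizesAllPatterns_of_forall_alternatesNear hN fun g hg hgN k =>
    not_not.mp (halt g hg hgN k)
  exact ⟨fun j => Nat.nth (· ∈ N) (3 * j + 1), (Nat.nth_strictMono hN).comp fun a b hab => by omega,
    fun lam => hR.le_norm_sum_abs_re_add_abs_im hδ.le (by linarith) (Finset.mem_filter.mp huv).2
      lam.support lam⟩

/-- For a bounded sequence (x_n) in a complex Banach space and ε > 0, either
(x_n) admits an ε-weak Cauchy subsequence, or for every δ > 0 there is a
subsequence (x_{m_n}) with
‖Σ_{n≥2} λ_n (x_{m_n} − x_{m_1})‖ ≥ (ε√2/8 − δ)·Σ_{n≥2}(|Re λ_n| + |Im λ_n|). -/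
theorem main_banach_complex (X : Type*) [NormedAddCommGroup X] [NormedSpace ℂ X]
    [CompleteSpace X] (x : ℕ → X) (hx : ∃ C : ℝ, ∀ n, ‖x n‖ ≤ C)
    (ε : ℝ) (hε : 0 < ε) :
    (∃ m : ℕ → ℕ, StrictMono m ∧
        ∀ φ : X →L[ℂ] ℂ, ‖φ‖ ≤ 1 →
          ∃ n₀ : ℕ, ∀ n ≥ n₀, ∀ k ≥ n₀, ‖φ (x (m n)) - φ (x (m k))‖ < ε) ∨
      ∀ δ : ℝ, 0 < δ → ∃ m : ℕ → ℕ, StrictMono m ∧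
        ∀ lam : ℕ →₀ ℂ,
          ‖∑ n ∈ lam.support, lam n • (x (m (n + 1)) - x (m 0))‖ ≥
            (ε * Real.sqrt 2 / 8 - δ) *
              ∑ n ∈ lam.support, (|(lam n).re| + |(lam n).im|) :=
  main_banach_complex_general X x hx ε
end

section
/- Let K be a compact metric space, (f_n) a bounded sequence in C(K, ℂ), E a closed subset of ℂ², and P an infinite subset of ℕ. Then the set D(P, E) is closed in the space of infinite subsets of ℕ equipped with the topology of pointwise convergence (i.e., the topology induced from the product topology on {0,1}^ℕ via characteristic functions). That is, if (L_m) is a sequence in D(P, E) converging pointwise to an infinite set L ⊆ P, then L ∈ D(P, E). -/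
/-! Pick witnesses `t m` for the sets `L_m` and, by compactness, a subsequence converging to
some `t₀`. Any fixed position of the increasing enumeration of a set is determined by an
initial segment of the set, so for each `n` the pair of indices `(l_{2n}, l_{2n+1})` of `L_m`
is eventually that of `L`. The pairs of values at `t m` along the subsequence then lie in `E`
and converge to the pair at `t₀`, which lies in `E` because `E` is closed. -/

open Filter Topology

namespace Nat

lemma count_congr {p q : ℕ → Prop} [DecidablePred p] [DecidablePred q] {x : ℕ}
    (h : ∀ j < x, p j ↔ q j) : count p x = count q x :=
  le_antisymm (count_mono_left fun j hj => (h j hj).1) (count_mono_left fun j hj => (h j hj).2)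

lemma nth_eq_of_agree {p q : ℕ → Prop} (hq : (Set.ofPred q).Infinite) {i : ℕ}
    (h : ∀ j ≤ nth q i, p j ↔ q j) : nth p i = nth q i := by
  classical
  set x := nth q i
  have hpx : p x := (h x le_rfl).2 (nth_mem_of_infinite hq i)
  have hcount : count p x = i := by
    rw [count_congr fun j hj => h j hj.le]
    exact count_nth_of_infinite hq i
  rw [← hcount, nth_count hpx]

lemma eventually_nth_mem_eq {ι : Type*} {l : Filter ι} {S : ι → Set ℕ} {T : Set ℕ}
    (hT : T.Infinite) (hST : ∀ k, ∀ᶠ m in l, k ∈ S m ↔ k ∈ T) (i : ℕ) :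
    ∀ᶠ m in l, nth (· ∈ S m) i = nth (· ∈ T) i := by
  have hseg : ∀ᶠ m in l, ∀ j ∈ Set.Iic (nth (· ∈ T) i), j ∈ S m ↔ j ∈ T :=
    (eventually_all_finite (Set.finite_Iic _)).2 fun j _ => hST j
  filter_upwards [hseg] with m hm
  exact nth_eq_of_agree hT hm

end Nat

theorem D_pointwise_closed_general (K : Type*) [MetricSpace K] [CompactSpace K]
    (f : ℕ → C(K, ℂ))
    (E : Set (ℂ × ℂ)) (hE : IsClosed E) (P : Set ℕ)
    (Lseq : ℕ → Set ℕ)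
    (hmem : ∀ m : ℕ, Lseq m ⊆ P ∧ (Lseq m).Infinite ∧
      ∃ t : K, ∀ n : ℕ,
        (f (Nat.nth (· ∈ Lseq m) (2 * n)) t, f (Nat.nth (· ∈ Lseq m) (2 * n + 1)) t) ∈ E)
    (L : Set ℕ) (hLinf : L.Infinite)
    (hconv : ∀ k : ℕ, ∀ᶠ m in Filter.atTop, (k ∈ Lseq m ↔ k ∈ L)) :
    ∃ t : K, ∀ n : ℕ,
      (f (Nat.nth (· ∈ L) (2 * n)) t, f (Nat.nth (· ∈ L) (2 * n + 1)) t) ∈ E := by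
  choose t ht using fun m => (hmem m).2.2
  obtain ⟨t₀, -, φ, hφ, ht₀⟩ := isCompact_univ.tendsto_subseq fun m => Set.mem_univ (t m)
  refine ⟨t₀, fun n => ?_⟩
  set a := Nat.nth (· ∈ L) (2 * n)
  set b := Nat.nth (· ∈ L) (2 * n + 1)
  have hpairs : Tendsto (fun m => (f a (t (φ m)), f b (t (φ m)))) atTop (𝓝 (f a t₀, f b t₀)) :=
    (((f a).continuous.tendsto t₀).comp ht₀).prodMk_nhds (((f b).continuous.tendsto t₀).comp ht₀)
  have hconvφ : ∀ k, ∀ᶠ m in atTop, k ∈ Lseq (φ m) ↔ k ∈ L :=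
    fun k => hφ.tendsto_atTop.eventually (hconv k)
  refine hE.mem_of_tendsto hpairs ?_
  filter_upwards [Nat.eventually_nth_mem_eq hLinf hconvφ (2 * n),
    Nat.eventually_nth_mem_eq hLinf hconvφ (2 * n + 1)] with m ha hb
  simpa only [ha, hb] using ht (φ m) n

/-- Lemma 1: the set D(P, E) is pointwise closed.  An infinite set L ⊆ ℕ belongs
to D(P, E) if L ⊆ P and, with (Nat.nth (· ∈ L)) its increasing enumeration,
there is t ∈ K with all consecutive pairs of values (f_{l_{2n-1}}(t), f_{l_{2n}}(t))
lying in E.  If a sequence (L_m) of members of D(P, E) converges pointwise (as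
characteristic functions) to an infinite set L ⊆ P, then L ∈ D(P, E). -/
theorem D_pointwise_closed (K : Type*) [MetricSpace K] [CompactSpace K]
    (f : ℕ → C(K, ℂ)) (hf : ∃ C : ℝ, ∀ n, ‖f n‖ ≤ C)
    (E : Set (ℂ × ℂ)) (hE : IsClosed E) (P : Set ℕ) (hP : P.Infinite)
    (Lseq : ℕ → Set ℕ)
    (hmem : ∀ m : ℕ, Lseq m ⊆ P ∧ (Lseq m).Infinite ∧
      ∃ t : K, ∀ n : ℕ,
        (f (Nat.nth (· ∈ Lseq m) (2 * n)) t, f (Nat.nth (· ∈ Lseq m) (2 * n + 1)) t) ∈ E)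
    (L : Set ℕ) (hLP : L ⊆ P) (hLinf : L.Infinite)
    (hconv : ∀ k : ℕ, ∀ᶠ m in Filter.atTop, (k ∈ Lseq m ↔ k ∈ L)) :
    ∃ t : K, ∀ n : ℕ,
      (f (Nat.nth (· ∈ L) (2 * n)) t, f (Nat.nth (· ∈ L) (2 * n + 1)) t) ∈ E :=
  D_pointwise_closed_general K f E hE P Lseq hmem L hLinf hconv
end

section
/- Let K be a compact metric space and (f_n) a bounded sequence in C(K, ℂ). Assume that for every infinite subset P of ℕ and every ε > 0, the set D(P, F_ε) is a proper subset of the collection of all infinite subsets of P. Then (f_n) admits a weak Cauchy subsequence, i.e., a subsequence (f_{m_n}) such that (f_{m_n}(t)) converges for every t ∈ K. -/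
/-!
Call a finite list `s` of indices a `ClosePairCover` if every `t ∈ K` sees an `ε`-close pair
`f_{s[2i]}(t), f_{s[2i+1]}(t)`. By compactness of `K`, an infinite `L ⊆ P` lies outside
`D(P, F_ε)` exactly when some initial segment of its enumeration is a `ClosePairCover`, so the
complement of `D(P, F_ε)` is an open family in the sense of Nash-Williams. The open Ramsey theorem
of Nash-Williams then gives, inside any subsequence, a further subsequence `M` such that either
every subsequence of `M` has an initial segment that is a `ClosePairCover`, or none has one. The
hypothesis rules out the second case; in the first, `(f_m(t))_{m ∈ M}` eventually oscillates by
less than `ε` at every `t`, since otherwise pairs that are `ε`-far apart at `t` would form a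
subsequence of `M` without such an initial segment. A diagonal argument over `ε = 1/(k+1)`
produces a pointwise Cauchy subsequence.
-/

open Set

theorem exists_strictMono_eq_comp_of_range_subset {α : Type*} [Preorder α] {b c : ℕ → α}
    (hb : StrictMono b) (hc : StrictMono c) (h : range b ⊆ range c) :
    ∃ ι : ℕ → ℕ, StrictMono ι ∧ b = c ∘ ι := by
  choose ι hι using fun i => h (mem_range_self i)
  refine ⟨ι, fun i j hij => hc.lt_iff_lt.mp ?_, funext fun i => (hι i).symm⟩
  rw [hι, hι]
  exact hb hij

theorem antitone_range_of_forall_exists_comp {α β : Type*} {U : ℕ → β → α}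
    (h : ∀ k, ∃ ψ : β → β, U (k + 1) = U k ∘ ψ) : Antitone fun k => range (U k) :=
  antitone_nat_of_succ_le fun k => by
    obtain ⟨ψ, hψ⟩ := h k
    rw [hψ]
    exact range_comp_subset_range _ _

theorem List.map_range_sublist_range {ν : ℕ → ℕ} (hν : StrictMono ν) (r : ℕ) :
    ((List.range r).map ν).Sublist (List.range (ν r)) := by
  have hsorted : ((List.range r).map ν).Pairwise (· < ·) :=
    List.pairwise_lt_range.map ν fun _ _ hab => hν hab
  refine List.sublist_of_subperm_of_pairwise (List.subperm_of_subset hsorted.nodup ?_) hsorted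
    List.pairwise_lt_range
  intro x hx
  simp only [List.mem_map, List.mem_range] at hx ⊢
  obtain ⟨i, hi, rfl⟩ := hx
  exact hν hi

theorem exists_strictMono_forall_pairs {R : ℕ → ℕ → Prop}
    (h : ∀ N, ∃ i ≥ N, ∃ j > i, R i j) :
    ∃ q : ℕ → ℕ, StrictMono q ∧ ∀ n, R (q (2 * n)) (q (2 * n + 1)) := by
  choose i hi j hj hR using h
  let N : ℕ → ℕ := fun k => (fun N => j N + 1)^[k] 0
  have hN : ∀ k, N (k + 1) = j (N k) + 1 := fun k => Function.iterate_succ_apply' _ _ _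
  let q : ℕ → ℕ := fun n => if n % 2 = 0 then i (N (n / 2)) else j (N (n / 2))
  have hq_even : ∀ k, q (2 * k) = i (N k) := fun k => by
    simp only [q, if_pos (show 2 * k % 2 = 0 by omega), show 2 * k / 2 = k by omega]
  have hq_odd : ∀ k, q (2 * k + 1) = j (N k) := fun k => by
    simp only [q, if_neg (show ¬(2 * k + 1) % 2 = 0 by omega),
      show (2 * k + 1) / 2 = k by omega]
  refine ⟨q, strictMono_nat_of_lt_succ fun n => ?_, fun n => hq_even n ▸ hq_odd n ▸ hR _⟩
  obtain ⟨k, rfl | rfl⟩ := Nat.even_or_odd' n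
  · rw [hq_odd, hq_even]
    exact hj _
  · rw [show 2 * k + 1 + 1 = 2 * (k + 1) by ring, hq_odd, hq_even]
    exact (show j (N k) < N (k + 1) by rw [hN]; omega).trans_le (hi _)

theorem exists_strictMono_forall_of_hereditary {Q : ℕ → (ℕ → ℕ) → Prop}
    (hex : ∀ k φ, StrictMono φ → ∃ ψ : ℕ → ℕ, StrictMono ψ ∧ Q k (φ ∘ ψ))
    (hcomp : ∀ k φ (ψ : ℕ → ℕ), Q k φ → StrictMono ψ → Q k (φ ∘ ψ))
    (hshift : ∀ k φ n, Q k (fun i => φ (i + n)) → Q k φ) :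
    ∃ D : ℕ → ℕ, StrictMono D ∧ ∀ k, Q k D := by
  choose! ψ hψ hQ using hex
  let Φ : ℕ → ℕ → ℕ := fun k => Nat.rec id (fun k φ => φ ∘ ψ k φ) k
  have hΦ : ∀ k, StrictMono (Φ k) := fun k => by
    induction k with
    | zero => exact strictMono_id
    | succ k ih => exact ih.comp (hψ k _ ih)
  have hrange := antitone_range_of_forall_exists_comp (U := Φ) fun k => ⟨_, rfl⟩
  have hD : StrictMono fun n => Φ n n := strictMono_nat_of_lt_succ fun n =>
    hΦ n ((Nat.lt_succ_self n).trans_le (hψ n _ (hΦ n)).le_apply)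
  refine ⟨fun n => Φ n n, hD, fun k => hshift k _ (k + 1) ?_⟩
  -- from index `k + 1` on, the diagonal is a subsequence of `Φ (k + 1)`
  obtain ⟨ι, hι, hDι⟩ := exists_strictMono_eq_comp_of_range_subset
    (b := fun i => Φ (i + (k + 1)) (i + (k + 1)))
    (hD.comp fun _ _ hij => Nat.add_lt_add_right hij (k + 1)) (hΦ (k + 1))
    (range_subset_iff.2 fun i => hrange (Nat.le_add_left (k + 1) i) (mem_range_self _))
  rw [hDι]
  exact hcomp k _ ι (hQ k _ (hΦ k)) hι

section PointwiseCauchy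

variable {ι E : Type*} [PseudoMetricSpace E] {u : ℕ → ι → E} {ε : ℝ}

def PointwiseCauchyUpTo (u : ℕ → ι → E) (ε : ℝ) : Prop :=
  ∀ t, ∃ N, ∀ i ≥ N, ∀ j ≥ N, dist (u i t) (u j t) < ε

theorem PointwiseCauchyUpTo.comp_strictMono (h : PointwiseCauchyUpTo u ε) {ψ : ℕ → ℕ}
    (hψ : StrictMono ψ) : PointwiseCauchyUpTo (u ∘ ψ) ε := fun t => by
  obtain ⟨N, hN⟩ := h t
  exact ⟨N, fun i hi j hj => hN _ (hi.trans hψ.le_apply) _ (hj.trans hψ.le_apply)⟩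

theorem PointwiseCauchyUpTo.of_add (n : ℕ) (h : PointwiseCauchyUpTo (fun i => u (i + n)) ε) :
    PointwiseCauchyUpTo u ε := fun t => by
  obtain ⟨N, hN⟩ := h t
  refine ⟨N + n, fun i hi j hj => ?_⟩
  have hi' : i - n + n = i := Nat.sub_add_cancel (le_of_add_le_right hi)
  have hj' : j - n + n = j := Nat.sub_add_cancel (le_of_add_le_right hj)
  simpa only [hi', hj'] using hN (i - n) (by omega) (j - n) (by omega)

theorem cauchySeq_of_forall_pointwiseCauchyUpTo
    (h : ∀ k : ℕ, PointwiseCauchyUpTo u (1 / (k + 1))) (t : ι) : CauchySeq fun n => u n t :=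
  Metric.cauchySeq_iff.2 fun δ hδ => by
    obtain ⟨k, hk⟩ := exists_nat_one_div_lt hδ
    obtain ⟨N, hN⟩ := h k t
    exact ⟨N, fun i hi j hj => (hN i hi j hj).trans hk⟩

end PointwiseCauchy

namespace NashWilliams

variable (P : List ℕ → Prop)

-- The accept/reject relations of the Galvin–Prikry proof, except that `s` need not lie below
-- the terms of `g`.
def Accepts (g : ℕ → ℕ) (s : List ℕ) : Prop :=
  ∀ h : ℕ → ℕ, StrictMono h → ∃ r, P (s ++ (List.range r).map (g ∘ h))

def Rejects (g : ℕ → ℕ) (s : List ℕ) : Prop :=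
  ∀ h : ℕ → ℕ, StrictMono h → ¬Accepts P (g ∘ h) s

variable {P} {g τ : ℕ → ℕ} {s : List ℕ}

theorem Accepts.comp (ha : Accepts P g s) (hτ : StrictMono τ) : Accepts P (g ∘ τ) s :=
  fun h hh => ha (τ ∘ h) (hτ.comp hh)

theorem Rejects.comp (hr : Rejects P g s) (hτ : StrictMono τ) : Rejects P (g ∘ τ) s :=
  fun h hh => hr (τ ∘ h) (hτ.comp hh)

theorem not_rejects_of_apply (hs : P s) : ¬Rejects P g s :=
  fun hr => hr id strictMono_id fun _ _ => ⟨0, by simpa using hs⟩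

theorem Rejects.exists_rejects_append_singleton (hs : Rejects P g s) :
    ∃ h : ℕ → ℕ, StrictMono h ∧ ∀ n, Rejects P (g ∘ h) (s ++ [g (h n)]) := by
  by_contra! H
  have hstep : ∀ u : ℕ → ℕ, StrictMono u → ∃ (n : ℕ) (v : ℕ → ℕ),
      StrictMono v ∧ n < v 0 ∧ Accepts P (g ∘ u ∘ v) (s ++ [g (u n)]) := by
    intro u hu
    obtain ⟨n, hn⟩ := H u hu
    simp only [Rejects, not_forall, not_not] at hn
    obtain ⟨v, hv, hacc⟩ := hn
    have hshift : StrictMono fun m => n + 1 + m := strictMono_id.const_add _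
    exact ⟨n, v ∘ fun m => n + 1 + m, hv.comp hshift,
      (Nat.lt_succ_self n).trans_le (hv.le_apply (x := n + 1)), hacc.comp hshift⟩
  choose! n v hv hnv hacc using hstep
  let U : ℕ → ℕ → ℕ := fun k => (fun u => u ∘ v u)^[k] id
  have hUsucc : ∀ k, U (k + 1) = U k ∘ v (U k) := fun k => Function.iterate_succ_apply' _ _ _
  have hU : ∀ k, StrictMono (U k) := fun k => by
    induction k with
    | zero => exact strictMono_id
    | succ k ih => rw [hUsucc]; exact ih.comp (hv _ ih)
  have hrange := antitone_range_of_forall_exists_comp fun k => ⟨_, hUsucc k⟩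
  let w : ℕ → ℕ := fun k => U k (n (U k))
  have hw : StrictMono w := strictMono_nat_of_lt_succ fun k => by
    simp only [w, hUsucc k]
    exact hU k ((hnv _ (hU k)).trans_le ((hv _ (hU k)).monotone (Nat.zero_le _)))
  -- `w` accepts `s`: split a subsequence of `w` into its first term `w k`, after which it runs
  -- inside `U (k + 1) = U k ∘ v (U k)`, which accepts `s ++ [g (w k)]`
  refine hs w hw fun h hh => ?_
  set k := h 0
  obtain ⟨ι, hι, hwι⟩ := exists_strictMono_eq_comp_of_range_subset
    (b := fun i => w (h (i + 1))) (c := U k ∘ v (U k))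
    (hw.comp (hh.comp (strictMono_id.add_const 1))) ((hU k).comp (hv _ (hU k)))
    (range_subset_iff.2 fun i => hUsucc k ▸ hrange (hh (Nat.succ_pos i)) (mem_range_self _))
  obtain ⟨r, hr⟩ := hacc (U k) (hU k) ι hι
  refine ⟨r + 1, ?_⟩
  convert hr using 1
  rw [List.range_succ_eq_map, List.map_cons, List.map_map, ← List.singleton_append,
    ← List.append_assoc]
  congr 2
  exact funext fun i => congrArg g (congrFun hwι i)

theorem exists_rejects_append_singleton_of_forall_mem (S : List (List ℕ))
    (hS : ∀ s ∈ S, Rejects P g s) :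
    ∃ h : ℕ → ℕ, StrictMono h ∧
      ∀ s ∈ S, ∀ n, Rejects P (g ∘ h) (s ++ [g (h n)]) := by
  induction S generalizing g with
  | nil => exact ⟨id, strictMono_id, by simp⟩
  | cons s S ih =>
    obtain ⟨h₁, hh₁, hrej₁⟩ := (hS s List.mem_cons_self).exists_rejects_append_singleton
    obtain ⟨h₂, hh₂, hrej₂⟩ :=
      ih (g := g ∘ h₁) fun s' hs' => (hS s' (List.mem_cons_of_mem _ hs')).comp hh₁
    refine ⟨h₁ ∘ h₂, hh₁.comp hh₂, fun s' hs' n => ?_⟩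
    rcases List.mem_cons.1 hs' with rfl | hs'
    · exact (hrej₁ (h₂ n)).comp hh₂
    · exact hrej₂ s' hs' n

variable (P) in
def RejectsSublists (g : ℕ → ℕ) (L : List ℕ) : Prop :=
  StrictMono g ∧ (∀ s, s.Sublist L → Rejects P g s) ∧ ∀ y ∈ L, ∀ m, y < g m

theorem RejectsSublists.exists_append_singleton {L : List ℕ} (hgL : RejectsSublists P g L) :
    ∃ (a : ℕ) (g' : ℕ → ℕ), RejectsSublists P g' (L ++ [a]) ∧ ∀ y ∈ L, y < a := by
  obtain ⟨hg, hL, hlt⟩ := hgL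
  obtain ⟨h, hh, hrej⟩ := exists_rejects_append_singleton_of_forall_mem L.sublists
    fun s hs => hL s (List.mem_sublists.1 hs)
  have hsucc : StrictMono fun m => m + 1 := strictMono_id.add_const 1
  refine ⟨g (h 0), g ∘ h ∘ fun m => m + 1, ⟨hg.comp (hh.comp hsucc), fun s hs => ?_,
    fun y hy m => ?_⟩, fun y hy => hlt y hy (h 0)⟩
  · obtain ⟨s₁, s₂, rfl, hs₁, hs₂⟩ := List.sublist_append_iff.1 hs
    rcases List.sublist_singleton.1 hs₂ with rfl | rfl
    · rw [List.append_nil]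
      exact (hL s₁ hs₁).comp (hh.comp hsucc)
    · exact (hrej s₁ (List.mem_sublists.2 hs₁) 0).comp hsucc
  · rcases List.mem_append.1 hy with hy | hy
    · exact hlt y hy _
    · rw [List.mem_singleton.1 hy]
      exact hg (hh (Nat.succ_pos m))

theorem Rejects.exists_strictMono_forall_not (hg : StrictMono g) (h : Rejects P g []) :
    ∃ A : ℕ → ℕ, StrictMono A ∧
      ∀ ν : ℕ → ℕ, StrictMono ν → ∀ r, ¬P ((List.range r).map (A ∘ ν)) := by
  choose! a g' hg' ha using fun x : (ℕ → ℕ) × List ℕ =>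
    RejectsSublists.exists_append_singleton (P := P) (g := x.1) (L := x.2)
  let X : ℕ → (ℕ → ℕ) × List ℕ := fun k => (fun x => (g' x, x.2 ++ [a x]))^[k] (g, [])
  have hXsucc : ∀ k, X (k + 1) = (g' (X k), (X k).2 ++ [a (X k)]) :=
    fun k => Function.iterate_succ_apply' _ _ _
  have hX : ∀ k, RejectsSublists P (X k).1 (X k).2 := fun k => by
    induction k with
    | zero => exact ⟨hg, fun s hs => List.sublist_nil.1 hs ▸ h, by simp [X]⟩
    | succ k ih => rw [hXsucc]; exact hg' _ ih
  let A : ℕ → ℕ := fun k => a (X k)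
  have hXA : ∀ k, (X k).2 = (List.range k).map A := fun k => by
    induction k with
    | zero => rfl
    | succ k ih => rw [hXsucc, ih, List.range_succ, List.map_append, List.map_singleton]
  refine ⟨A, strictMono_nat_of_lt_succ fun k => ?_, fun ν hν r hr => ?_⟩
  · refine ha _ (hX (k + 1)) (A k) ?_
    rw [hXA]
    exact List.mem_map_of_mem List.self_mem_range_succ
  · refine not_rejects_of_apply hr ((hX (ν r)).2.1 _ ?_)
    rw [hXA, ← List.map_map]
    exact (List.map_range_sublist_range hν r).map A

theorem exists_strictMono_accepts_nil_or_forall_not (P : List ℕ → Prop) :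
    ∃ M : ℕ → ℕ, StrictMono M ∧
      (Accepts P M [] ∨
        ∀ ν : ℕ → ℕ, StrictMono ν → ∀ r, ¬P ((List.range r).map (M ∘ ν))) := by
  by_cases h : Rejects P id []
  · obtain ⟨A, hA, hnot⟩ := h.exists_strictMono_forall_not strictMono_id
    exact ⟨A, hA, .inr hnot⟩
  · simp only [Rejects, not_forall, not_not] at h
    obtain ⟨M, hM, hacc⟩ := h
    exact ⟨M, hM, .inl hacc⟩

end NashWilliams

section ClosePairs

variable {K E : Type*} [TopologicalSpace K] [PseudoMetricSpace E] {F : ℕ → C(K, E)} {ε : ℝ}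

def ClosePairCover (F : ℕ → C(K, E)) (ε : ℝ) (s : List ℕ) : Prop :=
  ∀ t, ∃ i a b, s[2 * i]? = some a ∧ s[2 * i + 1]? = some b ∧ dist (F a t) (F b t) < ε

theorem exists_closePairCover_map_range [CompactSpace K] {q : ℕ → ℕ}
    (h : ∀ t, ∃ n, dist (F (q (2 * n)) t) (F (q (2 * n + 1)) t) < ε) :
    ∃ r, ClosePairCover F ε ((List.range r).map q) := by
  let U : ℕ → Set K := fun n => {t | dist (F (q (2 * n)) t) (F (q (2 * n + 1)) t) < ε}
  have hU : ∀ n, IsOpen (U n) := fun n => isOpen_lt (by fun_prop) continuous_const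
  obtain ⟨N, hN⟩ := isCompact_univ.elim_directed_cover (accumulate U)
    (fun n => isOpen_biUnion fun m _ => hU m)
    (by rw [iUnion_accumulate]; exact fun t _ => mem_iUnion.2 (h t))
    monotone_accumulate.directed_le
  refine ⟨2 * N + 2, fun t => ?_⟩
  obtain ⟨n, hnN, hn⟩ := mem_accumulate.1 (hN (mem_univ t))
  exact ⟨n, _, _, by simp [show 2 * n < 2 * N + 2 by omega],
    by simp [show 2 * n + 1 < 2 * N + 2 by omega], hn⟩

theorem exists_strictMono_pointwiseCauchyUpTo [CompactSpace K] (hε : 0 < ε)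
    (hclose : ∀ φ : ℕ → ℕ, StrictMono φ → ∃ ν : ℕ → ℕ, StrictMono ν ∧
      ∀ t, ∃ n, dist (F (φ (ν (2 * n))) t) (F (φ (ν (2 * n + 1))) t) < ε) :
    ∃ M : ℕ → ℕ, StrictMono M ∧ PointwiseCauchyUpTo (fun n => ⇑(F (M n))) ε := by
  obtain ⟨M, hM, hacc | hnot⟩ :=
    NashWilliams.exists_strictMono_accepts_nil_or_forall_not (ClosePairCover F ε)
  · refine ⟨M, hM, fun t => ?_⟩
    by_contra! hfar
    obtain ⟨q, hq, hqfar⟩ := exists_strictMono_forall_pairs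
      (R := fun i j => ε ≤ dist (F (M i) t) (F (M j) t)) fun N => by
        obtain ⟨i, hi, j, hj, hij⟩ := hfar N
        rcases lt_trichotomy i j with hlt | rfl | hgt
        · exact ⟨i, hi, j, hlt, hij⟩
        · exact absurd hij (by simpa using hε)
        · exact ⟨j, hj, i, hgt, dist_comm (F (M i) t) _ ▸ hij⟩
    obtain ⟨r, hr⟩ := hacc q hq
    obtain ⟨n, a, b, ha, hb, hab⟩ := hr t
    simp only [List.nil_append, List.getElem?_map, Option.map_eq_some_iff,
      List.getElem?_eq_some_iff, List.getElem_range] at ha hb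
    obtain ⟨_, ⟨_, rfl⟩, rfl⟩ := ha
    obtain ⟨_, ⟨_, rfl⟩, rfl⟩ := hb
    exact (hqfar n).not_gt hab
  · obtain ⟨ν, hν, hcl⟩ := hclose M hM
    obtain ⟨r, hr⟩ := exists_closePairCover_map_range (q := M ∘ ν) hcl
    exact absurd hr (hnot ν hν r)

end ClosePairs

theorem exists_strictMono_forall_exists_dist_lt {K E : Type*} [TopologicalSpace K]
    [SeminormedAddCommGroup E] {f : ℕ → C(K, E)} {ε : ℝ} {φ : ℕ → ℕ}
    (hφ : StrictMono φ)
    (hL : ∃ L : Set ℕ, L ⊆ range φ ∧ L.Infinite ∧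
      ¬ ∃ t : K, ∀ n : ℕ,
        ε ≤ ‖f (Nat.nth (· ∈ L) (2 * n)) t - f (Nat.nth (· ∈ L) (2 * n + 1)) t‖) :
    ∃ ν : ℕ → ℕ, StrictMono ν ∧
      ∀ t, ∃ n, dist (f (φ (ν (2 * n))) t) (f (φ (ν (2 * n + 1))) t) < ε := by
  obtain ⟨L, hLφ, hL, hnot⟩ := hL
  obtain ⟨ν, hν, hνL⟩ := exists_strictMono_eq_comp_of_range_subset
    (Nat.nth_strictMono (p := (· ∈ L)) hL) hφ
    ((range_subset_iff.2 (Nat.nth_mem_of_infinite hL)).trans hLφ)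
  push Not at hnot
  refine ⟨ν, hν, fun t => ?_⟩
  simpa only [hνL, Function.comp_apply, dist_eq_norm] using hnot t

theorem weak_cauchy_subsequence_of_proper_general (K : Type*) [MetricSpace K] [CompactSpace K]
    (f : ℕ → C(K, ℂ))
    (hproper : ∀ P : Set ℕ, P.Infinite → ∀ ε : ℝ, 0 < ε →
      ∃ L : Set ℕ, L ⊆ P ∧ L.Infinite ∧
        ¬ ∃ t : K, ∀ n : ℕ,
          ε ≤ ‖f (Nat.nth (· ∈ L) (2 * n)) t - f (Nat.nth (· ∈ L) (2 * n + 1)) t‖) :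
    ∃ m : ℕ → ℕ, StrictMono m ∧
      ∀ t : K, ∃ l : ℂ, Filter.Tendsto (fun n => f (m n) t) Filter.atTop (nhds l) := by
  have hsubseq (k : ℕ) (φ : ℕ → ℕ) (hφ : StrictMono φ) :
      ∃ ψ : ℕ → ℕ, StrictMono ψ ∧
        PointwiseCauchyUpTo (fun n => ⇑(f ((φ ∘ ψ) n))) (1 / (k + 1)) :=
    exists_strictMono_pointwiseCauchyUpTo (F := f ∘ φ) Nat.one_div_pos_of_nat fun ψ hψ =>
      exists_strictMono_forall_exists_dist_lt (f := f) (φ := φ ∘ ψ) (hφ.comp hψ)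
        (hproper _ (infinite_range_of_injective (hφ.comp hψ).injective) _ Nat.one_div_pos_of_nat)
  obtain ⟨m, hm, hcauchy⟩ := exists_strictMono_forall_of_hereditary
    (Q := fun k φ => PointwiseCauchyUpTo (fun n => ⇑(f (φ n))) (1 / (k + 1))) hsubseq
    (fun _ _ _ h hψ => h.comp_strictMono hψ) fun _ _ n h => h.of_add n
  exact ⟨m, hm, fun t =>
    cauchySeq_tendsto_of_complete (cauchySeq_of_forall_pointwiseCauchyUpTo hcauchy t)⟩

/-- Remark: if D(P, F_ε) is a proper subset of [P] for all infinite P ⊆ ℕ and all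
ε > 0, then (f_n) admits a weak Cauchy subsequence.  Here F_ε = {(z₁, z₂) : |z₁ − z₂| ≥ ε}
and D(P, F_ε) consists of the infinite L ⊆ P whose increasing enumeration (l_n)
admits some t ∈ K with |f_{l_{2n-1}}(t) − f_{l_{2n}}(t)| ≥ ε for all n. -/
theorem weak_cauchy_subsequence_of_proper (K : Type*) [MetricSpace K] [CompactSpace K]
    (f : ℕ → C(K, ℂ)) (hf : ∃ C : ℝ, ∀ n, ‖f n‖ ≤ C)
    (hproper : ∀ P : Set ℕ, P.Infinite → ∀ ε : ℝ, 0 < ε →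
      ∃ L : Set ℕ, L ⊆ P ∧ L.Infinite ∧
        ¬ ∃ t : K, ∀ n : ℕ,
          ε ≤ ‖f (Nat.nth (· ∈ L) (2 * n)) t - f (Nat.nth (· ∈ L) (2 * n + 1)) t‖) :
    ∃ m : ℕ → ℕ, StrictMono m ∧
      ∀ t : K, ∃ l : ℂ, Filter.Tendsto (fun n => f (m n) t) Filter.atTop (nhds l) :=
  weak_cauchy_subsequence_of_proper_general K f hproper
end

section
/- Let K be a compact metric space, (f_n) a bounded sequence in C(K, ℂ), and ε > 0. Assume that every infinite subset of ℕ belongs to D(ℕ, F_ε), i.e., for every infinite L = (l_n) ⊆ ℕ there exists t ∈ K with |f_{l_{2n−1}}(t) − f_{l_{2n}}(t)| ≥ ε for all n. Let δ₁ > 0 and let A be an integer multiple of δ₁ with A > δ₁ and ‖f_n‖_∞ ≤ A for all n. Then there exist an infinite set M ⊆ ℕ and two closed squares Δ₁, Δ₂ ⊆ [−A, A]² (identified with subsets of ℂ) with sides parallel to the axes and of side length δ₁ such that: (1) (Δ₁ × Δ₂) ∩ F_ε ≠ ∅; and (2) for every pair of disjoint subsets J₁, J₂ of M there exists t ∈ K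 with f_n(t) ∈ Δ_s for all n ∈ J_s and s ∈ {1, 2}. -/
/-!
The squares of side `δ₁` of the grid on `[-A, A]²` are finitely many, and for each pair
`(Δ₁, Δ₂)` of them the set `D(ℕ, (Δ₁ × Δ₂) ∩ F_ε)` is closed in `ℕ → ℕ`, because `K` is compact.
By the hypothesis and the pigeonhole principle, every infinite set has an infinite subset in one
of these finitely many closed sets. The Galvin–Prikry theorem for open sets (Nash-Williams'
accept/reject argument), applied to their complements one at a time, then gives an infinite `B`
all of whose infinite subsets lie in a single `D(ℕ, (Δ₁ × Δ₂) ∩ F_ε)`. Let `M` consist of every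
third term of `B`: disjoint `J₁, J₂ ⊆ M` can be placed at the first, respectively second, entries
of the consecutive pairs of a subsequence of `B`, and that subsequence provides the point `t`.
-/

/-- The closed square in ℂ with lower-left corner `a + b*I` and side length `δ`,
sides parallel to the axes. -/
def closedSquare (a b δ : ℝ) : Set ℂ :=
  {z : ℂ | a ≤ z.re ∧ z.re ≤ a + δ ∧ b ≤ z.im ∧ z.im ≤ b + δ}

open Set

/-- Infinite subsets of `ℕ` are handled through their increasing enumerations: for strictly
increasing `A`, `IsSubseq B A` says that `B` enumerates an infinite subset of the range of `A`. -/
def IsSubseq (B A : ℕ → ℕ) : Prop := ∃ g : ℕ → ℕ, StrictMono g ∧ B = A ∘ g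

namespace IsSubseq

variable {A B C : ℕ → ℕ}

theorem refl (A : ℕ → ℕ) : IsSubseq A A := ⟨id, strictMono_id, rfl⟩

theorem trans (h₁ : IsSubseq C B) (h₂ : IsSubseq B A) : IsSubseq C A := by
  obtain ⟨g, hg, rfl⟩ := h₁
  obtain ⟨g', hg', rfl⟩ := h₂
  exact ⟨g' ∘ g, hg'.comp hg, rfl⟩

theorem drop (k : ℕ) (A : ℕ → ℕ) : IsSubseq (Stream'.drop k A) A :=
  ⟨(· + k), strictMono_id.add_const k, rfl⟩

theorem strictMono (h : IsSubseq B A) (hA : StrictMono A) : StrictMono B := by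
  obtain ⟨g, hg, rfl⟩ := h
  exact hA.comp hg

theorem le_apply (h : IsSubseq B A) (hA : StrictMono A) (n : ℕ) : A n ≤ B n := by
  obtain ⟨g, hg, rfl⟩ := h
  exact hA.monotone hg.le_apply

theorem range_subset (h : IsSubseq B A) : range B ⊆ range A := by
  obtain ⟨g, -, rfl⟩ := h
  exact range_comp_subset_range g A

theorem of_range_subset (hA : StrictMono A) (hB : StrictMono B) (h : range B ⊆ range A) :
    IsSubseq B A := by
  choose g hg using fun n => h ⟨n, rfl⟩
  refine ⟨g, fun m n hmn => hA.lt_iff_lt.mp ?_, funext fun n => (hg n).symm⟩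
  rw [hg, hg]
  exact hB hmn

end IsSubseq

/-- Fusion: `C` is the diagonal of a decreasing chain of subsequences produced by `step`, each
term of `C` being chosen in front of the next sequence of the chain. -/
theorem exists_isSubseq_forall_take_drop {P : List ℕ → (ℕ → ℕ) → Prop}
    (hP : ∀ t B B', P t B → IsSubseq B' B → P t B') {A : ℕ → ℕ} (hA : StrictMono A)
    (h₀ : P [] A)
    (step : ∀ t B, IsSubseq B A → P t B →
      ∃ x ∈ range B, ∃ B', IsSubseq B' B ∧ x < B' 0 ∧ P (t ++ [x]) B') :
    ∃ C, IsSubseq C A ∧ ∀ k, P (Stream'.take k C) (Stream'.drop k C) := by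
  choose! x hx B' hB' hxB' hPB' using step
  let state : ℕ → List ℕ × (ℕ → ℕ) := fun k =>
    Nat.rec ([], A) (fun _ q => (q.1 ++ [x q.1 q.2], B' q.1 q.2)) k
  have hstate : ∀ k, IsSubseq (state k).2 A ∧ P (state k).1 (state k).2 := by
    intro k
    induction k with
    | zero => exact ⟨IsSubseq.refl A, h₀⟩
    | succ k ih => exact ⟨(hB' _ _ ih.1 ih.2).trans ih.1, hPB' _ _ ih.1 ih.2⟩
  let C : ℕ → ℕ := fun k => x (state k).1 (state k).2
  have hC_mem : ∀ k, C k ∈ range (state k).2 := fun k => hx _ _ (hstate k).1 (hstate k).2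
  have hrange : ∀ k i, range (state (k + i)).2 ⊆ range (state k).2 := by
    intro k i
    induction i with
    | zero => rfl
    | succ i ih =>
      exact ((hB' _ _ (hstate (k + i)).1 (hstate (k + i)).2).range_subset).trans ih
  have hC : StrictMono C := by
    refine strictMono_nat_of_lt_succ fun k => ?_
    obtain ⟨j, hj⟩ := hC_mem (k + 1)
    calc C k < (state (k + 1)).2 0 := hxB' _ _ (hstate k).1 (hstate k).2
      _ ≤ (state (k + 1)).2 j := ((hstate (k + 1)).1.strictMono hA).monotone j.zero_le
      _ = C (k + 1) := hj
  have hdrop : ∀ k, IsSubseq (Stream'.drop k C) (state k).2 := by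
    refine fun k => .of_range_subset ((hstate k).1.strictMono hA)
      (hC.comp (strictMono_id.add_const k)) ?_
    rintro _ ⟨i, rfl⟩
    exact hrange k i (by rw [add_comm k i]; exact hC_mem (i + k))
  have htake : ∀ k, (state k).1 = Stream'.take k C := by
    intro k
    induction k with
    | zero => rfl
    | succ k ih => rw [Stream'.take_succ' (s := C), ← ih]; rfl
  refine ⟨C, hdrop 0, fun k => ?_⟩
  rw [← htake]
  exact hP _ _ _ (hstate k).2 (hdrop k)

section GalvinPrikry

variable {U : Set (ℕ → ℕ)} {s : List ℕ} {A B : ℕ → ℕ}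

def Accepts (U : Set (ℕ → ℕ)) (s : List ℕ) (A : ℕ → ℕ) : Prop :=
  ∀ B, IsSubseq B A → s ++ₛ B ∈ U

def Rejects (U : Set (ℕ → ℕ)) (s : List ℕ) (A : ℕ → ℕ) : Prop :=
  ∀ B, IsSubseq B A → ¬Accepts U s B

theorem Accepts.mono (h : Accepts U s A) (hBA : IsSubseq B A) : Accepts U s B :=
  fun C hC => h C (hC.trans hBA)

theorem Rejects.mono (h : Rejects U s A) (hBA : IsSubseq B A) : Rejects U s B :=
  fun C hC => h C (hC.trans hBA)

theorem Rejects.exists_forall_rejects_append (hA : StrictMono A) (h : Rejects U s A) :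
    ∃ B, IsSubseq B A ∧ ∀ j, Rejects U (s ++ [B j]) B := by
  by_contra! hcon
  have step : ∀ t B, IsSubseq B A → (∀ x ∈ t, Accepts U (s ++ [x]) B) →
      ∃ x ∈ range B, ∃ B', IsSubseq B' B ∧ x < B' 0 ∧ ∀ y ∈ t ++ [x], Accepts U (s ++ [y]) B' := by
    intro t B hBA hB
    obtain ⟨j, hj⟩ := hcon B hBA
    simp only [Rejects, not_forall, not_not] at hj
    obtain ⟨D, hDB, hD⟩ := hj
    have hB' : StrictMono B := hBA.strictMono hA
    refine ⟨B j, mem_range_self j, Stream'.drop (j + 1) D, (IsSubseq.drop _ _).trans hDB, ?_, ?_⟩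
    · calc B j < B (0 + (j + 1)) := hB' (by omega)
        _ ≤ D (0 + (j + 1)) := hDB.le_apply hB' _
    · intro y hy
      rcases List.mem_append.mp hy with hy | hy
      · exact (hB y hy).mono ((IsSubseq.drop _ _).trans hDB)
      · rw [List.mem_singleton.mp hy]
        exact hD.mono (IsSubseq.drop _ _)
  obtain ⟨C, hCA, hC⟩ := exists_isSubseq_forall_take_drop
    (fun t B B' hB hB' x hx => (hB x hx).mono hB') hA (by simp) step
  refine h C hCA fun D hDC => ?_
  obtain ⟨g, hg, rfl⟩ := hDC
  have hC' : StrictMono C := hCA.strictMono hA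
  have hsplit : s ++ₛ (C ∘ g) = (s ++ [C (g 0)]) ++ₛ Stream'.tail (C ∘ g) := by
    rw [Stream'.append_append_stream]
    exact congrArg (s ++ₛ ·) (Stream'.append_stream_head_tail (C ∘ g)).symm
  have htail : IsSubseq (Stream'.tail (C ∘ g)) (Stream'.drop (g 0 + 1) C) := by
    refine .of_range_subset (hC'.comp (strictMono_id.add_const _))
      (hC'.comp (hg.comp (strictMono_id.add_const 1))) ?_
    rintro _ ⟨i, rfl⟩
    have := hg (show 0 < i + 1 by omega)
    exact ⟨g (i + 1) - (g 0 + 1), congrArg C (by omega)⟩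
  rw [hsplit]
  refine hC (g 0 + 1) _ ?_ _ htail
  rw [Stream'.take_succ' (s := C)]
  exact List.mem_append_right _ (List.mem_singleton_self _)

theorem exists_isSubseq_forall_rejects_append (hA : StrictMono A) (S : List (List ℕ))
    (h : ∀ s ∈ S, Rejects U s A) :
    ∃ B, IsSubseq B A ∧ ∀ s ∈ S, Rejects U s B ∧ ∀ j, Rejects U (s ++ [B j]) B := by
  induction S generalizing A with
  | nil => exact ⟨A, .refl A, by simp⟩
  | cons s S ih =>
    obtain ⟨B₁, hB₁A, hB₁⟩ := (h s List.mem_cons_self).exists_forall_rejects_append hA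
    obtain ⟨B, hBB₁, hB⟩ := ih (hB₁A.strictMono hA)
      fun s' hs' => (h s' (List.mem_cons_of_mem s hs')).mono hB₁A
    refine ⟨B, hBB₁.trans hB₁A, fun s' hs' => ?_⟩
    rcases List.mem_cons.mp hs' with rfl | hs'
    · refine ⟨(h s' List.mem_cons_self).mono (hBB₁.trans hB₁A), fun j => ?_⟩
      obtain ⟨j', hj'⟩ := hBB₁.range_subset (mem_range_self j)
      exact hj' ▸ (hB₁ j').mono hBB₁
    · exact hB s' hs'

theorem Rejects.exists_isSubseq_forall_sublist (hA : StrictMono A) (h : Rejects U [] A) :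
    ∃ C, IsSubseq C A ∧
      ∀ k (u : List ℕ), u.Sublist (Stream'.take k C) → Rejects U u (Stream'.drop k C) := by
  have step : ∀ t B, IsSubseq B A → (∀ u : List ℕ, u.Sublist t → Rejects U u B) →
      ∃ x ∈ range B, ∃ B', IsSubseq B' B ∧ x < B' 0 ∧
        ∀ u : List ℕ, u.Sublist (t ++ [x]) → Rejects U u B' := by
    intro t B hBA hB
    obtain ⟨B₁, hB₁B, hB₁⟩ := exists_isSubseq_forall_rejects_append (hBA.strictMono hA)
      t.sublists fun u hu => hB u (List.mem_sublists.mp hu)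
    have htail : IsSubseq (Stream'.drop 1 B₁) B₁ := IsSubseq.drop 1 B₁
    refine ⟨B₁ 0, hB₁B.range_subset (mem_range_self 0), _, htail.trans hB₁B,
      (hB₁B.trans hBA).strictMono hA zero_lt_one, fun u hu => ?_⟩
    obtain ⟨u₁, u₂, rfl, hu₁, hu₂⟩ := List.sublist_append_iff.mp hu
    have hu₁' := hB₁ u₁ (List.mem_sublists.mpr hu₁)
    rcases List.sublist_singleton.mp hu₂ with rfl | rfl
    · simpa using hu₁'.1.mono htail
    · exact (hu₁'.2 0).mono htail
  refine exists_isSubseq_forall_take_drop (fun t B B' hB hB' u hu => (hB u hu).mono hB') hA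
    (fun u hu => ?_) step
  rw [List.sublist_nil.mp hu]
  exact h

open List in
theorem Stream'.take_sublist_take_of_strictMono {g : ℕ → ℕ} (hg : StrictMono g) (C : ℕ → ℕ)
    (m : ℕ) : (Stream'.take m (C ∘ g)).Sublist (Stream'.take (g m) C) := by
  induction m with
  | zero => exact List.nil_sublist _
  | succ m ih =>
    calc Stream'.take (m + 1) (C ∘ g) = Stream'.take m (C ∘ g) ++ [C (g m)] :=
          Stream'.take_succ' (s := C ∘ g) m
      _ <+ Stream'.take (g m) C ++ [C (g m)] := ih.append (.refl _)
      _ = Stream'.take (g m + 1) C := (Stream'.take_succ' (s := C) (g m)).symm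
      _ <+ Stream'.take (g (m + 1)) C :=
          (Stream'.take_prefix_take_left _ _ C (hg (Nat.lt_succ_self m))).sublist

theorem exists_forall_eq_imp_mem_of_isOpen (hU : IsOpen U) {e : ℕ → ℕ} (he : e ∈ U) :
    ∃ m, ∀ e' : ℕ → ℕ, (∀ i < m, e' i = e i) → e' ∈ U := by
  obtain ⟨_, ⟨x, m, rfl⟩, hex, hsub⟩ :=
    (PiNat.isTopologicalBasis_cylinders fun _ => ℕ).exists_subset_of_mem_open he hU
  refine ⟨m, fun e' he' => hsub ?_⟩
  rw [← PiNat.mem_cylinder_iff_eq.mp hex]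
  exact PiNat.mem_cylinder_iff.mpr he'

theorem exists_isSubseq_forall_or_forall_not_of_isOpen (hU : IsOpen U) (hA : StrictMono A) :
    ∃ B, IsSubseq B A ∧ ((∀ C, IsSubseq C B → C ∈ U) ∨ (∀ C, IsSubseq C B → C ∉ U)) := by
  by_cases hacc : ∃ B, IsSubseq B A ∧ Accepts U [] B
  · obtain ⟨B, hBA, hB⟩ := hacc
    exact ⟨B, hBA, .inl hB⟩
  have hrej : Rejects U [] A := fun B hBA hB => hacc ⟨B, hBA, hB⟩
  obtain ⟨C, hCA, hC⟩ := hrej.exists_isSubseq_forall_sublist hA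
  have hC' : StrictMono C := hCA.strictMono hA
  refine ⟨C, hCA, .inr ?_⟩
  -- Membership of `C ∘ g` in `U` is decided by its first `m` terms, so the rest of `C ∘ g` accepts
  -- them; but `C` rejects every finite set of its terms in front of the corresponding tail.
  rintro _ ⟨g, hg, rfl⟩ hgU
  obtain ⟨m, hm⟩ := exists_forall_eq_imp_mem_of_isOpen hU hgU
  have hdrop : IsSubseq (Stream'.drop m (C ∘ g)) (Stream'.drop (g m) C) := by
    refine .of_range_subset (hC'.comp (strictMono_id.add_const _))
      (hC'.comp (hg.comp (strictMono_id.add_const m))) ?_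
    rintro _ ⟨i, rfl⟩
    have := hg.monotone (Nat.le_add_left m i)
    exact ⟨g (i + m) - g m, congrArg C (by omega)⟩
  refine hC (g m) _ (Stream'.take_sublist_take_of_strictMono hg C m) _ hdrop fun D _ => hm _ ?_
  intro i hi
  have hi' : i < (Stream'.take m (C ∘ g)).length := hi.trans_eq (Stream'.length_take m (C ∘ g)).symm
  exact (Stream'.get_append_left _ _ _ hi').trans (Stream'.take_get _ _ _ hi')

end GalvinPrikry

theorem exists_isSubseq_forall_mem_of_isClosed {ι : Type*} (s : Finset ι)
    {F : ι → Set (ℕ → ℕ)} (hF : ∀ i ∈ s, IsClosed (F i)) {A : ℕ → ℕ} (hA : StrictMono A)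
    (hcover : ∀ B, IsSubseq B A → ∃ i ∈ s, ∃ C, IsSubseq C B ∧ C ∈ F i) :
    ∃ i ∈ s, ∃ B, IsSubseq B A ∧ ∀ C, IsSubseq C B → C ∈ F i := by
  classical
  induction s using Finset.induction_on generalizing A with
  | empty =>
    obtain ⟨i, hi, -⟩ := hcover A (.refl A)
    exact absurd hi (Finset.notMem_empty i)
  | insert i s _ ih =>
    obtain ⟨B₁, hB₁A, hB₁ | hB₁⟩ := exists_isSubseq_forall_or_forall_not_of_isOpen
      (hF i (Finset.mem_insert_self i s)).isOpen_compl hA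
    · have hcover' : ∀ B, IsSubseq B B₁ → ∃ j ∈ s, ∃ C, IsSubseq C B ∧ C ∈ F j := by
        intro B hBB₁
        obtain ⟨j, hj, C, hCB, hC⟩ := hcover B (hBB₁.trans hB₁A)
        rcases Finset.mem_insert.mp hj with rfl | hj
        · exact absurd hC (hB₁ C (hCB.trans hBB₁))
        · exact ⟨j, hj, C, hCB, hC⟩
      obtain ⟨j, hj, B, hBB₁, hB⟩ :=
        ih (fun j hj => hF j (Finset.mem_insert_of_mem hj)) (hB₁A.strictMono hA) hcover'
      exact ⟨j, Finset.mem_insert_of_mem hj, B, hBB₁.trans hB₁A, hB⟩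
    · exact ⟨i, Finset.mem_insert_self i s, B₁, hB₁A, fun C hC => not_not.mp (hB₁ C hC)⟩

section PairingSet

variable {K X : Type*} [TopologicalSpace K] [TopologicalSpace X]

/-- The set `D(ℕ, E)` of the paper, read on increasing enumerations indexed from `0`. -/
def pairingSet (f : ℕ → C(K, X)) (E : Set (X × X)) : Set (ℕ → ℕ) :=
  {e | ∃ t, ∀ n, (f (e (2 * n)) t, f (e (2 * n + 1)) t) ∈ E}

variable {f : ℕ → C(K, X)}

theorem pairingSet_mono {E E' : Set (X × X)} (h : E ⊆ E') : pairingSet f E ⊆ pairingSet f E' :=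
  fun _ ⟨t, ht⟩ => ⟨t, fun n => h (ht n)⟩

theorem isClosed_pairingSet [CompactSpace K] {E : Set (X × X)} (hE : IsClosed E) :
    IsClosed (pairingSet f E) := by
  have hf : Continuous fun p : ℕ × K => f p.1 p.2 :=
    continuous_prod_of_discrete_left.mpr fun m => (f m).continuous
  have heval : ∀ m, Continuous fun p : (ℕ → ℕ) × K => f (p.1 m) p.2 := fun m =>
    hf.comp (f := fun p : (ℕ → ℕ) × K => (p.1 m, p.2)) (by fun_prop)
  have hclosed : IsClosed {p : (ℕ → ℕ) × K |
      ∀ n, (f (p.1 (2 * n)) p.2, f (p.1 (2 * n + 1)) p.2) ∈ E} := by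
    simp only [Set.ofPred_forall]
    exact isClosed_iInter fun n => hE.preimage ((heval _).prodMk (heval _))
  convert isClosedMap_fst_of_compactSpace _ hclosed
  ext e
  simp [pairingSet]

theorem strictMono_two_mul_div_two_add_mod_two {h : ℕ → ℕ} (hh : StrictMono h) :
    StrictMono fun n => 2 * h (n / 2) + n % 2 := by
  refine strictMono_nat_of_lt_succ fun n => ?_
  rcases Nat.mod_two_eq_zero_or_one n with hn | hn
  · have e : (n + 1) / 2 = n / 2 := by omega
    simp only [e]
    omega
  · have e : (n + 1) / 2 = n / 2 + 1 := by omega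
    have := hh (Nat.lt_add_one (n / 2))
    simp only [e]
    omega

theorem exists_isSubseq_mem_pairingSet_of_subset_iUnion {ι : Type*} [Finite ι] {E : Set (X × X)}
    {Q : ι → Set (X × X)} (hEQ : E ⊆ ⋃ i, Q i) {e : ℕ → ℕ} (he : e ∈ pairingSet f E) :
    ∃ i, ∃ C, IsSubseq C e ∧ C ∈ pairingSet f (Q i) := by
  obtain ⟨t, ht⟩ := he
  choose c hc using fun n => mem_iUnion.mp (hEQ (ht n))
  obtain ⟨i, hi⟩ := Finite.exists_infinite_fiber c
  obtain ⟨h, hh, hhi⟩ := Filter.extraction_of_frequently_atTop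
    (Nat.frequently_atTop_iff_infinite.mpr (Set.infinite_coe_iff.mp hi))
  -- keep the pairs `(e (2 * m), e (2 * m + 1))` with `m` in the range of `h`
  refine ⟨i, _, ⟨_, strictMono_two_mul_div_two_add_mod_two hh, rfl⟩, t, fun n => ?_⟩
  have h₁ : (2 * n + 1) / 2 = n := by omega
  have := hc (h n)
  rw [hhi n] at this
  simpa [h₁, Nat.mul_div_cancel_left n two_pos] using this

theorem exists_strictMono_forall_eq_three_mul_add_one (p : ℕ → Prop) [DecidablePred p] :
    ∃ g : ℕ → ℕ, StrictMono g ∧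
      ∀ i, (¬p i → g (2 * i) = 3 * i + 1) ∧ (p i → g (2 * i + 1) = 3 * i + 1) := by
  -- the `i`-th pair of values of `g` is `(3i + 1, 3i + 2)` or `(3i, 3i + 1)` as `p i` fails or holds
  refine ⟨fun n => 3 * (n / 2) + n % 2 + if p (n / 2) then 0 else 1, ?_, fun i => ?_⟩
  · refine strictMono_nat_of_lt_succ fun n => ?_
    rcases Nat.mod_two_eq_zero_or_one n with hn | hn
    · have e : (n + 1) / 2 = n / 2 := by omega
      simp only [e]
      omega
    · have e : (n + 1) / 2 = n / 2 + 1 := by omega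
      simp only [e]
      split_ifs <;> omega
  · have h₁ : (2 * i + 1) / 2 = i := by omega
    simp only [h₁, Nat.mul_div_cancel_left i two_pos]
    constructor <;> intro h <;> simp [h]

theorem exists_forall_mem_of_forall_isSubseq_mem_pairingSet {S₁ S₂ : Set X} {B : ℕ → ℕ}
    (hB : ∀ C, IsSubseq C B → C ∈ pairingSet f (S₁ ×ˢ S₂)) {J₁ J₂ : Set ℕ}
    (hJ₁ : J₁ ⊆ range fun i => B (3 * i + 1)) (hJ₂ : J₂ ⊆ range fun i => B (3 * i + 1))
    (hJ : Disjoint J₁ J₂) :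
    ∃ t, (∀ n ∈ J₁, f n t ∈ S₁) ∧ (∀ n ∈ J₂, f n t ∈ S₂) := by
  classical
  obtain ⟨g, hg, hgJ⟩ := exists_strictMono_forall_eq_three_mul_add_one (fun i => B (3 * i + 1) ∈ J₂)
  obtain ⟨t, ht⟩ := hB (B ∘ g) ⟨g, hg, rfl⟩
  refine ⟨t, ?_, ?_⟩
  · rintro _ hn
    obtain ⟨i, rfl⟩ := hJ₁ hn
    have := (ht i).1
    simp only [Function.comp_apply, (hgJ i).1 (disjoint_left.mp hJ hn)] at this
    exact this
  · rintro _ hn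
    obtain ⟨i, rfl⟩ := hJ₂ hn
    have := (ht i).2
    simp only [Function.comp_apply, (hgJ i).2 hn] at this
    exact this

end PairingSet

theorem exists_lt_nat_mul_le_le {δ r : ℝ} {n : ℕ} (hn : 0 < n) (h₀ : 0 ≤ r)
    (hr : r ≤ n * δ) : ∃ i < n, i * δ ≤ r ∧ r ≤ (i + 1) * δ := by
  induction n with
  | zero => exact absurd hn (lt_irrefl 0)
  | succ n ih =>
    by_cases h : 0 < n ∧ r ≤ n * δ
    · obtain ⟨i, hi, hir⟩ := ih h.1 h.2
      exact ⟨i, Nat.lt_succ_of_lt hi, hir⟩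
    refine ⟨n, Nat.lt_succ_self n, ?_, by exact_mod_cast hr⟩
    rcases Nat.eq_zero_or_pos n with rfl | hn'
    · simpa using h₀
    · exact (not_le.mp fun h' => h ⟨hn', h'⟩).le

theorem isClosed_closedSquare (a b δ : ℝ) : IsClosed (closedSquare a b δ) :=
  (isClosed_le continuous_const Complex.continuous_re).inter <|
    (isClosed_le Complex.continuous_re continuous_const).inter <|
      (isClosed_le continuous_const Complex.continuous_im).inter
        (isClosed_le Complex.continuous_im continuous_const)

section Grid

def gridCorner (A δ : ℝ) (i : ℕ) : ℝ := -A + i * δ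

variable {A δ : ℝ} {k : ℕ}

theorem neg_le_gridCorner (hδ : 0 ≤ δ) (i : ℕ) : -A ≤ gridCorner A δ i := by
  unfold gridCorner
  have : (0 : ℝ) ≤ i * δ := by positivity
  linarith

theorem gridCorner_add_le (hδ : 0 ≤ δ) (hA : A = k * δ) {i : ℕ} (hi : i < 2 * k) :
    gridCorner A δ i + δ ≤ A := by
  have hi' : (i : ℝ) + 1 ≤ 2 * k := by exact_mod_cast hi
  unfold gridCorner
  nlinarith

theorem exists_mem_closedSquare_gridCorner (hk : 0 < k) (hA : A = k * δ) {z : ℂ}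
    (hz : ‖z‖ ≤ A) : ∃ q : Fin (2 * k) × Fin (2 * k),
      z ∈ closedSquare (gridCorner A δ q.1) (gridCorner A δ q.2) δ := by
  have hcoord : ∀ x : ℝ, |x| ≤ A →
      ∃ i : Fin (2 * k), gridCorner A δ i ≤ x ∧ x ≤ gridCorner A δ i + δ := by
    intro x hx
    obtain ⟨hx₁, hx₂⟩ := abs_le.mp hx
    obtain ⟨i, hi, h₁, h₂⟩ := exists_lt_nat_mul_le_le (δ := δ) (by omega : 0 < 2 * k)
      (by linarith : 0 ≤ x + A) (by push_cast; linarith)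
    exact ⟨⟨i, hi⟩, by unfold gridCorner; linarith, by unfold gridCorner; linarith⟩
  obtain ⟨i, hi₁, hi₂⟩ := hcoord z.re ((Complex.abs_re_le_norm z).trans hz)
  obtain ⟨j, hj₁, hj₂⟩ := hcoord z.im ((Complex.abs_im_le_norm z).trans hz)
  exact ⟨(i, j), hi₁, hi₂, hj₁, hj₂⟩

end Grid

theorem squares_lemma_general (K : Type*) [MetricSpace K] [CompactSpace K]
    (f : ℕ → C(K, ℂ)) (ε : ℝ)
    (hD : ∀ l : ℕ → ℕ, StrictMono l →
      ∃ t : K, ∀ n : ℕ, ε ≤ ‖f (l (2 * n)) t - f (l (2 * n + 1)) t‖)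
    (δ₁ A : ℝ) (hδ₁ : 0 < δ₁) (hmult : ∃ k : ℕ, A = k * δ₁) (hA : δ₁ < A)
    (hbound : ∀ n, ‖f n‖ ≤ A) :
    ∃ M : Set ℕ, M.Infinite ∧ ∃ a₁ b₁ a₂ b₂ : ℝ,
      (-A ≤ a₁ ∧ a₁ + δ₁ ≤ A ∧ -A ≤ b₁ ∧ b₁ + δ₁ ≤ A) ∧
      (-A ≤ a₂ ∧ a₂ + δ₁ ≤ A ∧ -A ≤ b₂ ∧ b₂ + δ₁ ≤ A) ∧
      (∃ z₁ ∈ closedSquare a₁ b₁ δ₁, ∃ z₂ ∈ closedSquare a₂ b₂ δ₁, ε ≤ ‖z₁ - z₂‖) ∧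
      ∀ J₁ J₂ : Set ℕ, J₁ ⊆ M → J₂ ⊆ M → Disjoint J₁ J₂ →
        ∃ t : K, (∀ n ∈ J₁, f n t ∈ closedSquare a₁ b₁ δ₁) ∧
          (∀ n ∈ J₂, f n t ∈ closedSquare a₂ b₂ δ₁) := by
  obtain ⟨k, hk⟩ := hmult
  have hk₀ : 0 < k := Nat.pos_of_ne_zero fun h => by simp [h] at hk; linarith
  let sq : Fin (2 * k) × Fin (2 * k) → Set ℂ := fun q =>
    closedSquare (gridCorner A δ₁ q.1) (gridCorner A δ₁ q.2) δ₁
  let E : (Fin (2 * k) × Fin (2 * k)) × (Fin (2 * k) × Fin (2 * k)) → Set (ℂ × ℂ) := fun p =>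
    sq p.1 ×ˢ sq p.2 ∩ {w | ε ≤ ‖w.1 - w.2‖}
  have hE : ∀ p ∈ Finset.univ, IsClosed (pairingSet f (E p)) := fun p _ =>
    isClosed_pairingSet (((isClosed_closedSquare _ _ _).prod (isClosed_closedSquare _ _ _)).inter
      (isClosed_le continuous_const (continuous_fst.sub continuous_snd).norm))
  have hcover : ∀ B, IsSubseq B id →
      ∃ p ∈ Finset.univ, ∃ C, IsSubseq C B ∧ C ∈ pairingSet f (E p) := by
    intro B hB
    obtain ⟨t, ht⟩ := hD B (hB.strictMono strictMono_id)
    have hnorm : ∀ n, ‖f n t‖ ≤ A := fun n => ((f n).norm_coe_le_norm t).trans (hbound n)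
    have hsub : {w : ℂ × ℂ | ‖w.1‖ ≤ A ∧ ‖w.2‖ ≤ A ∧ ε ≤ ‖w.1 - w.2‖} ⊆ ⋃ p, E p := by
      rintro w ⟨h₁, h₂, hw⟩
      obtain ⟨q₁, hq₁⟩ := exists_mem_closedSquare_gridCorner hk₀ hk h₁
      obtain ⟨q₂, hq₂⟩ := exists_mem_closedSquare_gridCorner hk₀ hk h₂
      exact mem_iUnion.mpr ⟨(q₁, q₂), ⟨hq₁, hq₂⟩, hw⟩
    obtain ⟨p, C, hCB, hC⟩ := exists_isSubseq_mem_pairingSet_of_subset_iUnion hsub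
      ⟨t, fun n => ⟨hnorm _, hnorm _, ht n⟩⟩
    exact ⟨p, Finset.mem_univ p, C, hCB, hC⟩
  obtain ⟨⟨⟨i₁, j₁⟩, ⟨i₂, j₂⟩⟩, -, B, hB, hBE⟩ :=
    exists_isSubseq_forall_mem_of_isClosed Finset.univ hE strictMono_id hcover
  obtain ⟨t, ht⟩ := hBE B (.refl B)
  have hM : StrictMono fun i => B (3 * i + 1) :=
    (hB.strictMono strictMono_id).comp fun a b _ => show 3 * a + 1 < 3 * b + 1 by omega
  refine ⟨range fun i => B (3 * i + 1), infinite_range_of_injective hM.injective,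
    gridCorner A δ₁ i₁, gridCorner A δ₁ j₁, gridCorner A δ₁ i₂, gridCorner A δ₁ j₂,
    ⟨neg_le_gridCorner hδ₁.le _, gridCorner_add_le hδ₁.le hk i₁.isLt,
      neg_le_gridCorner hδ₁.le _, gridCorner_add_le hδ₁.le hk j₁.isLt⟩,
    ⟨neg_le_gridCorner hδ₁.le _, gridCorner_add_le hδ₁.le hk i₂.isLt,
      neg_le_gridCorner hδ₁.le _, gridCorner_add_le hδ₁.le hk j₂.isLt⟩,
    ⟨_, (ht 0).1.1, _, (ht 0).1.2, (ht 0).2⟩, fun J₁ J₂ hJ₁ hJ₂ hJ => ?_⟩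
  exact exists_forall_mem_of_forall_isSubseq_mem_pairingSet
    (fun C hC => pairingSet_mono inter_subset_left (hBE C hC)) hJ₁ hJ₂ hJ

/-- Lemma 3: if every infinite subset of ℕ lies in D(ℕ, F_ε), then for every
δ₁ > 0 and every integer multiple A of δ₁ with A > δ₁ bounding all ‖f_n‖, there
are an infinite M ⊆ ℕ and squares Δ₁, Δ₂ ⊆ [−A, A]² of side δ₁ with
(Δ₁ × Δ₂) ∩ F_ε ≠ ∅ and such that for all disjoint J₁, J₂ ⊆ M some t ∈ K has
f_n(t) ∈ Δ_s for all n ∈ J_s, s = 1, 2. -/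
theorem squares_lemma (K : Type*) [MetricSpace K] [CompactSpace K]
    (f : ℕ → C(K, ℂ)) (ε : ℝ) (hε : 0 < ε)
    (hD : ∀ l : ℕ → ℕ, StrictMono l →
      ∃ t : K, ∀ n : ℕ, ε ≤ ‖f (l (2 * n)) t - f (l (2 * n + 1)) t‖)
    (δ₁ A : ℝ) (hδ₁ : 0 < δ₁) (hmult : ∃ k : ℕ, A = k * δ₁) (hA : δ₁ < A)
    (hbound : ∀ n, ‖f n‖ ≤ A) :
    ∃ M : Set ℕ, M.Infinite ∧ ∃ a₁ b₁ a₂ b₂ : ℝ,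
      (-A ≤ a₁ ∧ a₁ + δ₁ ≤ A ∧ -A ≤ b₁ ∧ b₁ + δ₁ ≤ A) ∧
      (-A ≤ a₂ ∧ a₂ + δ₁ ≤ A ∧ -A ≤ b₂ ∧ b₂ + δ₁ ≤ A) ∧
      (∃ z₁ ∈ closedSquare a₁ b₁ δ₁, ∃ z₂ ∈ closedSquare a₂ b₂ δ₁, ε ≤ ‖z₁ - z₂‖) ∧
      ∀ J₁ J₂ : Set ℕ, J₁ ⊆ M → J₂ ⊆ M → Disjoint J₁ J₂ →
        ∃ t : K, (∀ n ∈ J₁, f n t ∈ closedSquare a₁ b₁ δ₁) ∧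
          (∀ n ∈ J₂, f n t ∈ closedSquare a₂ b₂ δ₁) :=
  squares_lemma_general K f ε hD δ₁ A hδ₁ hmult hA hbound
end

section
/- Let K be a compact metric space, (f_n) a bounded sequence in C(K, ℂ), ε > 0, δ > 0, and 0 < δ₁ < δ/5. Let Δ₁ = [0, δ₁]² and let Δ₂ be a closed square with sides parallel to the axes of side length δ₁ contained in the first quadrant (both identified with subsets of ℂ). Assume: (1) (Δ₁ × Δ₂) ∩ F_ε ≠ ∅; and (2) for every pair of disjoint subsets J₁, J₂ of ℕ there exists t ∈ K with f_n(t) ∈ Δ_s for all n ∈ J_s and s ∈ {1, 2}. Then ‖Σ_{n≥2} λ_n (f_n − f_1)‖_∞ ≥ (ε√2/8 − δ) · Σ_{n≥2} (|Re(λ_n)| + |Im(λ_n)|) for every finitely supported sequence of complex scalars (λ_n)_{n≥2}. -/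
open Complex Finset

lemma norm_sub_sub_le_of_mem_closedSquare {a b a' b' d : ℝ} {z z' : ℂ}
    (hz : z ∈ closedSquare a b d) (hz' : z' ∈ closedSquare a' b' d) :
    ‖z - z' - ⟨a - a', b - b'⟩‖ ≤ 2 * d := by
  obtain ⟨hre₁, hre₂, him₁, him₂⟩ := hz
  obtain ⟨hre₁', hre₂', him₁', him₂'⟩ := hz'
  refine (norm_le_abs_re_add_abs_im _).trans ?_
  have hre : |z.re - z'.re - (a - a')| ≤ d := abs_le.mpr ⟨by linarith, by linarith⟩
  have him : |z.im - z'.im - (b - b')| ≤ d := abs_le.mpr ⟨by linarith, by linarith⟩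
  simp only [sub_re, sub_im]
  linarith

lemma abs_re_add_abs_im_eq_sum_posPart_re (z : ℂ) :
    |z.re| + |z.im| = (1 * z).re⁺ + (-1 * z).re⁺ + (I * z).re⁺ + (-I * z).re⁺ := by
  simp only [one_mul, neg_re, I_mul_re, neg_mul, neg_neg, posPart_neg,
    ← posPart_add_negPart]
  ring

lemma exists_norm_eq_one_sum_le_four_mul_sum_posPart_re {ι : Type*} (s : Finset ι)
    (c : ι → ℂ) :
    ∃ θ : ℂ, ‖θ‖ = 1 ∧
      ∑ n ∈ s, (|(c n).re| + |(c n).im|) ≤ 4 * ∑ n ∈ s, (θ * c n).re⁺ := by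
  have hsplit : ∑ n ∈ s, (|(c n).re| + |(c n).im|) =
      ∑ n ∈ s, (1 * c n).re⁺ + ∑ n ∈ s, (-1 * c n).re⁺ + ∑ n ∈ s, (I * c n).re⁺ +
        ∑ n ∈ s, (-I * c n).re⁺ := by
    simp only [← sum_add_distrib, abs_re_add_abs_im_eq_sum_posPart_re]
  by_contra! h
  linarith [h 1 (by simp), h (-1) (by simp), h I (by simp), h (-I) (by simp)]

lemma exists_subset_sum_abs_re_add_abs_im_le_four_mul_norm_sum {ι : Type*} (s : Finset ι)
    (c : ι → ℂ) :
    ∃ J ⊆ s, ∑ n ∈ s, (|(c n).re| + |(c n).im|) ≤ 4 * ‖∑ n ∈ J, c n‖ := by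
  classical
  obtain ⟨θ, hθ, hs⟩ := exists_norm_eq_one_sum_le_four_mul_sum_posPart_re s c
  set J := s.filter fun n => 0 ≤ (θ * c n).re
  refine ⟨J, filter_subset _ _, hs.trans ?_⟩
  gcongr
  calc ∑ n ∈ s, (θ * c n).re⁺
      = ∑ n ∈ J, (θ * c n).re := by
        rw [sum_filter]
        exact sum_congr rfl fun n _ => posPart_eq_ite
    _ = (θ * ∑ n ∈ J, c n).re := by rw [mul_sum, re_sum]
    _ ≤ ‖∑ n ∈ J, c n‖ := by simpa [hθ] using re_le_norm (θ * ∑ n ∈ J, c n)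

lemma norm_sum_mul_norm_sub_le_norm_sum_smul {ι 𝕜 E : Type*} [NormedField 𝕜]
    [SeminormedAddCommGroup E] [NormedSpace 𝕜 E] [DecidableEq ι] {s J : Finset ι}
    (hJs : J ⊆ s) (c : ι → 𝕜) {v : ι → E} {w : E} {d : ℝ}
    (hJ : ∀ n ∈ J, ‖v n - w‖ ≤ d) (hsJ : ∀ n ∈ s, n ∉ J → ‖v n‖ ≤ d) :
    ‖∑ n ∈ J, c n‖ * ‖w‖ - d * ∑ n ∈ s, ‖c n‖ ≤ ‖∑ n ∈ s, c n • v n‖ := by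
  set u : ι → E := fun n => if n ∈ J then w else 0
  have hu : ∑ n ∈ s, c n • u n = (∑ n ∈ J, c n) • w := by
    simp only [u, smul_ite, smul_zero, sum_ite_mem, inter_eq_right.mpr hJs, sum_smul]
  have herr : ‖∑ n ∈ s, c n • (v n - u n)‖ ≤ d * ∑ n ∈ s, ‖c n‖ := by
    rw [mul_sum]
    refine (norm_sum_le _ _).trans (sum_le_sum fun n hn => ?_)
    rw [norm_smul, mul_comm]
    gcongr
    by_cases hn' : n ∈ J
    · simpa [u, hn'] using hJ n hn'
    · simpa [u, hn'] using hsJ n hn hn'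
  have hsplit : ∑ n ∈ s, c n • v n = (∑ n ∈ J, c n) • w + ∑ n ∈ s, c n • (v n - u n) := by
    simp only [smul_sub, sum_sub_distrib, hu, add_sub_cancel]
  have htriangle := norm_sub_le ((∑ n ∈ J, c n) • w + ∑ n ∈ s, c n • (v n - u n))
    (∑ n ∈ s, c n • (v n - u n))
  rw [add_sub_cancel_right, norm_smul] at htriangle
  rw [hsplit]
  linarith

theorem lower_l1_estimate_general (K : Type*) [MetricSpace K] [CompactSpace K]
    (f : ℕ → C(K, ℂ))
    (ε δ δ₁ : ℝ) (hε : 0 < ε) (hδ₁ : 0 < δ₁) (hδ₁δ : δ₁ < δ / 5)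
    (a b : ℝ)
    (h1 : ∃ z₁ ∈ closedSquare 0 0 δ₁, ∃ z₂ ∈ closedSquare a b δ₁, ε ≤ ‖z₁ - z₂‖)
    (h2 : ∀ J₁ J₂ : Set ℕ, Disjoint J₁ J₂ →
      ∃ t : K, (∀ n ∈ J₁, f n t ∈ closedSquare 0 0 δ₁) ∧
        (∀ n ∈ J₂, f n t ∈ closedSquare a b δ₁)) :
    ∀ lam : ℕ →₀ ℂ, 0 ∉ lam.support →
      ‖∑ n ∈ lam.support, lam n • (f n - f 0)‖ ≥
        (ε * Real.sqrt 2 / 8 - δ) *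
          ∑ n ∈ lam.support, (|(lam n).re| + |(lam n).im|) := by
  intro lam h0
  set S := ∑ n ∈ lam.support, (|(lam n).re| + |(lam n).im|)
  obtain ⟨J, hJs, hSJ⟩ :=
    exists_subset_sum_abs_re_add_abs_im_le_four_mul_norm_sum lam.support lam
  obtain ⟨t, ht₁, ht₂⟩ := h2 (↑J)ᶜ ↑J disjoint_compl_left
  have hf0 : f 0 t ∈ closedSquare 0 0 δ₁ := ht₁ 0 fun h => h0 (hJs h)
  set w : ℂ := ⟨a, b⟩
  have hw : ε - 2 * δ₁ ≤ ‖w‖ := by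
    obtain ⟨z₁, hz₁, z₂, hz₂, hε₁₂⟩ := h1
    have hclose := norm_sub_sub_le_of_mem_closedSquare hz₂ hz₁
    rw [← norm_neg, neg_sub] at hε₁₂
    simp only [sub_zero] at hclose
    linarith [norm_le_norm_add_norm_sub' (z₂ - z₁) w]
  have hvalue := norm_sum_mul_norm_sub_le_norm_sum_smul hJs lam (v := fun n => f n t - f 0 t)
    (w := w) (d := 2 * δ₁)
    (fun n hn => by simpa using norm_sub_sub_le_of_mem_closedSquare (ht₂ n hn) hf0)
    (fun n _ hn => by
      simpa [show (⟨0, 0⟩ : ℂ) = 0 from rfl] using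
        norm_sub_sub_le_of_mem_closedSquare (ht₁ n hn) hf0)
  have heval : ‖∑ n ∈ lam.support, lam n • (f n t - f 0 t)‖ ≤
      ‖∑ n ∈ lam.support, lam n • (f n - f 0)‖ := by
    simpa using ContinuousMap.norm_coe_le_norm (∑ n ∈ lam.support, lam n • (f n - f 0)) t
  have hnorm : ∑ n ∈ lam.support, ‖lam n‖ ≤ S :=
    sum_le_sum fun n _ => norm_le_abs_re_add_abs_im (lam n)
  have hsqrt : Real.sqrt 2 ≤ 2 := by
    rw [Real.sqrt_le_left (by norm_num)]; norm_num
  have hS : 0 ≤ S := sum_nonneg fun n _ => by positivity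
  calc (ε * Real.sqrt 2 / 8 - δ) * S
      ≤ (ε / 4 - 5 / 2 * δ₁) * S := mul_le_mul_of_nonneg_right (by nlinarith) hS
    _ = S / 4 * (ε - 2 * δ₁) - 2 * δ₁ * S := by ring
    _ ≤ S / 4 * ‖w‖ - 2 * δ₁ * S := by gcongr
    _ ≤ ‖∑ n ∈ J, lam n‖ * ‖w‖ - 2 * δ₁ * ∑ n ∈ lam.support, ‖lam n‖ := by
        gcongr; linarith
    _ ≤ ‖∑ n ∈ lam.support, lam n • (f n - f 0)‖ := hvalue.trans heval

/-- Lemma 4: with Δ₁ = [0, δ₁]² and Δ₂ a square of side δ₁ in the first quadrant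
such that (Δ₁ × Δ₂) ∩ F_ε ≠ ∅ and such that for all disjoint J₁, J₂ ⊆ ℕ some
t ∈ K has f_n(t) ∈ Δ_s for n ∈ J_s, one gets
‖Σ_{n≥2} λ_n (f_n − f_1)‖ ≥ (ε√2/8 − δ)·Σ_{n≥2}(|Re λ_n| + |Im λ_n|). -/
theorem lower_l1_estimate (K : Type*) [MetricSpace K] [CompactSpace K]
    (f : ℕ → C(K, ℂ)) (hf : ∃ C : ℝ, ∀ n, ‖f n‖ ≤ C)
    (ε δ δ₁ : ℝ) (hε : 0 < ε) (hδ : 0 < δ) (hδ₁ : 0 < δ₁) (hδ₁δ : δ₁ < δ / 5)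
    (a b : ℝ) (ha : 0 ≤ a) (hb : 0 ≤ b)
    (h1 : ∃ z₁ ∈ closedSquare 0 0 δ₁, ∃ z₂ ∈ closedSquare a b δ₁, ε ≤ ‖z₁ - z₂‖)
    (h2 : ∀ J₁ J₂ : Set ℕ, Disjoint J₁ J₂ →
      ∃ t : K, (∀ n ∈ J₁, f n t ∈ closedSquare 0 0 δ₁) ∧
        (∀ n ∈ J₂, f n t ∈ closedSquare a b δ₁)) :
    ∀ lam : ℕ →₀ ℂ, 0 ∉ lam.support →
      ‖∑ n ∈ lam.support, lam n • (f n - f 0)‖ ≥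
        (ε * Real.sqrt 2 / 8 - δ) *
          ∑ n ∈ lam.support, (|(lam n).re| + |(lam n).im|) :=
  lower_l1_estimate_general K f ε δ δ₁ hε hδ₁ hδ₁δ a b h1 h2
end

section
/- Let K be a compact metric space, (f_n) a bounded sequence in C(K, ℝ), and ε > 0. Then either (f_n) admits an ε-weak Cauchy subsequence, or for every δ > 0 there exists a subsequence (f_{m_n}) such that ‖Σ_{n≥2} λ_n (f_{m_n} − f_{m_1})‖_∞ ≥ (ε/2 − δ) · Σ_{n≥2} |λ_n| for every finitely supported sequence of real scalars (λ_n)_{n≥2}. -/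
/-!
For rationals `p`, `q` put `Aₙ = {fₙ ≤ p}` and `Bₙ = {q ≤ fₙ}`. Rosenthal's combinatorial
dichotomy: either some subsequence of the pairs `(Aₙ, Bₙ)` is Boolean independent, or every
infinite set of indices contains an infinite one along which no point lies in infinitely many
`Aₙ` and in infinitely many `Bₙ`. The independent subsequence is built by combinatorial forcing:
indices are added one at a time, keeping an infinite reservoir `R` such that every sign pattern
on the chosen indices is realised by points oscillating along any infinite part of `R`; a
pigeonhole argument over the finitely many patterns shows that an index can always be added.

If some subsequence is independent for a pair with `q - p > ε - 2δ`, evaluating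
`∑ λₙ (f_{m(n+1)} - f_{m 0})` at a point of the pattern given by the signs of the coefficients
and at a point of the opposite pattern gives a difference of at least `(q - p) ∑ |λₙ|`. Otherwise
a diagonal subsequence avoids oscillation for all these countably many pairs, which forces
`limsup - liminf < ε` at every point.
-/

open Filter Set

theorem exists_seq_of_forall_exists {α : Type*} {r : ℕ → α → α → Prop}
    (h : ∀ n a, ∃ b, r n a b) (a : α) : ∃ u : ℕ → α, u 0 = a ∧ ∀ n, r n (u n) (u (n + 1)) := by
  choose g hg using h
  exact ⟨fun n => Nat.rec a g n, rfl, fun n => hg n _⟩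

theorem StrictMono.infinite_range_inter {m : ℕ → ℕ} (hm : StrictMono m) {S : Set ℕ}
    (h : ∃ᶠ j in atTop, m j ∈ S) : (range m ∩ S).Infinite := by
  rw [← image_preimage_eq_range_inter]
  exact (Nat.frequently_atTop_iff_infinite.1 h).image hm.injective.injOn

namespace Rosenthal

variable {X : Type*} (A B : ℕ → Set X)

def pattern (s : Finset ℕ) (σ : ℕ → Bool) : Set X :=
  {x | ∀ n ∈ s, bif σ n then x ∈ A n else x ∈ B n}

def IsIndependent : Prop :=
  ∀ (s : Finset ℕ) (σ : ℕ → Bool), (pattern A B s σ).Nonempty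

def Oscillates (R : Set ℕ) (x : X) : Prop :=
  (R ∩ {n | x ∈ A n}).Infinite ∧ (R ∩ {n | x ∈ B n}).Infinite

def Forces (s : Finset ℕ) (R : Set ℕ) : Prop :=
  ∀ σ, ∀ R' ⊆ R, R'.Infinite → ∃ x ∈ pattern A B s σ, Oscillates A B R' x

variable {A B}

theorem Oscillates.of_diff_finite {R S : Set ℕ} {x : X} (h : Oscillates A B R x)
    (hRS : (R \ S).Finite) : Oscillates A B S x := by
  have key : ∀ P : Set ℕ, (R ∩ P).Infinite → (S ∩ P).Infinite := fun P hP =>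
    (hP.sdiff hRS).mono fun n hn => ⟨not_not.1 fun hS => hn.2 ⟨hn.1.1, hS⟩, hn.1.2⟩
  exact ⟨key _ h.1, key _ h.2⟩

theorem Forces.mono {s : Finset ℕ} {R R' : Set ℕ} (h : Forces A B s R) (hR' : R' ⊆ R) :
    Forces A B s R' :=
  fun σ R'' hR'' => h σ R'' (hR''.trans hR')

theorem pattern_congr {s : Finset ℕ} {σ τ : ℕ → Bool} (h : ∀ i ∈ s, σ i = τ i) :
    pattern A B s σ = pattern A B s τ := by
  ext x
  exact forall₂_congr fun i hi => by rw [h i hi]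

/-- Infinitely many `j` share both the restriction of `σ j` to `s` and the sign `σ j (n j)`.
A point realising the shared pattern on `s` and oscillating along those `n j` lies, for one of
them, in the pattern of `σ j` on `insert (n j) s`, and it oscillates along `W j` because all
later `n i` lie in `W j`. -/
theorem Forces.exists_mem_pattern_insert_oscillates {s : Finset ℕ} {R : Set ℕ}
    (hF : Forces A B s R) {n : ℕ → ℕ} (hn : Function.Injective n) (hnR : ∀ j, n j ∈ R)
    {W : ℕ → Set ℕ} (hnW : ∀ i j, j < i → n i ∈ W j) (σ : ℕ → ℕ → Bool) :
    ∃ j, ∃ x ∈ pattern A B (insert (n j) s) (σ j), Oscillates A B (W j) x := by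
  set code : ℕ → (s → Bool) × Bool := fun j => (fun i => σ j i, σ j (n j))
  obtain ⟨⟨τ, b⟩, hc⟩ := Finite.exists_infinite_fiber code
  set F := code ⁻¹' {(τ, b)}
  have hF_inf : F.Infinite := infinite_coe_iff.1 hc
  obtain ⟨j₀, hj₀⟩ := hF_inf.nonempty
  obtain ⟨x, hxs, hosc⟩ :=
    hF (σ j₀) (n '' F) (image_subset_iff.2 fun j _ => hnR j) (hF_inf.image hn.injOn)
  have hside : (n '' F ∩ {k | bif b then x ∈ A k else x ∈ B k}).Infinite := by
    cases b
    exacts [hosc.2, hosc.1]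
  obtain ⟨_, ⟨j, hjF, rfl⟩, hj⟩ := hside.nonempty
  have hcode : code j = code j₀ := hjF.trans hj₀.symm
  refine ⟨j, x, (Finset.forall_mem_insert _ _ _).2 ⟨?_, ?_⟩,
    hosc.of_diff_finite (((finite_Iic j).image n).subset ?_)⟩
  · rwa [show σ j (n j) = b from congrArg Prod.snd hjF]
  · exact (pattern_congr fun i hi => congrFun (congrArg Prod.fst hcode) ⟨i, hi⟩).ge hxs
  · rintro _ ⟨⟨i, -, rfl⟩, hiW⟩
    exact ⟨i, not_lt.1 fun hji => hiW (hnW i j hji), rfl⟩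

theorem Forces.exists_insert {s : Finset ℕ} {R : Set ℕ} (hF : Forces A B s R)
    (hR : R.Infinite) : ∃ n ∈ R, ∃ R' ⊆ R, R'.Infinite ∧ Forces A B (insert n s) R' := by
  by_contra! H
  have step : ∀ (_ : ℕ) (a : ℕ × {W : Set ℕ // W ⊆ R ∧ W.Infinite}),
      ∃ b : ℕ × {W : Set ℕ // W ⊆ R ∧ W.Infinite}, a.1 < b.1 ∧ b.1 ∈ a.2.1 ∧ b.2.1 ⊆ a.2.1 ∧
        ∃ σ, ∀ x ∈ pattern A B (insert b.1 s) σ, ¬ Oscillates A B b.2.1 x := by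
    rintro - ⟨n, W, hWR, hW⟩
    obtain ⟨n', hn'W, hnn'⟩ := hW.exists_gt n
    have hbad := H n' (hWR hn'W) W hWR hW
    simp only [Forces, not_forall, not_exists, not_and] at hbad
    obtain ⟨σ, W', hW'W, hW', hbad⟩ := hbad
    exact ⟨(n', ⟨W', hW'W.trans hWR, hW'⟩), hnn', hn'W, hW'W, σ, hbad⟩
  obtain ⟨u, -, hu⟩ := exists_seq_of_forall_exists step (0, ⟨R, subset_rfl, hR⟩)
  choose σ hσ using fun j => (hu j).2.2.2
  have hW : Antitone fun j => (u j).2.1 := antitone_nat_of_succ_le fun j => (hu j).2.2.1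
  have hn : StrictMono fun j => (u j).1 := strictMono_nat_of_lt_succ fun j => (hu j).1
  obtain ⟨j, x, hx, hosc⟩ := hF.exists_mem_pattern_insert_oscillates
    (n := fun j => (u (j + 1)).1) (W := fun j => (u (j + 1)).2.1)
    (fun i j h => Nat.succ_injective (hn.injective h)) (fun j => (u j).2.2.1 (hu j).2.1)
    (fun i j hji => hW (Nat.succ_le_of_lt hji) (hu i).2.1) σ
  exact hσ j x hx hosc

theorem Forces.exists_isIndependent {R : Set ℕ} (hF : Forces A B ∅ R) (hR : R.Infinite) :
    ∃ m : ℕ → ℕ, StrictMono m ∧ IsIndependent (A ∘ m) (B ∘ m) := by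
  have step : ∀ (_ : ℕ) (a : ℕ × {p : Finset ℕ × Set ℕ // p.2.Infinite ∧ Forces A B p.1 p.2}),
      ∃ b : ℕ × {p : Finset ℕ × Set ℕ // p.2.Infinite ∧ Forces A B p.1 p.2},
        a.1 < b.1 ∧ b.2.1.1 = insert b.1 a.2.1.1 := by
    rintro - ⟨n, ⟨s, R⟩, hR, hF⟩
    obtain ⟨n', hn', R', -, hR', hF'⟩ :=
      (hF.mono sdiff_subset).exists_insert (hR.sdiff (finite_Iic n))
    exact ⟨(n', ⟨(insert n' s, R'), hR', hF'⟩), not_le.1 hn'.2, rfl⟩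
  obtain ⟨u, hu0, hu⟩ := exists_seq_of_forall_exists step (0, ⟨(∅, R), hR, hF⟩)
  set m := fun j => (u (j + 1)).1
  have hm : StrictMono m := strictMono_nat_of_lt_succ fun j => (hu (j + 1)).1
  have hs : ∀ J, (u J).2.1.1 = (Finset.range J).image m := by
    intro J
    induction J with
    | zero => simp [hu0]
    | succ J ih => rw [(hu J).2, ih, Finset.range_add_one, Finset.image_insert]
  refine ⟨m, hm, fun t σ => ?_⟩
  set J := t.sup id + 1
  obtain ⟨x, hx, -⟩ :=
    (u J).2.2.2 (Function.extend m σ fun _ => true) _ subset_rfl (u J).2.2.1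
  refine ⟨x, fun j hj => ?_⟩
  have hmj := hx (m j) <| by
    rw [hs]
    exact Finset.mem_image_of_mem m (Finset.subset_range_sup_succ t hj)
  rwa [hm.injective.extend_apply] at hmj

variable (A B) in
theorem exists_isIndependent_or_exists_forall_not_oscillates {M : Set ℕ} (hM : M.Infinite) :
    (∃ m : ℕ → ℕ, StrictMono m ∧ IsIndependent (A ∘ m) (B ∘ m)) ∨
      ∃ N ⊆ M, N.Infinite ∧ ∀ x, ¬ Oscillates A B N x := by
  refine or_iff_not_imp_right.2 fun h => ?_
  push Not at h
  refine Forces.exists_isIndependent (fun σ R' hR' hinf => ?_) hM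
  obtain ⟨x, hx⟩ := h R' hR' hinf
  exact ⟨x, fun n hn => absurd hn (Finset.notMem_empty n), hx⟩

end Rosenthal

open Rosenthal

theorem exists_strictMono_forall_of_exists_subset {P : ℕ → Set ℕ → Prop}
    (hP : ∀ k {N N'}, P k N → (N' \ N).Finite → P k N')
    (hex : ∀ k M, M.Infinite → ∃ N ⊆ M, N.Infinite ∧ P k N) :
    ∃ m : ℕ → ℕ, StrictMono m ∧ ∀ k, P k (range m) := by
  obtain ⟨N, -, hN⟩ := exists_seq_of_forall_exists
    (r := fun k (M N : {M : Set ℕ // M.Infinite}) => N.1 ⊆ M.1 ∧ P k N.1)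
    (fun k M => let ⟨N, hNM, hN, hPN⟩ := hex k M.1 M.2; ⟨⟨N, hN⟩, hNM, hPN⟩)
    ⟨univ, infinite_univ⟩
  have hanti : Antitone fun k => (N k).1 := antitone_nat_of_succ_le fun k => (hN k).1
  obtain ⟨m, hm, hmN⟩ := extraction_forall_of_frequently
    fun k => Nat.frequently_atTop_iff_infinite.2 (N (k + 1)).2
  refine ⟨m, hm, fun k => hP k (hN k).2 (((finite_Iio k).image m).subset ?_)⟩
  rintro _ ⟨⟨j, rfl⟩, hj⟩
  exact ⟨j, not_le.1 fun hkj => hj (hanti (Nat.succ_le_succ hkj) (hmN j)), rfl⟩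

theorem exists_forall_abs_sub_lt_of_limsup_sub_liminf_lt {a : ℕ → ℝ}
    (ha : IsBoundedUnder (· ≤ ·) atTop a) (ha' : IsBoundedUnder (· ≥ ·) atTop a) {ε : ℝ}
    (h : limsup a atTop - liminf a atTop < ε) :
    ∃ n₀, ∀ n ≥ n₀, ∀ k ≥ n₀, |a n - a k| < ε := by
  set η := (ε - (limsup a atTop - liminf a atTop)) / 2 with hη_def
  have hη : 0 < η := half_pos (sub_pos.2 h)
  obtain ⟨n₀, hn₀⟩ := eventually_atTop.1
    ((eventually_lt_of_limsup_lt (lt_add_of_pos_right _ hη) ha).and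
      (eventually_lt_of_lt_liminf (sub_lt_self _ hη) ha'))
  refine ⟨n₀, fun n hn k hk => ?_⟩
  obtain ⟨hn₁, hn₂⟩ := hn₀ n hn
  obtain ⟨hk₁, hk₂⟩ := hn₀ k hk
  rw [abs_sub_lt_iff]
  constructor <;> linarith

theorem exists_rat_frequently_le_and_frequently_ge {a : ℕ → ℝ} {C : ℝ} (ha : ∀ j, |a j| ≤ C)
    {r ε : ℝ} (hr : r < ε) (h : ¬ ∃ n₀, ∀ n ≥ n₀, ∀ k ≥ n₀, |a n - a k| < ε) :
    ∃ p q : ℚ, r < (q : ℝ) - p ∧ (∃ᶠ j in atTop, a j ≤ p) ∧ ∃ᶠ j in atTop, (q : ℝ) ≤ a j := by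
  have hle : IsBoundedUnder (· ≤ ·) atTop a := isBoundedUnder_of ⟨C, fun j => (abs_le.1 (ha j)).2⟩
  have hge : IsBoundedUnder (· ≥ ·) atTop a := isBoundedUnder_of ⟨-C, fun j => (abs_le.1 (ha j)).1⟩
  have hgap : ε ≤ limsup a atTop - liminf a atTop :=
    not_lt.1 fun h' => h (exists_forall_abs_sub_lt_of_limsup_sub_liminf_lt hle hge h')
  have hη : 0 < (ε - r) / 2 := half_pos (sub_pos.2 hr)
  obtain ⟨p, hp, hp'⟩ := exists_rat_btwn (lt_add_of_pos_right (liminf a atTop) hη)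
  obtain ⟨q, hq, hq'⟩ := exists_rat_btwn (sub_lt_self (limsup a atTop) hη)
  exact ⟨p, q, by linarith,
    (frequently_lt_of_liminf_lt hle.isCoboundedUnder_ge hp).mono fun _ => le_of_lt,
    (frequently_lt_of_lt_limsup hge.isCoboundedUnder_le hq').mono fun _ => le_of_lt⟩

theorem exists_strictMono_forall_abs_sub_lt {X : Type*} (f : ℕ → X → ℝ)
    (hf : ∀ t, ∃ C, ∀ n, |f n t| ≤ C) {r ε : ℝ} (hr : r < ε)
    (h : ∀ p q : ℚ, r < (q : ℝ) - p → ∀ m : ℕ → ℕ, StrictMono m →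
      ¬ IsIndependent (fun j => {t | f (m j) t ≤ p}) (fun j => {t | q ≤ f (m j) t})) :
    ∃ m : ℕ → ℕ, StrictMono m ∧ ∀ t, ∃ n₀, ∀ n ≥ n₀, ∀ k ≥ n₀, |f (m n) t - f (m k) t| < ε := by
  obtain ⟨e, he⟩ := exists_surjective_nat (ℚ × ℚ)
  let A (p : ℚ) (n : ℕ) : Set X := {t | f n t ≤ p}
  let B (q : ℚ) (n : ℕ) : Set X := {t | q ≤ f n t}
  let P k N := r < ((e k).2 : ℝ) - (e k).1 → ∀ t, ¬ Oscillates (A (e k).1) (B (e k).2) N t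
  have hex : ∀ k M, M.Infinite → ∃ N ⊆ M, N.Infinite ∧ P k N := by
    intro k M hM
    by_cases hgap : r < ((e k).2 : ℝ) - (e k).1
    · rcases exists_isIndependent_or_exists_forall_not_oscillates (A (e k).1) (B (e k).2) hM
        with ⟨m, hm, hind⟩ | ⟨N, hNM, hN, hosc⟩
      · exact (h _ _ hgap m hm hind).elim
      · exact ⟨N, hNM, hN, fun _ => hosc⟩
    · exact ⟨M, subset_rfl, hM, fun h => absurd h hgap⟩
  obtain ⟨m, hm, hosc⟩ := exists_strictMono_forall_of_exists_subset (P := P)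
    (fun k _ _ hN hfin hgap t ht => hN hgap t (ht.of_diff_finite hfin)) hex
  refine ⟨m, hm, fun t => by_contra fun hnc => ?_⟩
  obtain ⟨C, hC⟩ := hf t
  obtain ⟨p, q, hpq, hp, hq⟩ :=
    exists_rat_frequently_le_and_frequently_ge (fun j => hC (m j)) hr hnc
  obtain ⟨k, hk⟩ := he (p, q)
  exact hosc k (by rw [hk]; exact hpq) t
    ⟨hm.infinite_range_inter (by rwa [hk]), hm.infinite_range_inter (by rwa [hk])⟩

theorem abs_mul_sub_le_mul_sub {c a₁ a₂ p q : ℝ} (h₁ : bif decide (c ≤ 0) then a₁ ≤ p else q ≤ a₁)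
    (h₂ : bif decide (c ≤ 0) then q ≤ a₂ else a₂ ≤ p) : |c| * (q - p) ≤ c * (a₁ - a₂) := by
  by_cases hc : c ≤ 0
  · simp only [hc, decide_true, cond_true] at h₁ h₂
    rw [abs_of_nonpos hc]
    nlinarith
  · simp only [hc, decide_false, cond_false] at h₁ h₂
    rw [abs_of_pos (not_le.1 hc)]
    nlinarith

theorem le_norm_sum_smul_sub_of_isIndependent {K : Type*} [TopologicalSpace K] [CompactSpace K]
    (g : ℕ → C(K, ℝ)) {p q : ℝ}
    (hg : IsIndependent (fun j => {t | g j t ≤ p}) (fun j => {t | q ≤ g j t})) (lam : ℕ →₀ ℝ) :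
    (q - p) / 2 * ∑ n ∈ lam.support, |lam n| ≤
      ‖∑ n ∈ lam.support, lam n • (g (n + 1) - g 0)‖ := by
  set S := lam.support
  set G := ∑ n ∈ S, lam n • (g (n + 1) - g 0)
  set T := ∑ n ∈ S, lam n
  rcases lt_or_ge q p with hqp | hpq
  · exact (mul_nonpos_of_nonpos_of_nonneg (by linarith)
      (Finset.sum_nonneg fun _ _ => abs_nonneg _)).trans (norm_nonneg _)
  -- At `t₁` each `g j` sits on the side of `p`, `q` favoured by the sign of its coefficient in
  -- `G` (that of `g 0` is `-T`); at `t₂` on the other side.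
  let σ : ℕ → Bool := fun | 0 => decide (-T ≤ 0) | n + 1 => decide (lam n ≤ 0)
  set s := insert 0 (S.image (· + 1))
  obtain ⟨t₁, ht₁⟩ := hg s σ
  obtain ⟨t₂, ht₂⟩ := hg s fun j => !σ j
  have key : ∀ j ∈ s, ∀ c, σ j = decide (c ≤ 0) → |c| * (q - p) ≤ c * (g j t₁ - g j t₂) := by
    intro j hj c hc
    have h₁ := ht₁ j hj
    have h₂ := ht₂ j hj
    rw [hc] at h₁
    rw [Bool.cond_not, hc] at h₂
    exact abs_mul_sub_le_mul_sub h₁ h₂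
  have hG : ∀ t, G t = ∑ n ∈ S, lam n * (g (n + 1) t - g 0 t) := fun t => by
    simp [G]
  have hdiff : G t₁ - G t₂ =
      ∑ n ∈ S, lam n * (g (n + 1) t₁ - g (n + 1) t₂) + -T * (g 0 t₁ - g 0 t₂) := by
    rw [hG, hG, ← Finset.sum_sub_distrib, neg_mul, Finset.sum_mul, ← sub_eq_add_neg,
      ← Finset.sum_sub_distrib]
    exact Finset.sum_congr rfl fun n _ => by ring
  have hlow : (q - p) * ∑ n ∈ S, |lam n| ≤ G t₁ - G t₂ :=
    calc (q - p) * ∑ n ∈ S, |lam n| = ∑ n ∈ S, |lam n| * (q - p) + 0 := by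
          rw [Finset.mul_sum, add_zero]
          exact Finset.sum_congr rfl fun _ _ => mul_comm _ _
      _ ≤ ∑ n ∈ S, lam n * (g (n + 1) t₁ - g (n + 1) t₂) + -T * (g 0 t₁ - g 0 t₂) :=
          add_le_add
            (Finset.sum_le_sum fun n hn =>
              key (n + 1) (Finset.mem_insert_of_mem (Finset.mem_image_of_mem _ hn)) _ rfl)
            ((mul_nonneg (abs_nonneg _) (sub_nonneg.2 hpq)).trans
              (key 0 (Finset.mem_insert_self _ _) _ rfl))
      _ = G t₁ - G t₂ := hdiff.symm
  have hup : G t₁ - G t₂ ≤ 2 * ‖G‖ := by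
    have h₁ := G.norm_coe_le_norm t₁
    have h₂ := G.norm_coe_le_norm t₂
    rw [Real.norm_eq_abs] at h₁ h₂
    linarith [le_abs_self (G t₁), neg_abs_le (G t₂)]
  linarith

theorem main_CK_real_general (K : Type*) [MetricSpace K] [CompactSpace K]
    (f : ℕ → C(K, ℝ)) (hf : ∃ C : ℝ, ∀ n, ‖f n‖ ≤ C) (ε : ℝ) :
    (∃ m : ℕ → ℕ, StrictMono m ∧
        ∀ t : K, ∃ n₀ : ℕ, ∀ n ≥ n₀, ∀ k ≥ n₀, |f (m n) t - f (m k) t| < ε) ∨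
      ∀ δ : ℝ, 0 < δ → ∃ m : ℕ → ℕ, StrictMono m ∧
        ∀ lam : ℕ →₀ ℝ,
          ‖∑ n ∈ lam.support, lam n • (f (m (n + 1)) - f (m 0))‖ ≥
            (ε / 2 - δ) * ∑ n ∈ lam.support, |lam n| := by
  refine or_iff_not_imp_right.2 fun h => ?_
  push Not at h
  obtain ⟨δ, hδ, hsmall⟩ := h
  obtain ⟨C, hC⟩ := hf
  refine exists_strictMono_forall_abs_sub_lt (fun n t => f n t)
    (fun t => ⟨C, fun n => ((f n).norm_coe_le_norm t).trans (hC n)⟩)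
    (sub_lt_self ε (by positivity : 0 < 2 * δ)) fun p q hpq m hm hind => ?_
  obtain ⟨lam, hlam⟩ := hsmall m hm
  refine hlam.not_ge (le_trans ?_ (le_norm_sum_smul_sub_of_isIndependent (f ∘ m) hind lam))
  gcongr
  linarith

/-- Real version of the main theorem: for a bounded sequence in a real C(K)
space and ε > 0, either there is an ε-weak Cauchy subsequence, or for every
δ > 0 there is a subsequence (f_{m_n}) with
‖Σ_{n≥2} λ_n (f_{m_n} − f_{m_1})‖ ≥ (ε/2 − δ)·Σ_{n≥2}|λ_n|. -/
theorem main_CK_real (K : Type*) [MetricSpace K] [CompactSpace K]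
    (f : ℕ → C(K, ℝ)) (hf : ∃ C : ℝ, ∀ n, ‖f n‖ ≤ C) (ε : ℝ) (hε : 0 < ε) :
    (∃ m : ℕ → ℕ, StrictMono m ∧
        ∀ t : K, ∃ n₀ : ℕ, ∀ n ≥ n₀, ∀ k ≥ n₀, |f (m n) t - f (m k) t| < ε) ∨
      ∀ δ : ℝ, 0 < δ → ∃ m : ℕ → ℕ, StrictMono m ∧
        ∀ lam : ℕ →₀ ℝ,
          ‖∑ n ∈ lam.support, lam n • (f (m (n + 1)) - f (m 0))‖ ≥
            (ε / 2 - δ) * ∑ n ∈ lam.support, |lam n| :=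
  main_CK_real_general K f hf ε
end

section
/- Let (x_n) be a bounded sequence in a complex Banach space X and suppose that for some fixed ε > 0, no subsequence of (x_n) is ε-weak Cauchy. Then for every δ > 0 there exist a subsequence (x_{m_n}) and an integer k ≥ 2 such that ‖Σ_{n≥k} λ_n x_{m_n}‖ ≥ (ε√2/8 − δ) · Σ_{n≥k} |λ_n| for every finitely supported sequence of complex scalars (λ_n)_{n≥k}; in particular (x_{m_n})_{n≥k} dominates the usual ℓ¹-basis with constant ε√2/8 − δ. -/
/-!
No subsequence being `ε`-weak Cauchy, on every infinite set of indices some functional of norm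
at most one has two `ε`-separated cluster values along `(xₙ)`. These pairs depend on the set of
indices, but after rounding them to a fixed finite net of a disc, a single pair `(a, b)` of net
points (`‖a - b‖ ≥ ε - η`) works hereditarily on some infinite `M`: every infinite subset of `M`
carries a functional whose values at the `xₙ` come infinitely often `η`-close to `a` and
infinitely often `η`-close to `b`. A Rosenthal-type diagonal construction then extracts a
subsequence along which every finite pattern of `a`'s and `b`'s is realized by one functional.
Testing `∑ λₙ x_{mₙ}` against the difference of two functionals realizing complementary sign
patterns, with the signs taken along the real and the imaginary parts of the `λₙ`, gives the
lower bound `(‖a - b‖ / 4 - η) ∑ |λₙ|`, which for `η = 4δ/5` is at least `(ε / 4 - δ) ∑ |λₙ| ≥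
(ε√2 / 8 - δ) ∑ |λₙ|`.
-/

open Set Filter Topology Metric

section Oscillation

variable {ι : Type*} (P : Bool → ι → ℕ → Prop)

def OscillatesOn (i : ι) (M : Set ℕ) : Prop :=
  ∀ c, {n ∈ M | P c i n}.Infinite

def HereditarilyOscillating (S : Set ι) (M : Set ℕ) : Prop :=
  ∀ M' ⊆ M, M'.Infinite → ∃ i ∈ S, OscillatesOn P i M'

def realizers (S : Set ι) (m : ℕ → ℕ) (σ : ℕ → Bool) (j : ℕ) : Set ι :=
  {i ∈ S | ∀ k < j, P (σ k) i (m k)}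

variable {P}

lemma OscillatesOn.of_finite_diff {i : ι} {M M' : Set ℕ} (h : OscillatesOn P i M)
    (hM : (M \ M').Finite) : OscillatesOn P i M' := fun c =>
  ((h c).sdiff hM).mono fun _ hn => ⟨not_not.1 fun h' => hn.2 ⟨hn.1.1, h'⟩, hn.1.2⟩

lemma OscillatesOn.mono_pred {P' : Bool → ι → ℕ → Prop} {i : ι} {M : Set ℕ}
    (h : OscillatesOn P i M) (hP : ∀ c n, P c i n → P' c i n) : OscillatesOn P' i M :=
  fun c => (h c).mono fun n hn => ⟨hn.1, hP c n hn.2⟩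

lemma Set.Infinite.sep_lt {M : Set ℕ} (hM : M.Infinite) (N : ℕ) : {p ∈ M | N < p}.Infinite :=
  (hM.sdiff (finite_Iic N)).mono fun _ hp => ⟨hp.1, not_le.1 hp.2⟩

lemma exists_seq_of_step {α : Type*} (Q : ℕ → α → Prop) (R : ℕ → α → α → Prop) {a₀ : α}
    (h₀ : Q 0 a₀) (step : ∀ j a, Q j a → ∃ a', Q (j + 1) a' ∧ R j a a') :
    ∃ f : ℕ → α, f 0 = a₀ ∧ ∀ j, Q j (f j) ∧ R j (f j) (f (j + 1)) := by
  choose g hg using fun j (a : {a // Q j a}) => step j a a.2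
  let F : ∀ j, {a // Q j a} := fun j => Nat.rec ⟨a₀, h₀⟩ (fun j a => ⟨g j a, (hg j a).1⟩) j
  exact ⟨fun j => (F j).1, rfl, fun j => ⟨(F j).2, (hg j (F j)).2⟩⟩

/-- If the refinement failed at every stage, the stages `Mₖ` with minima `nₖ` would be
witnessed by a constant pair `(j, c)` along an infinite set of `k`, and a member of `S j`
oscillating on `{nₖ}` would contradict the witness at some `nₖ`. -/
lemma exists_hereditarilyOscillating_refinement {J : Type*} [Finite J] {S : J → Set ι}
    {M : Set ℕ} (hM : M.Infinite) (hS : ∀ j, HereditarilyOscillating P (S j) M) :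
    ∃ n ∈ M, ∃ M' ⊆ M, M'.Infinite ∧ (∀ p ∈ M', n < p) ∧
      ∀ j c, HereditarilyOscillating P {i ∈ S j | P c i n} M' := by
  by_contra! hcon
  obtain ⟨f, hf₀, hf⟩ := exists_seq_of_step (fun _ Ms => Ms ⊆ M ∧ Ms.Infinite)
    (fun _ Ms Ms' => Ms' ⊆ {p ∈ Ms | sInf Ms < p} ∧
      ∃ j c, ∀ i ∈ S j, P c i (sInf Ms) → ¬OscillatesOn P i Ms') ⟨subset_rfl, hM⟩
    (by
      rintro - Ms ⟨hMsM, hMs⟩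
      obtain ⟨j, c, hjc⟩ := hcon _ (hMsM (Nat.sInf_mem hMs.nonempty)) _
        (fun p hp => hMsM hp.1) (hMs.sep_lt _) fun p hp => hp.2
      simp only [HereditarilyOscillating, not_forall, not_exists, not_and] at hjc
      obtain ⟨Ms', hMs', hinf, hbad⟩ := hjc
      exact ⟨Ms', ⟨hMs'.trans fun p hp => hMsM hp.1, hinf⟩, hMs', j, c,
        fun i hi hPi => hbad i ⟨hi, hPi⟩⟩)
  set n : ℕ → ℕ := fun k => sInf (f k)
  choose j c hkey using fun k => (hf k).2.2
  have hmem : ∀ k, n k ∈ f k := fun k => Nat.sInf_mem (hf k).1.2.nonempty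
  have hanti : Antitone f := antitone_nat_of_succ_le fun k => (hf k).2.1.trans (sep_subset _ _)
  have hmono : StrictMono n := strictMono_nat_of_lt_succ fun k => ((hf k).2.1 (hmem (k + 1))).2
  obtain ⟨⟨j₀, c₀⟩, hK⟩ := Finite.exists_infinite_fiber fun k => (j k, c k)
  set K := (fun k => (j k, c k)) ⁻¹' {(j₀, c₀)}
  have hKM : n '' K ⊆ M := by
    rintro _ ⟨k, -, rfl⟩
    exact hf₀ ▸ hanti (Nat.zero_le k) (hmem k)
  obtain ⟨i, hi, hosc⟩ :=
    hS j₀ _ hKM ((infinite_coe_iff.1 hK).image hmono.injective.injOn)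
  obtain ⟨_, ⟨k, hk, rfl⟩, hPk⟩ := (hosc c₀).nonempty
  obtain ⟨rfl, rfl⟩ : j k = j₀ ∧ c k = c₀ := by simpa [K] using hk
  refine hkey k i hi hPk (hosc.of_finite_diff ((finite_Iic (n k)).subset ?_))
  rintro _ ⟨⟨l, -, rfl⟩, hl⟩
  by_contra hlt
  exact hl (hanti (hmono.lt_iff_lt.1 (not_le.1 hlt)) (hmem l))

lemma realizers_zero (S : Set ι) (m : ℕ → ℕ) (σ : ℕ → Bool) : realizers P S m σ 0 = S := by
  simp [realizers]

lemma realizers_succ (S : Set ι) (m : ℕ → ℕ) (σ : ℕ → Bool) (j : ℕ) :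
    realizers P S m σ (j + 1) = {i ∈ realizers P S m σ j | P (σ j) i (m j)} := by
  ext i
  simp only [realizers, mem_ofPred_eq, Nat.lt_succ_iff_lt_or_eq, or_imp, forall_and,
    forall_eq, and_assoc]

lemma realizers_congr (S : Set ι) {m m' : ℕ → ℕ} {σ σ' : ℕ → Bool} {j : ℕ}
    (hm : ∀ k < j, m k = m' k) (hσ : ∀ k < j, σ k = σ' k) :
    realizers P S m σ j = realizers P S m' σ' j := by
  ext i
  simp +contextual only [realizers, mem_ofPred_eq, and_congr_right_iff]
  exact fun _ => forall₂_congr fun k hk => by rw [hm k hk, hσ k hk]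

variable (P) in
structure IsRealizingStage (S : Set ι) (j : ℕ) (m : ℕ → ℕ) (M : Set ℕ) : Prop where
  infinite : M.Infinite
  oscillating : ∀ σ, HereditarilyOscillating P (realizers P S m σ j) M
  lt : ∀ k < j, ∀ p ∈ M, m k < p

lemma IsRealizingStage.exists_succ {S : Set ι} {j : ℕ} {m : ℕ → ℕ} {M : Set ℕ}
    (h : IsRealizingStage P S j m M) :
    ∃ p ∈ M, ∃ M', IsRealizingStage P S (j + 1) (Function.update m j p) M' := by
  obtain ⟨p, hpM, M', hM'M, hM', hpM', hM'osc⟩ :=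
    exists_hereditarilyOscillating_refinement (J := Fin j → Bool) h.infinite
      (S := fun τ => realizers P S m (fun k => if hk : k < j then τ ⟨k, hk⟩ else false) j)
      fun τ => h.oscillating _
  have hagree : ∀ k < j, Function.update m j p k = m k :=
    fun k hk => Function.update_of_ne hk.ne _ _
  refine ⟨p, hpM, M', hM', fun σ => ?_, fun k hk q hq => ?_⟩
  · rw [realizers_succ, realizers_congr S hagree (σ' := fun k => if hk : k < j then σ k else false)
      fun k hk => by simp [hk], Function.update_self]
    exact hM'osc (fun k => σ k) (σ j)
  · rcases Nat.lt_succ_iff_lt_or_eq.1 hk with hk | rfl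
    · rw [hagree k hk]
      exact h.lt k hk q (hM'M hq)
    · rw [Function.update_self]
      exact hpM' q hq

theorem exists_strictMono_realizing {S : Set ι} {M : Set ℕ} (hM : M.Infinite)
    (hS : HereditarilyOscillating P S M) :
    ∃ m : ℕ → ℕ, StrictMono m ∧
      ∀ (F : Finset ℕ) (σ : ℕ → Bool), ∃ i ∈ S, ∀ k ∈ F, P (σ k) i (m k) := by
  obtain ⟨f, -, hf⟩ := exists_seq_of_step (fun j s => IsRealizingStage P S j s.1 s.2)
    (fun j s s' => (∀ k < j, s'.1 k = s.1 k) ∧ s'.1 j ∈ s.2) (a₀ := (fun _ => 0, M))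
    ⟨hM, by simpa only [realizers_zero] using fun _ => hS, by simp⟩
    fun j s hs => by
      obtain ⟨p, hp, M', hM'⟩ := hs.exists_succ
      exact ⟨(Function.update s.1 j p, M'), hM', fun k hk => Function.update_of_ne hk.ne _ _,
        by simpa using hp⟩
  set m : ℕ → ℕ := fun k => (f (k + 1)).1 k
  have hstab : ∀ j, ∀ k < j, (f j).1 k = m k := by
    intro j
    induction j with
    | zero => simp
    | succ j ih =>
      intro k hk
      rcases Nat.lt_succ_iff_lt_or_eq.1 hk with hk | rfl
      · rw [(hf j).2.1 k hk, ih k hk]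
      · rfl
  refine ⟨m, strictMono_nat_of_lt_succ fun k => (hf (k + 1)).1.lt k k.lt_succ_self _
    (hf (k + 1)).2.2, fun F σ => ?_⟩
  obtain ⟨j, hj⟩ := F.exists_nat_subset_range
  obtain ⟨i, ⟨hiS, hi⟩, -⟩ := (hf j).1.oscillating σ _ subset_rfl (hf j).1.infinite
  exact ⟨i, hiS, fun k hk => hstab j k (Finset.mem_range.1 (hj hk)) ▸
    hi k (Finset.mem_range.1 (hj hk))⟩

lemma exists_infinite_forall_not_oscillatesOn {κ : Type*} {P : κ → Bool → ι → ℕ → Prop}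
    {S : Set ι} {T : Set κ} (hT : T.Finite) {M : Set ℕ} (hM : M.Infinite)
    (hP : ∀ t ∈ T, ∀ M' ⊆ M, M'.Infinite → ¬HereditarilyOscillating (P t) S M') :
    ∃ M' ⊆ M, M'.Infinite ∧ ∀ t ∈ T, ∀ i ∈ S, ¬OscillatesOn (P t) i M' := by
  induction T, hT using Set.Finite.induction_on generalizing M with
  | empty => exact ⟨M, subset_rfl, hM, by simp⟩
  | @insert t T _ _ ih =>
    obtain ⟨M₁, hM₁M, hM₁, hM₁t⟩ :
        ∃ M₁ ⊆ M, M₁.Infinite ∧ ∀ i ∈ S, ¬OscillatesOn (P t) i M₁ := by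
      simpa [HereditarilyOscillating] using hP t (mem_insert _ _) M subset_rfl hM
    obtain ⟨M₂, hM₂M₁, hM₂, hM₂T⟩ := ih hM₁
      fun t' ht' M' hM' => hP t' (mem_insert_of_mem _ ht') M' (hM'.trans hM₁M)
    refine ⟨M₂, hM₂M₁.trans hM₁M, hM₂, ?_⟩
    rintro t' (rfl | ht') i hi hosc
    · exact hM₁t i hi (hosc.of_finite_diff (by rw [sdiff_eq_empty.2 hM₂M₁]; exact finite_empty))
    · exact hM₂T t' ht' i hi hosc

end Oscillation

lemma infinite_sep_norm_sub_lt {E : Type*} [SeminormedAddCommGroup E] {w : ℕ → E} {z : E}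
    {s : ℕ → ℕ} {M : Set ℕ} (hs : Tendsto s atTop atTop) (hsM : ∀ t, s t ∈ M)
    (hw : Tendsto (w ∘ s) atTop (𝓝 z)) {η : ℝ} (hη : 0 < η) :
    {p ∈ M | ‖w p - z‖ < η}.Infinite :=
  Nat.frequently_atTop_iff_infinite.1 <| hs.frequently <|
    ((Metric.tendsto_nhds.1 hw η hη).mono fun t ht => ⟨hsM t, by rwa [← dist_eq_norm]⟩).frequently

lemma norm_sum_mul_le_of_approx {𝕜 E ι : Type*} [NontriviallyNormedField 𝕜]
    [SeminormedAddCommGroup E] [NormedSpace 𝕜 E] {θ : E →L[𝕜] 𝕜} {L η : ℝ} (hθ : ‖θ‖ ≤ L)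
    (F : Finset ι) (c : ι → 𝕜) (y : ι → E) (z : ι → 𝕜) (h : ∀ k ∈ F, ‖θ (y k) - z k‖ ≤ η) :
    ‖∑ k ∈ F, c k * z k‖ ≤ L * ‖∑ k ∈ F, c k • y k‖ + η * ∑ k ∈ F, ‖c k‖ := by
  have hsplit : ∑ k ∈ F, c k * z k =
      θ (∑ k ∈ F, c k • y k) - ∑ k ∈ F, c k * (θ (y k) - z k) := by
    simp [mul_sub, Finset.sum_sub_distrib]
  calc ‖∑ k ∈ F, c k * z k‖
      ≤ ‖θ (∑ k ∈ F, c k • y k)‖ + ‖∑ k ∈ F, c k * (θ (y k) - z k)‖ :=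
        hsplit ▸ norm_sub_le _ _
    _ ≤ L * ‖∑ k ∈ F, c k • y k‖ + ∑ k ∈ F, ‖c k‖ * η := by
        gcongr
        · exact θ.le_of_opNorm_le hθ _
        · refine (norm_sum_le _ _).trans (Finset.sum_le_sum fun k hk => ?_)
          rw [norm_mul]
          gcongr
          exact h k hk
    _ = L * ‖∑ k ∈ F, c k • y k‖ + η * ∑ k ∈ F, ‖c k‖ := by rw [← Finset.sum_mul, mul_comm η]

lemma re_mul_sign (z : ℂ) : (z * cond (decide (0 ≤ z.re)) 1 (-1)).re = |z.re| := by
  by_cases h : 0 ≤ z.re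
  · simp [h, abs_of_nonneg h]
  · simp [h, abs_of_neg (not_le.1 h)]

lemma im_mul_sign (z : ℂ) : (z * cond (decide (0 ≤ z.im)) 1 (-1)).im = |z.im| := by
  by_cases h : 0 ≤ z.im
  · simp [h, abs_of_nonneg h]
  · simp [h, abs_of_neg (not_le.1 h)]

lemma exists_signs_sum_norm_le {ι : Type*} (F : Finset ι) (c : ι → ℂ) :
    ∃ σ τ : ι → Bool, ∑ k ∈ F, ‖c k‖ ≤
      ‖∑ k ∈ F, c k * cond (σ k) 1 (-1)‖ + ‖∑ k ∈ F, c k * cond (τ k) 1 (-1)‖ := by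
  refine ⟨fun k => decide (0 ≤ (c k).re), fun k => decide (0 ≤ (c k).im), ?_⟩
  calc ∑ k ∈ F, ‖c k‖ ≤ ∑ k ∈ F, (|(c k).re| + |(c k).im|) :=
        Finset.sum_le_sum fun k _ => Complex.norm_le_abs_re_add_abs_im _
    _ = (∑ k ∈ F, c k * cond (decide (0 ≤ (c k).re)) 1 (-1)).re +
        (∑ k ∈ F, c k * cond (decide (0 ≤ (c k).im)) 1 (-1)).im := by
        simp only [Complex.re_sum, Complex.im_sum, re_mul_sign, im_mul_sign,
          Finset.sum_add_distrib]
    _ ≤ _ := add_le_add (Complex.re_le_norm _) (Complex.im_le_norm _)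

section WeakCauchy

variable {X : Type*} [NormedAddCommGroup X] [NormedSpace ℂ X]

theorem norm_sum_smul_ge_of_realizing {ι : Type*} {y : ι → X} {a b : ℂ} {η : ℝ}
    (hy : ∀ (F : Finset ι) (σ : ι → Bool), ∃ φ : X →L[ℂ] ℂ, ‖φ‖ ≤ 1 ∧
      ∀ k ∈ F, ‖φ (y k) - cond (σ k) a b‖ < η)
    (F : Finset ι) (c : ι → ℂ) :
    (‖a - b‖ / 4 - η) * ∑ k ∈ F, ‖c k‖ ≤ ‖∑ k ∈ F, c k • y k‖ := by
  have key : ∀ σ : ι → Bool, ‖a - b‖ * ‖∑ k ∈ F, c k * cond (σ k) 1 (-1)‖ ≤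
      2 * ‖∑ k ∈ F, c k • y k‖ + 2 * η * ∑ k ∈ F, ‖c k‖ := by
    intro σ
    obtain ⟨φ₁, hφ₁, h₁⟩ := hy F σ
    obtain ⟨φ₂, hφ₂, h₂⟩ := hy F fun k => !σ k
    have hθ : ‖φ₁ - φ₂‖ ≤ 2 := (norm_sub_le _ _).trans (by linarith)
    have happrox : ∀ k ∈ F,
        ‖(φ₁ - φ₂) (y k) - cond (σ k) 1 (-1) * (a - b)‖ ≤ 2 * η := by
      intro k hk
      have e : (φ₁ - φ₂) (y k) - cond (σ k) 1 (-1) * (a - b) =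
          (φ₁ (y k) - cond (σ k) a b) - (φ₂ (y k) - cond (!σ k) a b) := by
        cases σ k <;> simp <;> ring
      rw [e]
      linarith [norm_sub_le (φ₁ (y k) - cond (σ k) a b) (φ₂ (y k) - cond (!σ k) a b),
        h₁ k hk, h₂ k hk]
    have := norm_sum_mul_le_of_approx hθ F c y _ happrox
    simp only [← mul_assoc, ← Finset.sum_mul, norm_mul] at this
    linarith
  obtain ⟨σ, τ, hστ⟩ := exists_signs_sum_norm_le F c
  nlinarith [key σ, key τ, mul_le_mul_of_nonneg_left hστ (norm_nonneg (a - b))]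

def NearPair (x : ℕ → X) (a b : ℂ) (η : ℝ) (c : Bool) (φ : X →L[ℂ] ℂ) (n : ℕ) : Prop :=
  ‖φ (x n) - cond c a b‖ < η

lemma exists_oscillatesOn_nearPair {x : ℕ → X} {C ε : ℝ} (hC : ∀ n, ‖x n‖ ≤ C)
    (hx : ∀ m : ℕ → ℕ, StrictMono m → ∃ φ : X →L[ℂ] ℂ, ‖φ‖ ≤ 1 ∧
      ∀ n₀ : ℕ, ∃ n ≥ n₀, ∃ k ≥ n₀, ε ≤ ‖φ (x (m n)) - φ (x (m k))‖)
    {M : Set ℕ} (hM : M.Infinite) :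
    ∃ φ : X →L[ℂ] ℂ, ‖φ‖ ≤ 1 ∧ ∃ a ∈ closedBall (0 : ℂ) C, ∃ b ∈ closedBall (0 : ℂ) C,
      ε ≤ ‖a - b‖ ∧ ∀ η > 0, OscillatesOn (NearPair x a b η) φ M := by
  set e := Nat.nth (· ∈ M)
  have he : StrictMono e := Nat.nth_strictMono hM
  obtain ⟨φ, hφ, hsep⟩ := hx e he
  choose n hn k hk hnk using hsep
  have hball : ∀ p, φ (x p) ∈ closedBall (0 : ℂ) C := fun p =>
    mem_closedBall_zero_iff.2 <| (φ.le_of_opNorm_le hφ _).trans <| (one_mul _).trans_le (hC p)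
  obtain ⟨⟨a, b⟩, ⟨ha, hb⟩, g, hg, hlim⟩ :=
    ((isCompact_closedBall (0 : ℂ) C).prod (isCompact_closedBall (0 : ℂ) C)).tendsto_subseq
      (x := fun t => (φ (x (e (n t))), φ (x (e (k t))))) fun t => ⟨hball _, hball _⟩
  have htend : ∀ r : ℕ → ℕ, (∀ t, t ≤ r t) → Tendsto (fun t => e (r (g t))) atTop atTop :=
    fun r hr => tendsto_atTop_mono (fun t => (hg.id_le t).trans ((hr _).trans (he.id_le _)))
      tendsto_id
  have hmem : ∀ p, e p ∈ M := Nat.nth_mem_of_infinite hM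
  refine ⟨φ, hφ, a, ha, b, hb, ?_, fun η hη c => ?_⟩
  · exact ge_of_tendsto' ((continuous_fst.sub continuous_snd).norm.tendsto _ |>.comp hlim)
      fun t => hnk (g t)
  · cases c
    · exact infinite_sep_norm_sub_lt (htend k hk) (fun t => hmem _)
        ((continuous_snd.tendsto _).comp hlim) hη
    · exact infinite_sep_norm_sub_lt (htend n hn) (fun t => hmem _)
        ((continuous_fst.tendsto _).comp hlim) hη

lemma exists_nearPair_hereditarilyOscillating {x : ℕ → X} {C ε : ℝ} (hC : ∀ n, ‖x n‖ ≤ C)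
    (hx : ∀ m : ℕ → ℕ, StrictMono m → ∃ φ : X →L[ℂ] ℂ, ‖φ‖ ≤ 1 ∧
      ∀ n₀ : ℕ, ∃ n ≥ n₀, ∃ k ≥ n₀, ε ≤ ‖φ (x (m n)) - φ (x (m k))‖)
    {η : ℝ} (hη : 0 < η) :
    ∃ a b : ℂ, ε - η ≤ ‖a - b‖ ∧ ∃ M : Set ℕ, M.Infinite ∧
      HereditarilyOscillating (NearPair x a b η) {φ | ‖φ‖ ≤ 1} M := by
  by_contra! hcon
  obtain ⟨t, -, ht, hcover⟩ := finite_approx_of_totallyBounded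
    (isCompact_closedBall (0 : ℂ) C).totallyBounded (η / 2) (half_pos hη)
  obtain ⟨M, -, hM, hMosc⟩ := exists_infinite_forall_not_oscillatesOn
    (P := fun p : ℂ × ℂ => NearPair x p.1 p.2 η) (S := {φ | ‖φ‖ ≤ 1})
    ((ht.prod ht).sep fun p => ε - η ≤ ‖p.1 - p.2‖) infinite_univ
    fun p hp M' _ hM' => hcon p.1 p.2 hp.2 M' hM'
  obtain ⟨φ, hφ, a, ha, b, hb, hab, hosc⟩ := exists_oscillatesOn_nearPair hC hx hM
  obtain ⟨a', ha't, haa'⟩ : ∃ a' ∈ t, ‖a - a'‖ < η / 2 := by simpa [dist_eq_norm] using hcover ha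
  obtain ⟨b', hb't, hbb'⟩ : ∃ b' ∈ t, ‖b - b'‖ < η / 2 := by simpa [dist_eq_norm] using hcover hb
  refine hMosc (a', b') ⟨⟨ha't, hb't⟩, ?_⟩ φ hφ
    ((hosc (η / 2) (half_pos hη)).mono_pred fun c p hp => ?_)
  · linarith [norm_sub_le_norm_sub_add_norm_sub a a' b, norm_sub_le_norm_sub_add_norm_sub a' b' b,
      norm_sub_rev b b']
  · have hc : ‖cond c a b - cond c a' b'‖ < η / 2 := by cases c <;> assumption
    unfold NearPair at hp ⊢
    linarith [norm_sub_le_norm_sub_add_norm_sub (φ (x p)) (cond c a b) (cond c a' b')]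

end WeakCauchy

theorem quantitative_l1_general (X : Type*) [NormedAddCommGroup X] [NormedSpace ℂ X]
    (x : ℕ → X) (hx : ∃ C : ℝ, ∀ n, ‖x n‖ ≤ C)
    (ε : ℝ) (hε : 0 < ε)
    (h : ¬ ∃ m : ℕ → ℕ, StrictMono m ∧
      ∀ φ : X →L[ℂ] ℂ, ‖φ‖ ≤ 1 →
        ∃ n₀ : ℕ, ∀ n ≥ n₀, ∀ k ≥ n₀, ‖φ (x (m n)) - φ (x (m k))‖ < ε) :
    ∀ δ : ℝ, 0 < δ → ∃ m : ℕ → ℕ, StrictMono m ∧ ∃ k : ℕ, 2 ≤ k ∧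
      ∀ lam : ℕ →₀ ℂ, (∀ n ∈ lam.support, k ≤ n) →
        ‖∑ n ∈ lam.support, lam n • x (m n)‖ ≥
          (ε * Real.sqrt 2 / 8 - δ) * ∑ n ∈ lam.support, ‖lam n‖ := by
  intro δ hδ
  push Not at h
  obtain ⟨C, hC⟩ := hx
  obtain ⟨a, b, hab, M, hM, hosc⟩ :=
    exists_nearPair_hereditarilyOscillating hC h (η := 4 * δ / 5) (by positivity)
  obtain ⟨m, hm, hreal⟩ := exists_strictMono_realizing hM hosc
  refine ⟨m, hm, 2, le_rfl, fun lam _ => ?_⟩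
  have hsqrt : ε * Real.sqrt 2 ≤ ε * 2 :=
    mul_le_mul_of_nonneg_left (Real.sqrt_le_iff.2 ⟨by norm_num, by norm_num⟩) hε.le
  calc (ε * Real.sqrt 2 / 8 - δ) * ∑ n ∈ lam.support, ‖lam n‖
      ≤ (‖a - b‖ / 4 - 4 * δ / 5) * ∑ n ∈ lam.support, ‖lam n‖ := by
        gcongr ?_ * _
        linarith
    _ ≤ ‖∑ n ∈ lam.support, lam n • x (m n)‖ :=
        norm_sum_smul_ge_of_realizing hreal _ _

/-- Quantitative version (Behrends): if a bounded sequence (x_n) in a complex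
Banach space has no ε-weak Cauchy subsequence, then for every δ > 0 there are a
subsequence (x_{m_n}) and k ≥ 2 such that (x_{m_n})_{n≥k} dominates the ℓ¹-basis
with constant ε√2/8 − δ. -/
theorem quantitative_l1 (X : Type*) [NormedAddCommGroup X] [NormedSpace ℂ X]
    [CompleteSpace X] (x : ℕ → X) (hx : ∃ C : ℝ, ∀ n, ‖x n‖ ≤ C)
    (ε : ℝ) (hε : 0 < ε)
    (h : ¬ ∃ m : ℕ → ℕ, StrictMono m ∧
      ∀ φ : X →L[ℂ] ℂ, ‖φ‖ ≤ 1 →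
        ∃ n₀ : ℕ, ∀ n ≥ n₀, ∀ k ≥ n₀, ‖φ (x (m n)) - φ (x (m k))‖ < ε) :
    ∀ δ : ℝ, 0 < δ → ∃ m : ℕ → ℕ, StrictMono m ∧ ∃ k : ℕ, 2 ≤ k ∧
      ∀ lam : ℕ →₀ ℂ, (∀ n ∈ lam.support, k ≤ n) →
        ‖∑ n ∈ lam.support, lam n • x (m n)‖ ≥
          (ε * Real.sqrt 2 / 8 - δ) * ∑ n ∈ lam.support, ‖lam n‖ :=
  quantitative_l1_general X x hx ε hε h
end
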